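/- arXiv:1703.03178 — 11 statements merged into one kernel-verified Lean document; each statement's English description precedes it below -/
import Mathlib

section
/- Let n ≥ 5 be an odd integer and m = (2^n+1)/3. If i·(2^n+1) + 2·j·m + 8·k = i'·(2^n+1) + 2·j'·m + 8·k' with i, i' ∈ {0,1}, j, j' ∈ {0,1,2,3}, and k, k' ∈ ℕ, then i = i', j = j', and k = k'. (In other words, every element of the Weierstrass semigroup H(P_∞) of GGS(2,n) is uniquely determined by the triple (i,j,k).) -/
/-- Every element of the Weierstrass semigroup `H(P_∞)` of `GGS(2,n)` is uniquely
determined by its triple `(i,j,k)`. -/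
theorem stmt_0 (n m : ℕ) (hn : 5 ≤ n) (hodd : Odd n) (hm : 3 * m = 2 ^ n + 1)
    (i j k i' j' k' : ℕ) (hi : i ≤ 1) (hj : j ≤ 3) (hi' : i' ≤ 1) (hj' : j' ≤ 3)
    (heq : i * (2 ^ n + 1) + 2 * j * m + 8 * k
      = i' * (2 ^ n + 1) + 2 * j' * m + 8 * k') :
    i = i' ∧ j = j' ∧ k = k' := by
  obtain ⟨t, ht⟩ : (8 : ℕ) ∣ 2 ^ n := by
    have : (2 : ℕ) ^ 3 ∣ 2 ^ n := pow_dvd_pow 2 (by omega)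
    simpa using this
  rw [ht] at hm heq
  interval_cases i <;> interval_cases i' <;> interval_cases j <;> interval_cases j' <;> omega
end

section
/- Let n ≥ 5 be odd, m = (2^n+1)/3, and let j ∈ {0,1,2,3}, k ∈ ℕ. Set x = (2^n+1) + 2·j·m + 8·k. Then the number ν(x) of ordered pairs (a,b) ∈ H × H with a + b = x equals 2(j+1)(k+1) if k < m, and equals 2(j+1)(k+1) + 2(3−j)(k−m+1) if k ≥ m. -/
namespace GGSAux

/-- The set of "t-values": `i*3 + 2*j` for `i ≤ 1`, `j ≤ 3`. -/
def Tfin : Finset ℕ := {0, 2, 3, 4, 5, 6, 7, 9}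

def Pairs (s : ℕ) : Finset (ℕ × ℕ) :=
  (Tfin ×ˢ Tfin).filter (fun p => p.1 + p.2 = s)

def inT (m a : ℕ) : Prop := ∃ t ∈ Tfin, ∃ c, a = t * m + 8 * c

lemma memH_iff (n m : ℕ) (hm : 3 * m = 2 ^ n + 1) (a : ℕ) :
    (∃ i ≤ 1, ∃ j ≤ 3, ∃ c : ℕ, a = i * (2 ^ n + 1) + 2 * j * m + 8 * c) ↔ inT m a := by
  constructor
  · rintro ⟨i, hi, j, hj, c, rfl⟩
    refine ⟨3 * i + 2 * j, ?_, c, by rw [← hm]; ring⟩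
    interval_cases i <;> interval_cases j <;> decide
  · rintro ⟨t, ht, c, rfl⟩
    fin_cases ht
    · exact ⟨0, by norm_num, 0, by norm_num, c, by omega⟩
    · exact ⟨0, by norm_num, 1, by norm_num, c, by omega⟩
    · exact ⟨1, by norm_num, 0, by norm_num, c, by omega⟩
    · exact ⟨0, by norm_num, 2, by norm_num, c, by omega⟩
    · exact ⟨1, by norm_num, 1, by norm_num, c, by omega⟩
    · exact ⟨0, by norm_num, 3, by norm_num, c, by omega⟩
    · exact ⟨1, by norm_num, 2, by norm_num, c, by omega⟩
    · exact ⟨1, by norm_num, 3, by norm_num, c, by omega⟩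

def gmap (m x : ℕ) (q : (ℕ × ℕ) × ℕ) : ℕ × ℕ :=
  (q.1.1 * m + 8 * q.2, x - (q.1.1 * m + 8 * q.2))

def Dom (m s k : ℕ) : Finset ((ℕ × ℕ) × ℕ) :=
  Pairs s ×ˢ Finset.range (k + 1) ∪
    Pairs (s + 8) ×ˢ Finset.range (if m ≤ k then k - m + 1 else 0)

lemma T_bound : ∀ t ∈ Tfin, t ≤ 9 := by decide

lemma T_mod8 : ∀ t ∈ Tfin, ∀ t' ∈ Tfin, 3 * t % 8 = 3 * t' % 8 → t = t' := by decide

lemma T_sum_ne_one : ∀ t ∈ Tfin, ∀ t' ∈ Tfin, t + t' ≠ 1 := by decide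

lemma mul_mod8 (m : ℕ) (hm8 : m % 8 = 3) (t : ℕ) : t * m % 8 = 3 * t % 8 := by
  conv_lhs => rw [Nat.mul_mod, hm8]
  omega

lemma mem_Dom (m s k : ℕ) (q : (ℕ × ℕ) × ℕ) :
    q ∈ Dom m s k ↔
      (q.1.1 ∈ Tfin ∧ q.1.2 ∈ Tfin ∧
        ((q.1.1 + q.1.2 = s ∧ q.2 < k + 1) ∨
         (q.1.1 + q.1.2 = s + 8 ∧ q.2 < (if m ≤ k then k - m + 1 else 0)))) := by
  simp only [Dom, Pairs, Finset.mem_union, Finset.mem_product, Finset.mem_filter,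
    Finset.mem_range]
  tauto

lemma setEq (m s k : ℕ) (hm8 : m % 8 = 3) (hs3 : 3 ≤ s) (hs9 : s ≤ 9) (hs2 : s % 2 = 1) :
    {p : ℕ × ℕ | inT m p.1 ∧ inT m p.2 ∧ p.1 + p.2 = s * m + 8 * k}
      = ↑((Dom m s k).image (gmap m (s * m + 8 * k))) := by
  ext ⟨p1, p2⟩
  simp only [Set.mem_setOf_eq, Finset.coe_image, Set.mem_image, Finset.mem_coe]
  constructor
  · rintro ⟨⟨t1, ht1, c1, hp1⟩, ⟨t2, ht2, c2, hp2⟩, hsum⟩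
    have hb1 : t1 ≤ 9 := T_bound t1 ht1
    have hb2 : t2 ≤ 9 := T_bound t2 ht2
    rw [hp1, hp2] at hsum
    have e1 : t1 * m % 8 = 3 * t1 % 8 := mul_mod8 m hm8 t1
    have e2 : t2 * m % 8 = 3 * t2 % 8 := mul_mod8 m hm8 t2
    have e3 : s * m % 8 = 3 * s % 8 := mul_mod8 m hm8 s
    have hmod : (t1 + t2) % 8 = s % 8 := by omega
    have hcase : t1 + t2 = s ∨ t1 + t2 = s + 8 ∨ t1 + t2 = 1 := by omega
    rcases hcase with hc | hc | hc
    · have hA : t1 * m + t2 * m = s * m := by rw [← hc, add_mul]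
      refine ⟨((t1, t2), c1), ?_, ?_⟩
      · rw [mem_Dom]
        exact ⟨ht1, ht2, Or.inl ⟨hc, by omega⟩⟩
      · simp only [gmap, Prod.mk.injEq]
        omega
    · have hA : t1 * m + t2 * m = s * m + 8 * m := by
        have h' : (t1 + t2) * m = (s + 8) * m := by rw [hc]
        rw [add_mul, add_mul] at h'
        omega
      have hk : m ≤ k := by omega
      refine ⟨((t1, t2), c1), ?_, ?_⟩
      · rw [mem_Dom]
        refine ⟨ht1, ht2, Or.inr ⟨hc, ?_⟩⟩
        rw [if_pos hk]
        omega
      · simp only [gmap, Prod.mk.injEq]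
        omega
    · exact absurd hc (T_sum_ne_one t1 ht1 t2 ht2)
  · rintro ⟨⟨⟨t1, t2⟩, c⟩, hq, heq⟩
    rw [mem_Dom] at hq
    obtain ⟨ht1, ht2, hcase⟩ := hq
    simp only [gmap, Prod.mk.injEq] at heq
    obtain ⟨h1, h2⟩ := heq
    subst h1
    subst h2
    rcases hcase with ⟨hc, hck⟩ | ⟨hc, hck⟩
    · have hA : t1 * m + t2 * m = s * m := by rw [← hc, add_mul]
      refine ⟨⟨t1, ht1, c, rfl⟩, ⟨t2, ht2, k - c, by omega⟩, by omega⟩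
    · have hk : m ≤ k := by by_contra h; rw [if_neg h] at hck; omega
      rw [if_pos hk] at hck
      have hA : t1 * m + t2 * m = s * m + 8 * m := by
        have : (t1 + t2) * m = (s + 8) * m := by rw [hc]
        rw [add_mul, add_mul] at this
        omega
      refine ⟨⟨t1, ht1, c, rfl⟩, ⟨t2, ht2, k - m - c, by omega⟩, by omega⟩

lemma injOn (m s k : ℕ) (hm8 : m % 8 = 3) :
    Set.InjOn (gmap m (s * m + 8 * k)) ↑(Dom m s k) := by
  rintro ⟨⟨t1, t2⟩, c⟩ hq ⟨⟨t1', t2'⟩, c'⟩ hq' heq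
  simp only [Finset.mem_coe, mem_Dom] at hq hq'
  obtain ⟨ht1, ht2, hcase⟩ := hq
  obtain ⟨ht1', ht2', hcase'⟩ := hq'
  simp only [gmap, Prod.mk.injEq] at heq
  have hfst : t1 * m + 8 * c = t1' * m + 8 * c' := heq.1
  have e1 : t1 * m % 8 = 3 * t1 % 8 := mul_mod8 m hm8 t1
  have e1' : t1' * m % 8 = 3 * t1' % 8 := mul_mod8 m hm8 t1'
  have ht : t1 = t1' := T_mod8 t1 ht1 t1' ht1' (by omega)
  subst ht
  have hc : c = c' := by omega
  subst hc
  have hsum : t1 + t2 = s ∨ t1 + t2 = s + 8 := by tauto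
  have hsum' : t1 + t2' = s ∨ t1 + t2' = s + 8 := by tauto
  have ht2e : t2 = t2' := T_mod8 t2 ht2 t2' ht2' (by omega)
  rw [ht2e]

lemma Dom_card (m s k : ℕ) :
    (Dom m s k).card
      = (Pairs s).card * (k + 1)
        + (Pairs (s + 8)).card * (if m ≤ k then k - m + 1 else 0) := by
  rw [Dom, Finset.card_union_of_disjoint, Finset.card_product, Finset.card_product,
    Finset.card_range, Finset.card_range]
  rw [Finset.disjoint_left]
  rintro ⟨⟨t1, t2⟩, c⟩ h h'
  simp only [Pairs, Finset.mem_product, Finset.mem_filter] at h h'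
  omega

lemma count (m s k : ℕ) (hm8 : m % 8 = 3) (hs3 : 3 ≤ s) (hs9 : s ≤ 9) (hs2 : s % 2 = 1) :
    {p : ℕ × ℕ | inT m p.1 ∧ inT m p.2 ∧ p.1 + p.2 = s * m + 8 * k}.ncard
      = (Pairs s).card * (k + 1)
        + (Pairs (s + 8)).card * (if m ≤ k then k - m + 1 else 0) := by
  rw [setEq m s k hm8 hs3 hs9 hs2, Set.ncard_coe_finset,
    Finset.card_image_of_injOn (injOn m s k hm8), Dom_card]

end GGSAux

open GGSAux in
/-- The Feng–Rao function at an element `(1,j,k)` of the Weierstrass semigroup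
`H(P_∞)` of `GGS(2,n)`. -/
theorem stmt_1 (n m : ℕ) (hn : 5 ≤ n) (hodd : Odd n) (hm : 3 * m = 2 ^ n + 1)
    (H : Set ℕ)
    (hH : H = {x | ∃ i ≤ 1, ∃ j ≤ 3, ∃ k : ℕ, x = i * (2 ^ n + 1) + 2 * j * m + 8 * k})
    (ν : ℕ → ℕ)
    (hν : ∀ x, ν x = {p : ℕ × ℕ | p.1 ∈ H ∧ p.2 ∈ H ∧ p.1 + p.2 = x}.ncard)
    (j k : ℕ) (hj : j ≤ 3) :
    (k < m → ν ((2 ^ n + 1) + 2 * j * m + 8 * k) = 2 * (j + 1) * (k + 1)) ∧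
    (m ≤ k → ν ((2 ^ n + 1) + 2 * j * m + 8 * k)
      = 2 * (j + 1) * (k + 1) + 2 * (3 - j) * (k - m + 1)) := by
  have h2n : 2 ^ n = 32 * 2 ^ (n - 5) := by
    have h5 : 5 + (n - 5) = n := by omega
    rw [← h5, pow_add]
    norm_num
  have hm8 : m % 8 = 3 := by omega
  have hx : (2 ^ n + 1) + 2 * j * m + 8 * k = (2 * j + 3) * m + 8 * k := by
    rw [← hm]; ring
  have hmemH : ∀ a, a ∈ H ↔ inT m a := by
    intro a
    rw [hH]
    exact memH_iff n m hm a
  have hset : {p : ℕ × ℕ | p.1 ∈ H ∧ p.2 ∈ H ∧ p.1 + p.2 = (2 ^ n + 1) + 2 * j * m + 8 * k}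
      = {p : ℕ × ℕ | inT m p.1 ∧ inT m p.2 ∧ p.1 + p.2 = (2 * j + 3) * m + 8 * k} := by
    ext p
    simp only [Set.mem_setOf_eq, hmemH, hx]
  have hcount := count m (2 * j + 3) k hm8 (by omega) (by omega) (by omega)
  have hc1 : (Pairs (2 * j + 3)).card = 2 * (j + 1) := by
    interval_cases j <;> decide
  have hc2 : (Pairs (2 * j + 3 + 8)).card = 2 * (3 - j) := by
    interval_cases j <;> decide
  rw [hν, hset, hcount, hc1, hc2]
  constructor
  · intro hk
    rw [if_neg (by omega)]
    ring
  · intro hk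
    rw [if_pos hk]
end

section
/- Let n ≥ 5 be odd, m = (2^n+1)/3, and let j ∈ {0,1,2,3}, k ∈ ℕ. Set x = 2·j·m + 8·k. Then the number ν(x) of ordered pairs (a,b) ∈ H × H with a + b = x equals: (j+1)(k+1) + ⌊j/3⌋(k+1) if k < m; (j+1)(k+1) + ⌊j/3⌋(k+1) + (5 − 2·max{0, j−2})(k−m+1) if m ≤ k < 2m; and (j+1)(k+1) + ⌊j/3⌋(k+1) + (5 − 2·max{0, j−2})(k−m+1) + max{0, 2−j}(k−2m+1) if k ≥ 2m. -/
open Finset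

def CC : Finset ℕ := {0,2,3,4,5,6,7,9}

lemma CC_le : ∀ c ∈ CC, c ≤ 9 := by decide

lemma sumCC (g : ℕ → ℕ) : ∑ c ∈ CC, g c
    = g 0 + g 2 + g 3 + g 4 + g 5 + g 6 + g 7 + g 9 := by
  show ∑ c ∈ ({0,2,3,4,5,6,7,9} : Finset ℕ), g c = _
  rw [Finset.sum_insert (by decide), Finset.sum_insert (by decide),
      Finset.sum_insert (by decide), Finset.sum_insert (by decide),
      Finset.sum_insert (by decide), Finset.sum_insert (by decide),
      Finset.sum_insert (by decide), Finset.sum_singleton]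
  ring

lemma uniqCC {m : ℕ} (hm8 : m % 8 = 3) {c1 c2 k1 k2 : ℕ}
    (h1 : c1 ∈ CC) (h2 : c2 ∈ CC) (h : c1*m + 8*k1 = c2*m + 8*k2) :
    c1 = c2 ∧ k1 = k2 := by
  fin_cases h1 <;> fin_cases h2 <;> omega

open Classical in
lemma cnt (m k j c1 c2 : ℕ) (hm8 : m % 8 = 3) (hj : j ≤ 3) (h1 : c1 ≤ 9) (h2 : c2 ≤ 9) :
    ((Finset.range (k+1)).filter fun k1 => ∃ k2, c1*m + 8*k1 + (c2*m + 8*k2) = 2*j*m + 8*k).card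
    = (if c1 + c2 = 2*j then k+1 else 0)
      + (if c1 + c2 = 2*j + 8 ∧ m ≤ k then k - m + 1 else 0)
      + (if c1 + c2 = 2*j + 16 ∧ 2*m ≤ k then k - 2*m + 1 else 0) := by
  have hs : c1*m + c2*m = (c1+c2)*m := (add_mul c1 c2 m).symm
  by_cases hA : c1 + c2 = 2*j
  · have hAm : c1*m + c2*m = 2*j*m := by rw [hs, hA]
    rw [Finset.filter_true_of_mem, Finset.card_range]
    · simp only [hA]
      norm_num
    · intro k1 hk1
      simp only [Finset.mem_range] at hk1
      exact ⟨k - k1, by omega⟩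
  · by_cases hB : c1 + c2 = 2*j + 8
    · have hBm : c1*m + c2*m = 2*j*m + 8*m := by rw [hs, hB]; ring
      by_cases hk : m ≤ k
      · have e : ((Finset.range (k+1)).filter fun k1 => ∃ k2, c1*m + 8*k1 + (c2*m + 8*k2) = 2*j*m + 8*k) = Finset.range (k - m + 1) := by
          ext k1
          simp only [Finset.mem_filter, Finset.mem_range]
          constructor
          · rintro ⟨hk1, k2, he⟩; omega
          · intro hk1; exact ⟨by omega, ⟨k - m - k1, by omega⟩⟩
        rw [e, Finset.card_range]
        simp [hA, hB, hk]
      · have e : ((Finset.range (k+1)).filter fun k1 => ∃ k2, c1*m + 8*k1 + (c2*m + 8*k2) = 2*j*m + 8*k) = ∅ := by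
          ext k1
          simp only [Finset.mem_filter, Finset.mem_range, Finset.notMem_empty, iff_false, not_and]
          rintro hk1 ⟨k2, he⟩; omega
        rw [e]; simp [hA, hB, hk]
    · by_cases hC : c1 + c2 = 2*j + 16
      · have hCm : c1*m + c2*m = 2*j*m + 16*m := by rw [hs, hC]; ring
        by_cases hk : 2*m ≤ k
        · have e : ((Finset.range (k+1)).filter fun k1 => ∃ k2, c1*m + 8*k1 + (c2*m + 8*k2) = 2*j*m + 8*k) = Finset.range (k - 2*m + 1) := by
            ext k1
            simp only [Finset.mem_filter, Finset.mem_range]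
            constructor
            · rintro ⟨hk1, k2, he⟩; omega
            · intro hk1; exact ⟨by omega, ⟨k - 2*m - k1, by omega⟩⟩
          rw [e, Finset.card_range]
          simp [hA, hB, hC, hk]
        · have e : ((Finset.range (k+1)).filter fun k1 => ∃ k2, c1*m + 8*k1 + (c2*m + 8*k2) = 2*j*m + 8*k) = ∅ := by
            ext k1
            simp only [Finset.mem_filter, Finset.mem_range, Finset.notMem_empty, iff_false, not_and]
            rintro hk1 ⟨k2, he⟩; omega
          rw [e]; simp [hA, hB, hC, hk]
      · have e : ((Finset.range (k+1)).filter fun k1 => ∃ k2, c1*m + 8*k1 + (c2*m + 8*k2) = 2*j*m + 8*k) = ∅ := by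
          ext k1
          simp only [Finset.mem_filter, Finset.mem_range, Finset.notMem_empty, iff_false, not_and]
          rintro hk1 ⟨k2, he⟩
          have e1 : ((c1+c2)*m) % 8 = (2*j*m) % 8 := by omega
          rw [Nat.mul_mod, Nat.mul_mod (2*j) m, hm8] at e1
          omega
        rw [e]; simp [hA, hB, hC]

set_option maxRecDepth 100000 in
open Classical in
lemma key (n m : ℕ) (hm : 3 * m = 2 ^ n + 1) (hm8 : m % 8 = 3)
    (H : Set ℕ)
    (hH : H = {x | ∃ i ≤ 1, ∃ j ≤ 3, ∃ k : ℕ, x = i * (2 ^ n + 1) + 2 * j * m + 8 * k})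
    (ν : ℕ → ℕ)
    (hν : ∀ x, ν x = {p : ℕ × ℕ | p.1 ∈ H ∧ p.2 ∈ H ∧ p.1 + p.2 = x}.ncard)
    (j k : ℕ) (hj : j ≤ 3) :
    ν (2*j*m + 8*k) = ∑ p ∈ CC ×ˢ CC,
      ((Finset.range (k+1)).filter fun k1 => ∃ k2, p.1*m + 8*k1 + (p.2*m + 8*k2) = 2*j*m + 8*k).card := by
  have hmem : ∀ x, x ∈ H ↔ ∃ c ∈ CC, ∃ t, x = c*m + 8*t := by
    subst hH
    intro x
    simp only [Set.mem_setOf_eq]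
    constructor
    · rintro ⟨i, hi, j', hj', t, rfl⟩
      refine ⟨3*i + 2*j', ?_, t, by rw [← hm]; ring⟩
      interval_cases i <;> interval_cases j' <;> decide
    · rintro ⟨c, hc, t, rfl⟩
      fin_cases hc
      · exact ⟨0, by norm_num, 0, by norm_num, t, by rw [← hm]; ring⟩
      · exact ⟨0, by norm_num, 1, by norm_num, t, by rw [← hm]; ring⟩
      · exact ⟨1, by norm_num, 0, by norm_num, t, by rw [← hm]; ring⟩
      · exact ⟨0, by norm_num, 2, by norm_num, t, by rw [← hm]; ring⟩
      · exact ⟨1, by norm_num, 1, by norm_num, t, by rw [← hm]; ring⟩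
      · exact ⟨0, by norm_num, 3, by norm_num, t, by rw [← hm]; ring⟩
      · exact ⟨1, by norm_num, 2, by norm_num, t, by rw [← hm]; ring⟩
      · exact ⟨1, by norm_num, 3, by norm_num, t, by rw [← hm]; ring⟩
  set G : Finset ((_ : ℕ × ℕ) × ℕ) :=
    (CC ×ˢ CC).sigma fun p => (Finset.range (k+1)).filter
      fun k1 => ∃ k2, p.1*m + 8*k1 + (p.2*m + 8*k2) = 2*j*m + 8*k with hG
  set f : ((_ : ℕ × ℕ) × ℕ) → ℕ × ℕ :=
    fun q => (q.1.1*m + 8*q.2, 2*j*m + 8*k - (q.1.1*m + 8*q.2)) with hf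
  have hset : {p : ℕ × ℕ | p.1 ∈ H ∧ p.2 ∈ H ∧ p.1 + p.2 = 2*j*m + 8*k} = ↑(G.image f) := by
    ext p
    simp only [Set.mem_setOf_eq, Finset.coe_image, Set.mem_image, Finset.mem_coe]
    constructor
    · rintro ⟨ha, hb, hab⟩
      rw [hmem] at ha hb
      obtain ⟨c1, hc1, k1, ha1⟩ := ha
      obtain ⟨c2, hc2, k2, hb1⟩ := hb
      have hb1' : c1*m + 8*k1 + (c2*m + 8*k2) = 2*j*m + 8*k := by
        rw [← ha1, ← hb1]; exact hab
      have hbc1 := CC_le c1 hc1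
      have hbc2 := CC_le c2 hc2
      have hs : c1*m + c2*m = (c1+c2)*m := (add_mul c1 c2 m).symm
      have e1 : ((c1+c2)*m) % 8 = (2*j*m) % 8 := by omega
      rw [Nat.mul_mod, Nat.mul_mod (2*j) m, hm8] at e1
      have htri : c1 + c2 = 2*j ∨ c1 + c2 = 2*j + 8 ∨ c1 + c2 = 2*j + 16 := by omega
      have hk1 : k1 ≤ k := by
        rcases htri with h | h | h
        · have : c1*m + c2*m = 2*j*m := by rw [hs, h]
          omega
        · have : c1*m + c2*m = 2*j*m + 8*m := by rw [hs, h]; ring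
          omega
        · have : c1*m + c2*m = 2*j*m + 16*m := by rw [hs, h]; ring
          omega
      refine ⟨⟨(c1, c2), k1⟩, ?_, ?_⟩
      · simp only [hG, Finset.mem_sigma, Finset.mem_product, Finset.mem_filter,
          Finset.mem_range]
        exact ⟨⟨hc1, hc2⟩, by omega, ⟨k2, hb1'⟩⟩
      · rw [show p = (p.1, p.2) from rfl]
        simp only [hf, Prod.mk.injEq]
        exact ⟨by omega, by omega⟩
    · rintro ⟨⟨⟨c1, c2⟩, k1⟩, hq, rfl⟩
      simp only [hG, Finset.mem_sigma, Finset.mem_product, Finset.mem_filter,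
        Finset.mem_range] at hq
      obtain ⟨⟨hc1, hc2⟩, hk1, k2, he⟩ := hq
      refine ⟨(hmem _).2 ⟨c1, hc1, k1, rfl⟩, ?_, by simp only [hf]; omega⟩
      have e2 : 2*j*m + 8*k - (c1*m + 8*k1) = c2*m + 8*k2 := by omega
      simp only [hf]
      rw [e2]
      exact (hmem _).2 ⟨c2, hc2, k2, rfl⟩
  rw [hν, hset, Set.ncard_coe_finset, Finset.card_image_of_injOn, hG, Finset.card_sigma]
  intro q1 h1 q2 h2 hfe
  obtain ⟨⟨c1, c2⟩, k1⟩ := q1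
  obtain ⟨⟨d1, d2⟩, l1⟩ := q2
  simp only [hG, Finset.mem_coe, Finset.mem_sigma, Finset.mem_product, Finset.mem_filter,
    Finset.mem_range] at h1 h2
  obtain ⟨⟨hc1, hc2⟩, hk1, k2, he1⟩ := h1
  obtain ⟨⟨hd1, hd2⟩, hl1, l2, he2⟩ := h2
  simp only [hf, Prod.mk.injEq] at hfe
  obtain ⟨hfa, hfb⟩ := hfe
  obtain ⟨rfl, rfl⟩ := uniqCC hm8 hc1 hd1 hfa
  obtain ⟨rfl, rfl⟩ := uniqCC hm8 hc2 hd2 (show c2*m + 8*k2 = d2*m + 8*l2 by omega)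
  rfl

set_option maxRecDepth 100000 in
/-- The Feng–Rao function at an element `(0,j,k)` of the Weierstrass semigroup
`H(P_∞)` of `GGS(2,n)`. -/
theorem stmt_2 (n m : ℕ) (hn : 5 ≤ n) (hodd : Odd n) (hm : 3 * m = 2 ^ n + 1)
    (H : Set ℕ)
    (hH : H = {x | ∃ i ≤ 1, ∃ j ≤ 3, ∃ k : ℕ, x = i * (2 ^ n + 1) + 2 * j * m + 8 * k})
    (ν : ℕ → ℕ)
    (hν : ∀ x, ν x = {p : ℕ × ℕ | p.1 ∈ H ∧ p.2 ∈ H ∧ p.1 + p.2 = x}.ncard)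
    (j k : ℕ) (hj : j ≤ 3) :
    (k < m → ν (2 * j * m + 8 * k) = (j + 1) * (k + 1) + (j / 3) * (k + 1)) ∧
    (m ≤ k ∧ k < 2 * m → ν (2 * j * m + 8 * k)
      = (j + 1) * (k + 1) + (j / 3) * (k + 1) + (5 - 2 * (j - 2)) * (k - m + 1)) ∧
    (2 * m ≤ k → ν (2 * j * m + 8 * k)
      = (j + 1) * (k + 1) + (j / 3) * (k + 1) + (5 - 2 * (j - 2)) * (k - m + 1)
        + (2 - j) * (k - 2 * m + 1)) := by
  have hm8 : m % 8 = 3 := by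
    obtain ⟨e, he⟩ : ∃ e, n = 2*e + 5 := by
      obtain ⟨t, ht⟩ := hodd
      exact ⟨t - 2, by omega⟩
    have h4 : 4^e % 3 = 1 := by
      rw [Nat.pow_mod]
      norm_num
    have h2n : 2^n = 4^e * 32 := by
      rw [he, pow_add, pow_mul]
      norm_num
    omega
  have hsum : ν (2*j*m + 8*k) = ∑ c1 ∈ CC, ∑ c2 ∈ CC,
      ((if c1 + c2 = 2*j then k+1 else 0)
      + (if c1 + c2 = 2*j + 8 ∧ m ≤ k then k - m + 1 else 0)
      + (if c1 + c2 = 2*j + 16 ∧ 2*m ≤ k then k - 2*m + 1 else 0)) := by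
    rw [key n m hm hm8 H hH ν hν j k hj, Finset.sum_product]
    refine Finset.sum_congr rfl fun c1 hc1 => Finset.sum_congr rfl fun c2 hc2 => ?_
    exact cnt m k j c1 c2 hm8 hj (CC_le _ hc1) (CC_le _ hc2)
  have hm1 : 1 ≤ m := by omega
  refine ⟨?_, ?_, ?_⟩
  · intro hk
    have h1 : ¬ m ≤ k := by omega
    have h2 : ¬ 2*m ≤ k := by omega
    rw [hsum]
    simp only [sumCC]
    interval_cases j <;> norm_num [h1, h2] <;> omega
  · rintro ⟨hk1, hk2⟩
    have h1 : m ≤ k := hk1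
    have h2 : ¬ 2*m ≤ k := by omega
    rw [hsum]
    simp only [sumCC]
    interval_cases j <;> norm_num [h1, h2] <;> omega
  · intro hk
    have h1 : m ≤ k := by omega
    have h2 : 2*m ≤ k := hk
    rw [hsum]
    simp only [sumCC]
    interval_cases j <;> norm_num [h1, h2] <;> omega
end

section
/- Let n ≥ 5 be odd, m = (2^n+1)/3, and let k ∈ ℕ with k < m. Set x = 3m + 8k (the element (1,0,k) of H). Then D(x) = min{ ν(y) : y ∈ H, y ≥ x } equals: 2 if k = 0; 3 if 1 ≤ k ≤ ⌊m/8⌋; 4 if m/8 < k ≤ ⌊m/4⌋; 5 if m/4 < k ≤ ⌊3m/8⌋; 6 if 3m/8 < k ≤ ⌊m/2⌋; 8 if m/2 < k ≤ ⌊3m/4⌋; 8(⌈k − 3m/4⌉ + 1) if 3m/4 < k ≤ m−2; and 2m if k = m−1. -/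
/-!
Because `m` is odd, the residue of `c m` modulo `8` determines `c` in
`C = {0, 2, 3, 4, 5, 6, 7, 9}`, so every element of `H` is `c m + 8 t` for a unique `c ∈ C` and `t`.
For `t < m`, two such elements can add up to `c m + 8 t` only if their coefficients add up to `c`
(a carry of `8` would cost `8 m > 8 t`), hence `ν (c m + 8 t) = N_c (t + 1)`, where `N_c` counts the
ordered decompositions `c = c₁ + c₂` in `C`; for larger `t` this is still a lower bound, and for
`c = 0` the decompositions `8 = c₁ + c₂` contribute as well. `D (3 m + 8 k)` is then attained at an
explicit `y`, and linear arithmetic checks the lower bounds in each of the eight classes `c`.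
-/

open Finset

namespace GGS

def coeffs : Finset ℕ := {0, 2, 3, 4, 5, 6, 7, 9}

def semigroup (m : ℕ) : Set ℕ := {x | ∃ c ∈ coeffs, ∃ t, x = c * m + 8 * t}

def sumPairs (H : Set ℕ) (x : ℕ) : Set (ℕ × ℕ) := {p | p.1 ∈ H ∧ p.2 ∈ H ∧ p.1 + p.2 = x}

noncomputable def repCount (H : Set ℕ) (x : ℕ) : ℕ := (sumPairs H x).ncard

def coeffPairs (s : ℕ) : Finset (ℕ × ℕ) := (coeffs ×ˢ coeffs).filter fun p => p.1 + p.2 = s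

theorem mem_coeffs_iff {c : ℕ} : c ∈ coeffs ↔ ∃ i ≤ 1, ∃ j ≤ 3, c = 3 * i + 2 * j := by
  constructor
  · intro hc
    fin_cases hc <;> decide
  · rintro ⟨i, hi, j, hj, rfl⟩
    interval_cases i <;> interval_cases j <;> decide

theorem setOf_eq_semigroup {n m : ℕ} (hm : 3 * m = 2 ^ n + 1) :
    {x | ∃ i ≤ 1, ∃ j ≤ 3, ∃ k : ℕ, x = i * (2 ^ n + 1) + 2 * j * m + 8 * k} = semigroup m := by
  ext x
  simp only [semigroup, Set.mem_ofPred_eq, mem_coeffs_iff, ← hm]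
  constructor
  · rintro ⟨i, hi, j, hj, t, rfl⟩
    exact ⟨_, ⟨i, hi, j, hj, rfl⟩, t, by ring⟩
  · rintro ⟨_, ⟨i, hi, j, hj, rfl⟩, t, rfl⟩
    exact ⟨i, hi, j, hj, t, by ring⟩

theorem card_coeffPairs :
    #(coeffPairs 0) = 1 ∧ #(coeffPairs 2) = 2 ∧ #(coeffPairs 3) = 2 ∧ #(coeffPairs 4) = 3 ∧
      #(coeffPairs 5) = 4 ∧ #(coeffPairs 6) = 5 ∧ #(coeffPairs 7) = 6 ∧ #(coeffPairs 8) = 5 ∧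
      #(coeffPairs 9) = 8 := by
  decide

section Representation

variable {m : ℕ}

theorem modEq_of_mul_add_eight_mul_eq (hm : Odd m) {a b s t : ℕ}
    (h : a * m + 8 * s = b * m + 8 * t) : a ≡ b [MOD 8] := by
  refine Nat.ModEq.cancel_right_of_coprime ?_ (show a * m % 8 = b * m % 8 by omega)
  simpa using (Nat.coprime_two_left.2 hm).pow_left 3

theorem eq_of_mul_add_eight_mul_eq (hm : Odd m) {a b s t : ℕ} (ha : a ∈ coeffs) (hb : b ∈ coeffs)
    (h : a * m + 8 * s = b * m + 8 * t) : a = b ∧ s = t := by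
  have hmod : ∀ a ∈ coeffs, ∀ b ∈ coeffs, a % 8 = b % 8 → a = b := by decide
  obtain rfl := hmod a ha b hb (modEq_of_mul_add_eight_mul_eq hm h)
  exact ⟨rfl, by omega⟩

theorem add_eq_of_mul_add_eight_mul_eq (hm : Odd m) {a b c s t T : ℕ} (ha : a ∈ coeffs)
    (hb : b ∈ coeffs) (hc : c ∈ coeffs) (hT : T < m)
    (h : a * m + 8 * s + (b * m + 8 * t) = c * m + 8 * T) : a + b = c ∧ s + t = T := by
  have hmod : ∀ a ∈ coeffs, ∀ b ∈ coeffs, ∀ c ∈ coeffs,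
      (a + b) % 8 = c % 8 → a + b = c ∨ c + 8 ≤ a + b := by decide
  have h' : (a + b) * m + 8 * (s + t) = c * m + 8 * T := by rw [← h]; ring
  rcases hmod a ha b hb c hc (modEq_of_mul_add_eight_mul_eq hm h') with hab | hle
  · rw [hab] at h'
    exact ⟨hab, by omega⟩
  · have := Nat.mul_le_mul_right m hle
    rw [add_mul] at this
    omega

end Representation

section Counting

variable {m : ℕ}

def pairFinset (m s T : ℕ) : Finset (ℕ × ℕ) :=
  (coeffPairs s ×ˢ range (T + 1)).image fun q => (q.1.1 * m + 8 * q.2, q.1.2 * m + 8 * (T - q.2))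

theorem card_pairFinset (hm : Odd m) (s T : ℕ) :
    #(pairFinset m s T) = #(coeffPairs s) * (T + 1) := by
  rw [pairFinset, card_image_of_injOn, card_product, card_range]
  rintro ⟨⟨c₁, c₂⟩, k⟩ hq ⟨⟨d₁, d₂⟩, l⟩ hq' heq
  simp only [coe_product, Set.mem_prod, mem_coe, coeffPairs, mem_filter, mem_product] at hq hq'
  simp only [Prod.mk.injEq] at heq
  obtain ⟨rfl, rfl⟩ := eq_of_mul_add_eight_mul_eq hm hq.1.1.1 hq'.1.1.1 heq.1
  obtain ⟨rfl, -⟩ := eq_of_mul_add_eight_mul_eq hm hq.1.1.2 hq'.1.1.2 heq.2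
  rfl

theorem mem_pairFinset {s T : ℕ} {p : ℕ × ℕ} : p ∈ pairFinset m s T ↔
    ∃ c₁ c₂ k, (c₁, c₂) ∈ coeffPairs s ∧ k ≤ T ∧ p = (c₁ * m + 8 * k, c₂ * m + 8 * (T - k)) := by
  simp only [pairFinset, mem_image, mem_product, mem_range, Prod.exists, Nat.lt_succ_iff]
  grind

theorem pairFinset_subset {s T y : ℕ} (hy : s * m + 8 * T = y) :
    ↑(pairFinset m s T) ⊆ sumPairs (semigroup m) y := by
  intro p hp
  obtain ⟨c₁, c₂, k, hc, hk, rfl⟩ := mem_pairFinset.1 (mem_coe.1 hp)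
  simp only [coeffPairs, mem_filter, mem_product] at hc
  refine ⟨⟨c₁, hc.1.1, k, rfl⟩, ⟨c₂, hc.1.2, T - k, rfl⟩, ?_⟩
  rw [← hy, ← hc.2]
  obtain ⟨d, rfl⟩ := Nat.exists_eq_add_of_le hk
  simp only [Nat.add_sub_cancel_left]
  ring

theorem sumPairs_subset_pairFinset (hm : Odd m) {s T : ℕ} (hs : s ∈ coeffs) (hT : T < m) :
    sumPairs (semigroup m) (s * m + 8 * T) ⊆ ↑(pairFinset m s T) := by
  rintro ⟨_, _⟩ ⟨⟨c₁, hc₁, k₁, rfl⟩, ⟨c₂, hc₂, k₂, rfl⟩, hsum⟩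
  obtain ⟨hc, hk⟩ := add_eq_of_mul_add_eight_mul_eq hm hc₁ hc₂ hs hT hsum
  refine mem_pairFinset.2 ⟨c₁, c₂, k₁, ?_, by omega, by rw [← hk, Nat.add_sub_cancel_left]⟩
  simp only [coeffPairs, mem_filter, mem_product]
  exact ⟨⟨hc₁, hc₂⟩, hc⟩

theorem disjoint_pairFinset (hm : Odd m) {s s' T T' : ℕ} (hs : s ≠ s') :
    Disjoint (pairFinset m s T) (pairFinset m s' T') := by
  refine disjoint_left.2 fun p hp hp' => hs ?_
  obtain ⟨c₁, c₂, k, hc, -, rfl⟩ := mem_pairFinset.1 hp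
  obtain ⟨d₁, d₂, l, hd, -, heq⟩ := mem_pairFinset.1 hp'
  simp only [coeffPairs, mem_filter, mem_product, Prod.mk.injEq] at hc hd heq
  rw [← hc.2, ← hd.2, (eq_of_mul_add_eight_mul_eq hm hc.1.1 hd.1.1 heq.1).1,
    (eq_of_mul_add_eight_mul_eq hm hc.1.2 hd.1.2 heq.2).1]

theorem sumPairs_finite (H : Set ℕ) (x : ℕ) : (sumPairs H x).Finite :=
  (antidiagonal x).finite_toSet.subset fun _ hp => mem_antidiagonal.2 hp.2.2

theorem card_le_repCount (hm : Odd m) (s T : ℕ) :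
    #(coeffPairs s) * (T + 1) ≤ repCount (semigroup m) (s * m + 8 * T) := by
  rw [← card_pairFinset hm, ← Set.ncard_coe_finset]
  exact Set.ncard_le_ncard (pairFinset_subset rfl) (sumPairs_finite _ _)

theorem repCount_eq (hm : Odd m) {s T : ℕ} (hs : s ∈ coeffs) (hT : T < m) :
    repCount (semigroup m) (s * m + 8 * T) = #(coeffPairs s) * (T + 1) := by
  rw [← card_pairFinset hm, ← Set.ncard_coe_finset, repCount,
    (pairFinset_subset rfl).antisymm (sumPairs_subset_pairFinset hm hs hT)]

/-- For `T ≥ m` the pairs with `c₁ + c₂ = 8` also sum to `8 T`. -/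
theorem repCount_eight_mul_ge (hm : Odd m) {T : ℕ} (hT : m ≤ T) :
    T + 1 + 5 * (T + 1 - m) ≤ repCount (semigroup m) (8 * T) := by
  have h₀ : ↑(pairFinset m 0 T) ⊆ sumPairs (semigroup m) (8 * T) := pairFinset_subset (by ring)
  have h₈ : ↑(pairFinset m 8 (T - m)) ⊆ sumPairs (semigroup m) (8 * T) :=
    pairFinset_subset (by omega)
  calc T + 1 + 5 * (T + 1 - m) = #(pairFinset m 0 T ∪ pairFinset m 8 (T - m)) := by
        rw [card_union_of_disjoint (disjoint_pairFinset hm (by decide)), card_pairFinset hm,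
          card_pairFinset hm]
        simp only [card_coeffPairs]
        omega
    _ ≤ repCount (semigroup m) (8 * T) := by
        rw [← Set.ncard_coe_finset, coe_union]
        exact Set.ncard_le_ncard (Set.union_subset h₀ h₈) (sumPairs_finite _ _)

/-- `t + 1 - m` truncates to `0` for `t < m`, where only the pairs with `c₁ + c₂ = 0` count. -/
theorem repCount_ge_of_mem (hm : Odd m) {y : ℕ} (hy : y ∈ semigroup m) : ∃ t,
    (y = 8 * t ∧ t + 1 + 5 * (t + 1 - m) ≤ repCount (semigroup m) y) ∨
    (y = 2 * m + 8 * t ∧ 2 * (t + 1) ≤ repCount (semigroup m) y) ∨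
    (y = 3 * m + 8 * t ∧ 2 * (t + 1) ≤ repCount (semigroup m) y) ∨
    (y = 4 * m + 8 * t ∧ 3 * (t + 1) ≤ repCount (semigroup m) y) ∨
    (y = 5 * m + 8 * t ∧ 4 * (t + 1) ≤ repCount (semigroup m) y) ∨
    (y = 6 * m + 8 * t ∧ 5 * (t + 1) ≤ repCount (semigroup m) y) ∨
    (y = 7 * m + 8 * t ∧ 6 * (t + 1) ≤ repCount (semigroup m) y) ∨
    (y = 9 * m + 8 * t ∧ 8 * (t + 1) ≤ repCount (semigroup m) y) := by
  obtain ⟨c, hc, t, rfl⟩ := hy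
  have hle := card_le_repCount hm c t
  refine ⟨t, ?_⟩
  fin_cases hc <;> simp only [card_coeffPairs] at hle
  · left
    refine ⟨by ring, ?_⟩
    rcases lt_or_ge t m with ht | ht
    · omega
    · simpa using repCount_eight_mul_ge hm ht
  all_goals omega

end Counting

theorem sInf_repCount_eq {m : ℕ} (hm : Odd m) {x d : ℕ} (c₀ t₀ : ℕ) (hc₀ : c₀ ∈ coeffs)
    (ht₀ : t₀ < m) (hx : x ≤ c₀ * m + 8 * t₀) (hd : #(coeffPairs c₀) * (t₀ + 1) = d)
    (hlow : ∀ t,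
      (x ≤ 8 * t → d ≤ t + 1 + 5 * (t + 1 - m)) ∧ (x ≤ 2 * m + 8 * t → d ≤ 2 * (t + 1)) ∧
      (x ≤ 3 * m + 8 * t → d ≤ 2 * (t + 1)) ∧ (x ≤ 4 * m + 8 * t → d ≤ 3 * (t + 1)) ∧
      (x ≤ 5 * m + 8 * t → d ≤ 4 * (t + 1)) ∧ (x ≤ 6 * m + 8 * t → d ≤ 5 * (t + 1)) ∧
      (x ≤ 7 * m + 8 * t → d ≤ 6 * (t + 1)) ∧ (x ≤ 9 * m + 8 * t → d ≤ 8 * (t + 1))) :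
    sInf (repCount (semigroup m) '' {y | y ∈ semigroup m ∧ x ≤ y}) = d := by
  refine IsLeast.csInf_eq ⟨⟨_, ⟨⟨c₀, hc₀, t₀, rfl⟩, hx⟩, (repCount_eq hm hc₀ ht₀).trans hd⟩, ?_⟩
  rintro _ ⟨y, ⟨hy, hxy⟩, rfl⟩
  obtain ⟨t, ht⟩ := repCount_ge_of_mem hm hy
  have := hlow t
  omega

theorem ceil_natCast_sub_div (k a b : ℕ) : ⌈(k : ℚ) - a / b⌉ = k - (a / b : ℕ) := by
  rw [sub_eq_neg_add, Int.ceil_add_natCast, Int.ceil_neg, Rat.floor_natCast_div_natCast]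
  push_cast
  ring

end GGS

open GGS

theorem stmt_3_general (n m : ℕ) (hn : 5 ≤ n) (hm : 3 * m = 2 ^ n + 1)
    (H : Set ℕ)
    (hH : H = {x | ∃ i ≤ 1, ∃ j ≤ 3, ∃ k : ℕ, x = i * (2 ^ n + 1) + 2 * j * m + 8 * k})
    (ν : ℕ → ℕ)
    (hν : ∀ x, ν x = {p : ℕ × ℕ | p.1 ∈ H ∧ p.2 ∈ H ∧ p.1 + p.2 = x}.ncard)
    (D : ℕ → ℕ)
    (hD : ∀ x, D x = sInf (ν '' {y : ℕ | y ∈ H ∧ x ≤ y}))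
    (k : ℕ) :
    (k = 0 → D (3 * m + 8 * k) = 2) ∧
    (1 ≤ k ∧ k ≤ m / 8 → D (3 * m + 8 * k) = 3) ∧
    ((m : ℚ) / 8 < (k : ℚ) ∧ k ≤ m / 4 → D (3 * m + 8 * k) = 4) ∧
    ((m : ℚ) / 4 < (k : ℚ) ∧ k ≤ 3 * m / 8 → D (3 * m + 8 * k) = 5) ∧
    (3 * (m : ℚ) / 8 < (k : ℚ) ∧ k ≤ m / 2 → D (3 * m + 8 * k) = 6) ∧
    ((m : ℚ) / 2 < (k : ℚ) ∧ k ≤ 3 * m / 4 → D (3 * m + 8 * k) = 8) ∧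
    (3 * (m : ℚ) / 4 < (k : ℚ) ∧ k ≤ m - 2 →
      (D (3 * m + 8 * k) : ℤ) = 8 * (⌈(k : ℚ) - 3 * m / 4⌉ + 1)) ∧
    (k = m - 1 → D (3 * m + 8 * k) = 2 * m) := by
  obtain ⟨hm8, hm11⟩ : m % 8 = 3 ∧ 11 ≤ m := by
    obtain ⟨j, rfl⟩ := Nat.exists_eq_add_of_le hn
    have := Nat.one_le_two_pow (n := j)
    rw [pow_add] at hm
    omega
  have hm_odd : Odd m := Nat.odd_iff.2 (by omega)
  rw [setOf_eq_semigroup hm] at hH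
  subst hH
  obtain rfl : ν = repCount (semigroup m) := funext hν
  simp only [hD]
  refine ⟨fun hk₀ => ?_, fun ⟨hk₁, hk₂⟩ => ?_, fun ⟨hq, hk₂⟩ => ?_, fun ⟨hq, hk₂⟩ => ?_,
    fun ⟨hq, hk₂⟩ => ?_, fun ⟨hq, hk₂⟩ => ?_, fun ⟨hq, hk₂⟩ => ?_, fun hk₁ => ?_⟩
  · exact sInf_repCount_eq hm_odd 3 0 (by decide) (by omega) (by omega) (by decide) (by omega)
  · exact sInf_repCount_eq hm_odd 4 0 (by decide) (by omega) (by omega) (by decide) (by omega)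
  · have : m < 8 * k := by exact_mod_cast (by linarith : (m : ℚ) < 8 * k)
    exact sInf_repCount_eq hm_odd 5 0 (by decide) (by omega) (by omega) (by decide) (by omega)
  · have : m < 4 * k := by exact_mod_cast (by linarith : (m : ℚ) < 4 * k)
    exact sInf_repCount_eq hm_odd 6 0 (by decide) (by omega) (by omega) (by decide) (by omega)
  · have : 3 * m < 8 * k := by exact_mod_cast (by linarith : (3 * m : ℚ) < 8 * k)
    exact sInf_repCount_eq hm_odd 7 0 (by decide) (by omega) (by omega) (by decide) (by omega)
  · have : m < 2 * k := by exact_mod_cast (by linarith : (m : ℚ) < 2 * k)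
    exact sInf_repCount_eq hm_odd 9 0 (by decide) (by omega) (by omega) (by decide) (by omega)
  · have : 3 * m < 4 * k := by exact_mod_cast (by linarith : (3 * m : ℚ) < 4 * k)
    have hceil := ceil_natCast_sub_div k (3 * m) 4
    push_cast at hceil
    rw [sInf_repCount_eq hm_odd (d := 8 * (k - 3 * m / 4 + 1)) 9 (k - 3 * m / 4) (by decide)
      (by omega) (by omega) (by simp only [card_coeffPairs]) (by omega), hceil]
    push_cast [Nat.cast_sub (by omega : 3 * m / 4 ≤ k)]
    ring
  · exact sInf_repCount_eq hm_odd 3 (m - 1) (by decide) (by omega) (by omega)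
      (by simp only [card_coeffPairs]; omega) (by omega)

/-- The Feng–Rao designed minimum distance `d_ORD(C_ℓ(P_∞))` for `ρ_{ℓ+1} = (1,0,k)`,
`k < m`, on `GGS(2,n)`. -/
theorem stmt_3 (n m : ℕ) (hn : 5 ≤ n) (hodd : Odd n) (hm : 3 * m = 2 ^ n + 1)
    (H : Set ℕ)
    (hH : H = {x | ∃ i ≤ 1, ∃ j ≤ 3, ∃ k : ℕ, x = i * (2 ^ n + 1) + 2 * j * m + 8 * k})
    (ν : ℕ → ℕ)
    (hν : ∀ x, ν x = {p : ℕ × ℕ | p.1 ∈ H ∧ p.2 ∈ H ∧ p.1 + p.2 = x}.ncard)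
    (D : ℕ → ℕ)
    (hD : ∀ x, D x = sInf (ν '' {y : ℕ | y ∈ H ∧ x ≤ y}))
    (k : ℕ) (hk : k < m) :
    (k = 0 → D (3 * m + 8 * k) = 2) ∧
    (1 ≤ k ∧ k ≤ m / 8 → D (3 * m + 8 * k) = 3) ∧
    ((m : ℚ) / 8 < (k : ℚ) ∧ k ≤ m / 4 → D (3 * m + 8 * k) = 4) ∧
    ((m : ℚ) / 4 < (k : ℚ) ∧ k ≤ 3 * m / 8 → D (3 * m + 8 * k) = 5) ∧
    (3 * (m : ℚ) / 8 < (k : ℚ) ∧ k ≤ m / 2 → D (3 * m + 8 * k) = 6) ∧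
    ((m : ℚ) / 2 < (k : ℚ) ∧ k ≤ 3 * m / 4 → D (3 * m + 8 * k) = 8) ∧
    (3 * (m : ℚ) / 4 < (k : ℚ) ∧ k ≤ m - 2 →
      (D (3 * m + 8 * k) : ℤ) = 8 * (⌈(k : ℚ) - 3 * m / 4⌉ + 1)) ∧
    (k = m - 1 → D (3 * m + 8 * k) = 2 * m) :=
  stmt_3_general n m hn hm H hH ν hν D hD k
end

section
/- Let n ≥ 5 be odd, m = (2^n+1)/3, and let k ∈ ℕ with k < m. Set x = 9m + 8k (the element (1,3,k) of H). Then D(x) = min{ ν(y) : y ∈ H, y ≥ x } equals ν(x) = 8(k+1). -/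
/-!
For any `H ⊆ ℕ` with `g` gaps, among the `x + 1` splittings `x = a + (x - a)` at most `g` have
`a ∉ H` and at most `g` have `x - a ∉ H`, so `ν(x) ≥ x + 1 - 2g`. Since `m ≡ 3 [MOD 8]`, the
Apéry set of `H` with respect to `8` is `{c m | c ∈ {0, 2, 3, 4, 5, 6, 7, 9}}`, hence
`g = ∑ ⌊c m / 8⌋` and `2g = 9m - 7`; so `ν(y) ≥ y + 8 - 9m ≥ 8(k + 1)` for all `y ≥ 9m + 8k`.
Conversely, in a splitting `9m + 8k = (c m + 8u) + (c' m + 8u')` we have `c + c' ≡ 1 [MOD 8]`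
and `c + c' ≠ 1`, so `c + c' ≥ 9` and `u ≤ k`: there are at most `8(k + 1)` splittings.
-/

open Finset

noncomputable def numAddReps (H : Set ℕ) (x : ℕ) : ℕ :=
  {p : ℕ × ℕ | p.1 ∈ H ∧ p.2 ∈ H ∧ p.1 + p.2 = x}.ncard

section AddReps

variable (H : Set ℕ) [DecidablePred (· ∈ H)]

theorem numAddReps_eq_card_filter (x : ℕ) :
    numAddReps H x = #{a ∈ range (x + 1) | a ∈ H ∧ x - a ∈ H} := by
  have hset : {p : ℕ × ℕ | p.1 ∈ H ∧ p.2 ∈ H ∧ p.1 + p.2 = x} =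
      ({a ∈ range (x + 1) | a ∈ H ∧ x - a ∈ H}.image fun a => (a, x - a) : Finset (ℕ × ℕ)) := by
    ext ⟨a, b⟩
    simp only [Set.mem_ofPred_eq, coe_image, coe_filter, mem_range, Set.mem_image, Prod.mk.injEq]
    constructor
    · rintro ⟨ha, hb, rfl⟩
      exact ⟨a, ⟨by omega, ha, by simpa using hb⟩, rfl, by omega⟩
    · rintro ⟨a, ⟨hax, ha, hxa⟩, rfl, rfl⟩
      exact ⟨ha, hxa, by omega⟩
  rw [numAddReps, hset, Set.ncard_coe_finset,
    card_image_of_injective _ fun a b h => (Prod.ext_iff.1 h).1]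

theorem succ_le_numAddReps_add_two_mul_card_gaps (x : ℕ) :
    x + 1 ≤ numAddReps H x + 2 * #{a ∈ range (x + 1) | a ∉ H} := by
  set gaps := {a ∈ range (x + 1) | a ∉ H}
  have hcover : range (x + 1) ⊆
      {a ∈ range (x + 1) | a ∈ H ∧ x - a ∈ H} ∪ gaps ∪ gaps.image (x - ·) := by
    intro a ha
    have hax : a ≤ x := Nat.lt_succ_iff.1 (mem_range.1 ha)
    by_cases haH : a ∈ H
    · by_cases hxaH : x - a ∈ H
      · simp [ha, haH, hxaH]
      · refine mem_union_right _ (mem_image.2 ⟨x - a, ?_, by omega⟩)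
        simp [gaps, hxaH]
    · simp [gaps, ha, haH]
  calc x + 1 = #(range (x + 1)) := (card_range _).symm
    _ ≤ #({a ∈ range (x + 1) | a ∈ H ∧ x - a ∈ H} ∪ gaps ∪ gaps.image (x - ·)) :=
      card_le_card hcover
    _ ≤ numAddReps H x + #gaps + #gaps := by
      rw [numAddReps_eq_card_filter]
      exact (card_union_le _ _).trans (add_le_add (card_union_le _ _) card_image_le)
    _ = numAddReps H x + 2 * #gaps := by ring

end AddReps

def aperyCoeffs : Finset ℕ := {0, 2, 3, 4, 5, 6, 7, 9}

def ggsSemigroup (m : ℕ) : Set ℕ := {x | ∃ c ∈ aperyCoeffs, ∃ u, x = c * m + 8 * u}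

section GGS

variable {m : ℕ}

theorem ggsSemigroup_eq_setOf_generators (m : ℕ) :
    {x | ∃ i ≤ 1, ∃ j ≤ 3, ∃ k : ℕ, x = i * (3 * m) + 2 * j * m + 8 * k} = ggsSemigroup m := by
  have hcoeffs : ∀ c, c ∈ aperyCoeffs ↔ ∃ i ≤ 1, ∃ j ≤ 3, c = 3 * i + 2 * j := by
    intro c
    constructor
    · revert c
      decide
    · rintro ⟨i, hi, j, hj, rfl⟩
      interval_cases i <;> interval_cases j <;> decide
  ext x
  simp only [ggsSemigroup, Set.mem_ofPred_eq, hcoeffs]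
  constructor
  · rintro ⟨i, hi, j, hj, u, rfl⟩
    exact ⟨_, ⟨i, hi, j, hj, rfl⟩, u, by ring⟩
  · rintro ⟨_, ⟨i, hi, j, hj, rfl⟩, u, rfl⟩
    exact ⟨i, hi, j, hj, u, by ring⟩

theorem exists_aperyCoeff_mul_mod_eq (hm : m % 8 = 3) (a : ℕ) :
    ∃ c ∈ aperyCoeffs, c * m % 8 = a % 8 := by
  have hresidues : ∀ r < 8, ∃ c ∈ aperyCoeffs, c * 3 % 8 = r := by decide
  obtain ⟨c, hc, hcr⟩ := hresidues (a % 8) (Nat.mod_lt _ (by norm_num))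
  exact ⟨c, hc, by rw [Nat.mul_mod, hm]; omega⟩

theorem exists_eq_sub_of_notMem_ggsSemigroup (hm : m % 8 = 3) {a : ℕ} (ha : a ∉ ggsSemigroup m) :
    ∃ c ∈ aperyCoeffs, ∃ j < c * m / 8, c * m - 8 * (j + 1) = a := by
  obtain ⟨c, hc, hca⟩ := exists_aperyCoeff_mul_mod_eq hm a
  have hlt : a < c * m := by
    by_contra! hle
    exact ha ⟨c, hc, (a - c * m) / 8, by omega⟩
  exact ⟨c, hc, (c * m - a) / 8 - 1, by omega, by omega⟩

theorem card_gaps_le_sum_aperyCoeffs (hm : m % 8 = 3) (x : ℕ)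
    [DecidablePred (· ∈ ggsSemigroup m)] :
    #{a ∈ range (x + 1) | a ∉ ggsSemigroup m} ≤ ∑ c ∈ aperyCoeffs, c * m / 8 := by
  have hsub : {a ∈ range (x + 1) | a ∉ ggsSemigroup m} ⊆
      aperyCoeffs.biUnion fun c => (range (c * m / 8)).image fun j => c * m - 8 * (j + 1) := by
    intro a ha
    obtain ⟨c, hc, j, hj, rfl⟩ := exists_eq_sub_of_notMem_ggsSemigroup hm (mem_filter.1 ha).2
    exact mem_biUnion.2 ⟨c, hc, mem_image.2 ⟨j, mem_range.2 hj, rfl⟩⟩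
  calc _ ≤ _ := card_le_card hsub
    _ ≤ _ := card_biUnion_le
    _ ≤ _ := sum_le_sum fun c _ => card_image_le.trans (card_range _).le

theorem two_mul_sum_aperyCoeffs (hm : m % 8 = 3) :
    2 * ∑ c ∈ aperyCoeffs, c * m / 8 = 9 * m - 7 := by
  simp only [aperyCoeffs, mem_insert, OfNat.zero_ne_ofNat, mem_singleton, or_self,
    not_false_eq_true, sum_insert, zero_mul, Nat.zero_div, Nat.reduceEqDiff, sum_singleton, zero_add]
  omega

theorem le_of_add_mul_add_eq_nine_mul_add (hm : m % 8 = 3) {c c' v k : ℕ} (hc : c ∈ aperyCoeffs)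
    (hc' : c' ∈ aperyCoeffs) (h : (c + c') * m + 8 * v = 9 * m + 8 * k) : v ≤ k := by
  by_cases h9 : 9 ≤ c + c'
  · nlinarith
  · have hne : ∀ c ∈ aperyCoeffs, ∀ c' ∈ aperyCoeffs, c + c' ≠ 1 := by decide
    have h1 := hne c hc c' hc'
    generalize c + c' = s at h h1 h9
    interval_cases s <;> omega

theorem numAddReps_ggsSemigroup_le (hm : m % 8 = 3) (k : ℕ) :
    numAddReps (ggsSemigroup m) (9 * m + 8 * k) ≤ 8 * (k + 1) := by
  classical
  rw [numAddReps_eq_card_filter]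
  calc _ ≤ #((aperyCoeffs ×ˢ range (k + 1)).image fun p => p.1 * m + 8 * p.2) := card_le_card ?_
    _ ≤ #(aperyCoeffs ×ˢ range (k + 1)) := card_image_le
    _ = 8 * (k + 1) := by rw [card_product, card_range]; rfl
  intro a ha
  obtain ⟨hax, ⟨c, hc, u, rfl⟩, c', hc', u', hb⟩ := mem_filter.1 ha
  have hu : u + u' ≤ k := le_of_add_mul_add_eq_nine_mul_add hm hc hc' <| by
    rw [mem_range] at hax
    rw [add_mul]
    omega
  exact mem_image.2 ⟨(c, u), mem_product.2 ⟨hc, mem_range.2 (by omega)⟩, rfl⟩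

theorem add_eight_le_numAddReps_ggsSemigroup_add (hm : m % 8 = 3) (y : ℕ) :
    y + 8 ≤ numAddReps (ggsSemigroup m) y + 9 * m := by
  classical
  have hgoppa := succ_le_numAddReps_add_two_mul_card_gaps (ggsSemigroup m) y
  have hgaps := card_gaps_le_sum_aperyCoeffs hm y
  have hgenus := two_mul_sum_aperyCoeffs hm
  omega

end GGS

theorem stmt_4_general (n m : ℕ) (hn : 5 ≤ n) (hm : 3 * m = 2 ^ n + 1)
    (H : Set ℕ)
    (hH : H = {x | ∃ i ≤ 1, ∃ j ≤ 3, ∃ k : ℕ, x = i * (2 ^ n + 1) + 2 * j * m + 8 * k})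
    (ν : ℕ → ℕ)
    (hν : ∀ x, ν x = {p : ℕ × ℕ | p.1 ∈ H ∧ p.2 ∈ H ∧ p.1 + p.2 = x}.ncard)
    (D : ℕ → ℕ)
    (hD : ∀ x, D x = sInf (ν '' {y : ℕ | y ∈ H ∧ x ≤ y}))
    (k : ℕ) :
    D (9 * m + 8 * k) = ν (9 * m + 8 * k) ∧ ν (9 * m + 8 * k) = 8 * (k + 1) := by
  have hm8 : m % 8 = 3 := by
    obtain ⟨e, he⟩ : 2 ^ 3 ∣ 2 ^ n := pow_dvd_pow 2 (by omega)
    omega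
  rw [← hm, ggsSemigroup_eq_setOf_generators] at hH
  obtain rfl : ν = numAddReps H := funext hν
  subst hH
  have hνx : numAddReps (ggsSemigroup m) (9 * m + 8 * k) = 8 * (k + 1) :=
    le_antisymm (numAddReps_ggsSemigroup_le hm8 k)
      (by linarith [add_eight_le_numAddReps_ggsSemigroup_add hm8 (9 * m + 8 * k)])
  refine ⟨?_, hνx⟩
  rw [hD]
  refine IsLeast.csInf_eq ⟨⟨_, ⟨⟨9, by decide, k, rfl⟩, le_rfl⟩, rfl⟩, ?_⟩
  rintro _ ⟨y, ⟨-, hxy⟩, rfl⟩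
  linarith [add_eight_le_numAddReps_ggsSemigroup_add hm8 y]

/-- The Feng–Rao designed minimum distance `d_ORD(C_ℓ(P_∞))` for `ρ_{ℓ+1} = (1,3,k)`,
`k < m`, on `GGS(2,n)` equals `ν(ρ_{ℓ+1}) = 8(k+1)`. -/
theorem stmt_4 (n m : ℕ) (hn : 5 ≤ n) (hodd : Odd n) (hm : 3 * m = 2 ^ n + 1)
    (H : Set ℕ)
    (hH : H = {x | ∃ i ≤ 1, ∃ j ≤ 3, ∃ k : ℕ, x = i * (2 ^ n + 1) + 2 * j * m + 8 * k})
    (ν : ℕ → ℕ)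
    (hν : ∀ x, ν x = {p : ℕ × ℕ | p.1 ∈ H ∧ p.2 ∈ H ∧ p.1 + p.2 = x}.ncard)
    (D : ℕ → ℕ)
    (hD : ∀ x, D x = sInf (ν '' {y : ℕ | y ∈ H ∧ x ≤ y}))
    (k : ℕ) (hk : k < m) :
    D (9 * m + 8 * k) = ν (9 * m + 8 * k) ∧ ν (9 * m + 8 * k) = 8 * (k + 1) :=
  stmt_4_general n m hn hm H hH ν hν D hD k
end

section
/- Let n ≥ 5 be odd, m = (2^n+1)/3, and let k ∈ ℕ with k < m. Set x = 5m + 8k (the element (1,1,k) of H). Then D(x) = min{ ν(y) : y ∈ H, y ≥ x } equals: 4 if k = 0; 5 if 1 ≤ k ≤ ⌊m/8⌋; 6 if m/8 < k ≤ ⌊m/4⌋; 8 if m/4 < k ≤ ⌊m/2⌋; 8(⌈k − m/2⌉ + 1) if ⌈m/2⌉ ≤ k ≤ ⌊3m/4⌋ − 2; 2(⌈m/4 + k⌉ + 1) + 6(⌈m/4 + k⌉ − m + 1) if ⌊3m/4⌋ − 1 ≤ k ≤ m−2; and 4m if k = m−1. -/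
def Cset : Finset ℕ := {0,2,3,4,5,6,7,9}

def Af : ℕ → ℕ
  | 0 => 1 | 2 => 2 | 3 => 2 | 4 => 3 | 5 => 4 | 6 => 5 | 7 => 6 | _ => 8

def Bf : ℕ → ℕ
  | 0 => 5 | 2 => 5 | 3 => 6 | 4 => 5 | 5 => 4 | 6 => 3 | 7 => 2 | _ => 0

def Cf : ℕ → ℕ
  | 0 => 2 | 2 => 1 | _ => 0

lemma sum_eval (m t : ℕ) (c : ℕ) (hc : c ∈ Cset) :
    ∑ p ∈ (Cset ×ˢ Cset).filter (fun p => (p.1 + p.2) % 8 = c % 8),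
        (t + 1 - (p.1 + p.2 - c) / 8 * m)
      = Af c * (t + 1) + Bf c * (t + 1 - m) + Cf c * (t + 1 - 2 * m) := by
  fin_cases hc
  · rw [show (Cset ×ˢ Cset).filter (fun p => (p.1 + p.2) % 8 = 0 % 8) =
      ({(0,0), (2,6), (3,5), (4,4), (5,3), (6,2), (7,9), (9,7)} : Finset (ℕ × ℕ)) from by decide]
    rw [Finset.sum_insert (by decide), Finset.sum_insert (by decide),
      Finset.sum_insert (by decide), Finset.sum_insert (by decide),
      Finset.sum_insert (by decide), Finset.sum_insert (by decide),
      Finset.sum_insert (by decide), Finset.sum_singleton]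
    norm_num [Af, Bf, Cf]
    omega
  · rw [show (Cset ×ˢ Cset).filter (fun p => (p.1 + p.2) % 8 = 2 % 8) =
      ({(0,2), (2,0), (3,7), (4,6), (5,5), (6,4), (7,3), (9,9)} : Finset (ℕ × ℕ)) from by decide]
    rw [Finset.sum_insert (by decide), Finset.sum_insert (by decide),
      Finset.sum_insert (by decide), Finset.sum_insert (by decide),
      Finset.sum_insert (by decide), Finset.sum_insert (by decide),
      Finset.sum_insert (by decide), Finset.sum_singleton]
    norm_num [Af, Bf, Cf]
    omega
  · rw [show (Cset ×ˢ Cset).filter (fun p => (p.1 + p.2) % 8 = 3 % 8) =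
      ({(0,3), (2,9), (3,0), (4,7), (5,6), (6,5), (7,4), (9,2)} : Finset (ℕ × ℕ)) from by decide]
    rw [Finset.sum_insert (by decide), Finset.sum_insert (by decide),
      Finset.sum_insert (by decide), Finset.sum_insert (by decide),
      Finset.sum_insert (by decide), Finset.sum_insert (by decide),
      Finset.sum_insert (by decide), Finset.sum_singleton]
    norm_num [Af, Bf, Cf]
    omega
  · rw [show (Cset ×ˢ Cset).filter (fun p => (p.1 + p.2) % 8 = 4 % 8) =
      ({(0,4), (2,2), (3,9), (4,0), (5,7), (6,6), (7,5), (9,3)} : Finset (ℕ × ℕ)) from by decide]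
    rw [Finset.sum_insert (by decide), Finset.sum_insert (by decide),
      Finset.sum_insert (by decide), Finset.sum_insert (by decide),
      Finset.sum_insert (by decide), Finset.sum_insert (by decide),
      Finset.sum_insert (by decide), Finset.sum_singleton]
    norm_num [Af, Bf, Cf]
    omega
  · rw [show (Cset ×ˢ Cset).filter (fun p => (p.1 + p.2) % 8 = 5 % 8) =
      ({(0,5), (2,3), (3,2), (4,9), (5,0), (6,7), (7,6), (9,4)} : Finset (ℕ × ℕ)) from by decide]
    rw [Finset.sum_insert (by decide), Finset.sum_insert (by decide),
      Finset.sum_insert (by decide), Finset.sum_insert (by decide),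
      Finset.sum_insert (by decide), Finset.sum_insert (by decide),
      Finset.sum_insert (by decide), Finset.sum_singleton]
    norm_num [Af, Bf, Cf]
    omega
  · rw [show (Cset ×ˢ Cset).filter (fun p => (p.1 + p.2) % 8 = 6 % 8) =
      ({(0,6), (2,4), (3,3), (4,2), (5,9), (6,0), (7,7), (9,5)} : Finset (ℕ × ℕ)) from by decide]
    rw [Finset.sum_insert (by decide), Finset.sum_insert (by decide),
      Finset.sum_insert (by decide), Finset.sum_insert (by decide),
      Finset.sum_insert (by decide), Finset.sum_insert (by decide),
      Finset.sum_insert (by decide), Finset.sum_singleton]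
    norm_num [Af, Bf, Cf]
    omega
  · rw [show (Cset ×ˢ Cset).filter (fun p => (p.1 + p.2) % 8 = 7 % 8) =
      ({(0,7), (2,5), (3,4), (4,3), (5,2), (6,9), (7,0), (9,6)} : Finset (ℕ × ℕ)) from by decide]
    rw [Finset.sum_insert (by decide), Finset.sum_insert (by decide),
      Finset.sum_insert (by decide), Finset.sum_insert (by decide),
      Finset.sum_insert (by decide), Finset.sum_insert (by decide),
      Finset.sum_insert (by decide), Finset.sum_singleton]
    norm_num [Af, Bf, Cf]
    omega
  · rw [show (Cset ×ˢ Cset).filter (fun p => (p.1 + p.2) % 8 = 9 % 8) =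
      ({(0,9), (2,7), (3,6), (4,5), (5,4), (6,3), (7,2), (9,0)} : Finset (ℕ × ℕ)) from by decide]
    rw [Finset.sum_insert (by decide), Finset.sum_insert (by decide),
      Finset.sum_insert (by decide), Finset.sum_insert (by decide),
      Finset.sum_insert (by decide), Finset.sum_insert (by decide),
      Finset.sum_insert (by decide), Finset.sum_singleton]
    norm_num [Af, Bf, Cf]
    omega


lemma partner_arith (m q s cc U W : ℕ) (hmq : m = 8*q+3) (hs : s ≤ 18) (hcc : cc ≤ 9)
    (h : s*m + 8*U = cc*m + 8*W) : s % 8 = cc % 8 := by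
  subst hmq; interval_cases s <;> interval_cases cc <;> omega

lemma nu_formula (m q : ℕ) (hmq : m = 8 * q + 3) (c : ℕ) (hc : c ∈ Cset) (t : ℕ) :
    {p : ℕ × ℕ | p.1 ∈ {x | ∃ c ∈ Cset, ∃ t, x = c * m + 8 * t} ∧
        p.2 ∈ {x | ∃ c ∈ Cset, ∃ t, x = c * m + 8 * t} ∧
        p.1 + p.2 = c * m + 8 * t}.ncard
      = Af c * (t + 1) + Bf c * (t + 1 - m) + Cf c * (t + 1 - 2 * m) := by
  classical
  have haux1 : ∀ cc ∈ Cset, ∀ c₁ ∈ Cset, ∀ c₂ ∈ Cset,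
      (c₁ + c₂) % 8 = cc % 8 →
      cc ≤ c₁ + c₂ ∧ (c₁ + c₂ - cc) % 8 = 0 ∧ (c₁ + c₂ - cc) / 8 ≤ 2 := by decide
  have hbound : ∀ cc ∈ Cset, cc ≤ 9 := by decide
  set Dd : Finset (ℕ × ℕ) := (Cset ×ˢ Cset).filter (fun p => (p.1 + p.2) % 8 = c % 8)
    with hDd
  set F : Finset (ℕ × ℕ) := Dd.biUnion (fun p =>
    (Finset.range (t + 1 - (p.1 + p.2 - c) / 8 * m)).image
      (fun u => (p.1 * m + 8 * u, p.2 * m + 8 * (t - (p.1 + p.2 - c) / 8 * m - u)))) with hF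
  have hset : {p : ℕ × ℕ | p.1 ∈ {x | ∃ c ∈ Cset, ∃ t, x = c * m + 8 * t} ∧
        p.2 ∈ {x | ∃ c ∈ Cset, ∃ t, x = c * m + 8 * t} ∧
        p.1 + p.2 = c * m + 8 * t} = ↑F := by
    ext ⟨a, b⟩
    simp only [Set.mem_setOf_eq, Finset.mem_coe, hF, Finset.mem_biUnion, hDd,
      Finset.mem_filter, Finset.mem_product, Finset.mem_image, Finset.mem_range]
    constructor
    · rintro ⟨⟨c₁, hc₁, u, rfl⟩, ⟨c₂, hc₂, v, rfl⟩, hsum⟩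
      have hsum' : (c₁ + c₂) * m + 8 * (u + v) = c * m + 8 * t := by
        rw [← hsum]; ring
      have hs : (c₁ + c₂) % 8 = c % 8 :=
        partner_arith m q (c₁+c₂) c (u+v) t hmq
          (by have := hbound c₁ hc₁; have := hbound c₂ hc₂; omega) (hbound c hc) hsum'
      obtain ⟨h1, h2, h3⟩ := haux1 c hc c₁ hc₁ c₂ hc₂ hs
      have hδ : c₁ + c₂ = c + 8 * ((c₁ + c₂ - c) / 8) := by omega
      have e1 : c * m + 8 * ((c₁ + c₂ - c) / 8 * m) + 8 * (u + v) = c * m + 8 * t := by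
        calc c * m + 8 * ((c₁ + c₂ - c) / 8 * m) + 8 * (u + v)
            = (c + 8 * ((c₁ + c₂ - c) / 8)) * m + 8 * (u + v) := by ring
          _ = (c₁ + c₂) * m + 8 * (u + v) := by rw [← hδ]
          _ = c * m + 8 * t := hsum'
      refine ⟨(c₁, c₂), ⟨⟨hc₁, hc₂⟩, hs⟩, u, ?_, ?_⟩ <;> dsimp only
      · omega
      · have : t - (c₁ + c₂ - c) / 8 * m - u = v := by omega
        rw [this]
    · rintro ⟨⟨c₁, c₂⟩, ⟨⟨hc₁, hc₂⟩, hs⟩, u, hu, heq⟩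
      obtain ⟨h1, h2, h3⟩ := haux1 c hc c₁ hc₁ c₂ hc₂ hs
      have hδ : c₁ + c₂ = c + 8 * ((c₁ + c₂ - c) / 8) := by omega
      dsimp only at hu heq
      simp only [Prod.mk.injEq] at heq
      obtain ⟨ha, hb⟩ := heq
      subst ha; subst hb
      refine ⟨⟨c₁, hc₁, u, rfl⟩, ⟨c₂, hc₂, _, rfl⟩, ?_⟩
      have e1 : c₁ * m + c₂ * m = c * m + 8 * ((c₁ + c₂ - c) / 8 * m) := by
        calc c₁ * m + c₂ * m = (c₁ + c₂) * m := by ring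
          _ = (c + 8 * ((c₁ + c₂ - c) / 8)) * m := by rw [← hδ]
          _ = c * m + 8 * ((c₁ + c₂ - c) / 8 * m) := by ring
      omega
  rw [hset, Set.ncard_coe_finset]
  have aux4 : ∀ cc ∈ Cset, ∀ c₁ ∈ Cset, ∀ c₂ ∈ Cset, ∀ c₂' ∈ Cset,
      (c₁ + c₂) % 8 = cc % 8 → (c₁ + c₂') % 8 = cc % 8 → c₂ = c₂' := by decide
  have aux5 : ∀ x ∈ Cset, ∀ y ∈ Cset, x % 8 = y % 8 → x = y := by decide
  have hdisj : ∀ p ∈ Dd, ∀ p' ∈ Dd, p ≠ p' →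
      Disjoint ((Finset.range (t + 1 - (p.1 + p.2 - c) / 8 * m)).image
        (fun u => (p.1 * m + 8 * u, p.2 * m + 8 * (t - (p.1 + p.2 - c) / 8 * m - u))))
        ((Finset.range (t + 1 - (p'.1 + p'.2 - c) / 8 * m)).image
        (fun u => (p'.1 * m + 8 * u, p'.2 * m + 8 * (t - (p'.1 + p'.2 - c) / 8 * m - u)))) := by
    rintro ⟨c₁, c₂⟩ hp ⟨c₁', c₂'⟩ hp' hne
    rw [hDd, Finset.mem_filter, Finset.mem_product] at hp hp'
    obtain ⟨⟨hc₁, hc₂⟩, hs⟩ := hp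
    obtain ⟨⟨hc₁', hc₂'⟩, hs'⟩ := hp'
    dsimp only at hs hs' ⊢
    rw [Finset.disjoint_left]
    rintro ⟨a, b⟩ hmem hmem'
    simp only [Finset.mem_image, Finset.mem_range, Prod.mk.injEq] at hmem hmem'
    obtain ⟨u, hu, ha, hb⟩ := hmem
    obtain ⟨u', hu', ha', hb'⟩ := hmem'
    have h8 : c₁ % 8 = c₁' % 8 := by
      refine partner_arith m q c₁ c₁' u u' hmq ?_ ?_ (ha.trans ha'.symm)
      · have := hbound c₁ hc₁; omega
      · exact hbound c₁' hc₁'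
    have he1 : c₁ = c₁' := aux5 _ hc₁ _ hc₁' h8
    subst he1
    have he2 : c₂ = c₂' := aux4 c hc c₁ hc₁ c₂ hc₂ c₂' hc₂' hs hs'
    subst he2
    exact hne rfl
  rw [hF, Finset.card_biUnion hdisj]
  have hcards : ∀ p ∈ Dd,
      ((Finset.range (t + 1 - (p.1 + p.2 - c) / 8 * m)).image
        (fun u => (p.1 * m + 8 * u, p.2 * m + 8 * (t - (p.1 + p.2 - c) / 8 * m - u)))).card
      = t + 1 - (p.1 + p.2 - c) / 8 * m := by
    intro p hp
    rw [Finset.card_image_of_injective _ ?_, Finset.card_range]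
    intro u v huv
    simp only [Prod.mk.injEq] at huv
    omega
  rw [Finset.sum_congr rfl hcards, hDd]
  exact sum_eval m t c hc
lemma m_mod (n m : ℕ) (hn : 5 ≤ n) (hodd : Odd n) (hm : 3 * m = 2 ^ n + 1) :
    m % 8 = 3 ∧ 11 ≤ m := by
  obtain ⟨a, rfl⟩ := hodd
  have h2 : 2 ^ (2 * a + 1) = 2 * 4 ^ a := by
    rw [pow_succ, two_mul, pow_add, show (4:ℕ) = 2*2 from rfl, mul_pow]; ring
  have h4 : ∀ b, 1 ≤ b → 4 ^ b % 12 = 4 := by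
    intro b hb
    induction b with
    | zero => omega
    | succ c ih =>
      rcases Nat.eq_or_lt_of_le hb with h | h
      · simp [← h]
      · have h5 := ih (by omega)
        have : 4 ^ (c+1) = 4 * (12 * (4^c/12) + 4^c % 12) := by
          rw [Nat.div_add_mod]; ring
        omega
  have h3 := h4 a (by omega)
  have h6 : 32 ≤ 2 ^ (2 * a + 1) := by
    calc (32:ℕ) = 2^5 := by norm_num
    _ ≤ 2 ^ (2*a+1) := Nat.pow_le_pow_right (by norm_num) hn
  have hd : 4 ^ a = 12 * (4^a/12) + 4 := by
    conv_lhs => rw [← Nat.div_add_mod (4^a) 12, h3]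
  rw [h2, hd] at hm h6
  omega


lemma H_eq (n m : ℕ) (hm : 3 * m = 2 ^ n + 1) (H : Set ℕ)
    (hH : H = {x | ∃ i ≤ 1, ∃ j ≤ 3, ∃ k : ℕ, x = i * (2 ^ n + 1) + 2 * j * m + 8 * k}) :
    H = {x | ∃ c ∈ Cset, ∃ t, x = c * m + 8 * t} := by
  subst hH; ext x
  simp only [Set.mem_setOf_eq]
  constructor
  · rintro ⟨i, hi, j, hj, t, rfl⟩
    refine ⟨3*i+2*j, ?_, t, by rw [← hm]; ring⟩
    interval_cases i <;> interval_cases j <;> decide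
  · rintro ⟨c, hc, t, rfl⟩
    fin_cases hc
    · exact ⟨0, by norm_num, 0, by norm_num, t, by rw [← hm]; ring⟩
    · exact ⟨0, by norm_num, 1, by norm_num, t, by rw [← hm]; ring⟩
    · exact ⟨1, by norm_num, 0, by norm_num, t, by rw [← hm]; ring⟩
    · exact ⟨0, by norm_num, 2, by norm_num, t, by rw [← hm]; ring⟩
    · exact ⟨1, by norm_num, 1, by norm_num, t, by rw [← hm]; ring⟩
    · exact ⟨0, by norm_num, 3, by norm_num, t, by rw [← hm]; ring⟩
    · exact ⟨1, by norm_num, 2, by norm_num, t, by rw [← hm]; ring⟩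
    · exact ⟨1, by norm_num, 3, by norm_num, t, by rw [← hm]; ring⟩

/-- The Feng–Rao designed minimum distance `d_ORD(C_ℓ(P_∞))` for `ρ_{ℓ+1} = (1,1,k)`,
`k < m`, on `GGS(2,n)`. -/
theorem stmt_5 (n m : ℕ) (hn : 5 ≤ n) (hodd : Odd n) (hm : 3 * m = 2 ^ n + 1)
    (H : Set ℕ)
    (hH : H = {x | ∃ i ≤ 1, ∃ j ≤ 3, ∃ k : ℕ, x = i * (2 ^ n + 1) + 2 * j * m + 8 * k})
    (ν : ℕ → ℕ)
    (hν : ∀ x, ν x = {p : ℕ × ℕ | p.1 ∈ H ∧ p.2 ∈ H ∧ p.1 + p.2 = x}.ncard)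
    (D : ℕ → ℕ)
    (hD : ∀ x, D x = sInf (ν '' {y : ℕ | y ∈ H ∧ x ≤ y}))
    (k : ℕ) (hk : k < m) :
    (k = 0 → D (5 * m + 8 * k) = 4) ∧
    (1 ≤ k ∧ k ≤ m / 8 → D (5 * m + 8 * k) = 5) ∧
    ((m : ℚ) / 8 < (k : ℚ) ∧ k ≤ m / 4 → D (5 * m + 8 * k) = 6) ∧
    ((m : ℚ) / 4 < (k : ℚ) ∧ k ≤ m / 2 → D (5 * m + 8 * k) = 8) ∧
    (⌈(m : ℚ) / 2⌉ ≤ (k : ℤ) ∧ k ≤ 3 * m / 4 - 2 →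
      (D (5 * m + 8 * k) : ℤ) = 8 * (⌈(k : ℚ) - m / 2⌉ + 1)) ∧
    (3 * m / 4 - 1 ≤ k ∧ k ≤ m - 2 →
      (D (5 * m + 8 * k) : ℤ)
        = 2 * (⌈(m : ℚ) / 4 + k⌉ + 1) + 6 * (⌈(m : ℚ) / 4 + k⌉ - m + 1)) ∧
    (k = m - 1 → D (5 * m + 8 * k) = 4 * m) := by
  obtain ⟨hm8, hm11⟩ := m_mod n m hn hodd hm
  obtain ⟨q, hq⟩ : ∃ q, m = 8 * q + 3 := ⟨m / 8, by omega⟩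
  have hq1 : 1 ≤ q := by omega
  have hHeq := H_eq n m hm H hH
  have hval : ∀ c ∈ Cset, ∀ t, ν (c * m + 8 * t)
      = Af c * (t + 1) + Bf c * (t + 1 - m) + Cf c * (t + 1 - 2 * m) := by
    intro c hc t
    rw [hν, hHeq]
    exact nu_formula m q hq c hc t
  have hmemH : ∀ c ∈ Cset, ∀ t : ℕ, c * m + 8 * t ∈ H := by
    intro c hc t; rw [hHeq]; exact ⟨c, hc, t, rfl⟩
  have key : ∀ T : ℕ, ∀ c ∈ Cset, ∀ t : ℕ,
      5 * m + 8 * k ≤ c * m + 8 * t →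
      Af c * (t + 1) + Bf c * (t + 1 - m) + Cf c * (t + 1 - 2 * m) = T →
      (∀ c' ∈ Cset, ∀ t' : ℕ, 5 * m + 8 * k ≤ c' * m + 8 * t' →
        T ≤ Af c' * (t' + 1) + Bf c' * (t' + 1 - m) + Cf c' * (t' + 1 - 2 * m)) →
      D (5 * m + 8 * k) = T := by
    intro T c hc t hge hT hlb
    rw [hD]
    apply le_antisymm
    · exact Nat.sInf_le ⟨c * m + 8 * t, ⟨hmemH c hc t, hge⟩, by rw [hval c hc t, hT]⟩
    · apply le_csInf
      · exact ⟨ν (c * m + 8 * t), ⟨c * m + 8 * t, ⟨hmemH c hc t, hge⟩, rfl⟩⟩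
      · rintro _ ⟨y, ⟨hy, hxy⟩, rfl⟩
        rw [hHeq] at hy
        obtain ⟨c', hc', t', rfl⟩ := hy
        rw [hval c' hc' t']
        exact hlb c' hc' t' hxy
  refine ⟨?_, ?_, ?_, ?_, ?_, ?_, ?_⟩
  · -- k = 0
    intro hk0; subst hk0
    refine key 4 5 (by decide) 0 (by omega) (by simp [Af, Bf, Cf] <;> omega) ?_
    intro c' hc' t' hge
    fin_cases hc' <;> simp [Af, Bf, Cf] at hge ⊢ <;> omega
  · -- 1 ≤ k ≤ m/8
    rintro ⟨hk1, hk2⟩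
    refine key 5 6 (by decide) 0 (by omega) (by simp [Af, Bf, Cf] <;> omega) ?_
    intro c' hc' t' hge
    fin_cases hc' <;> simp [Af, Bf, Cf] at hge ⊢ <;> omega
  · -- m/8 < k ≤ m/4
    rintro ⟨h3a, h3b⟩
    have h3a' : m < k * 8 := by
      have : (m : ℚ) < k * 8 := (div_lt_iff₀ (by norm_num)).mp h3a
      exact_mod_cast this
    refine key 6 7 (by decide) 0 (by omega) (by simp [Af, Bf, Cf] <;> omega) ?_
    intro c' hc' t' hge
    fin_cases hc' <;> simp [Af, Bf, Cf] at hge ⊢ <;> omega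
  · -- m/4 < k ≤ m/2
    rintro ⟨h4a, h4b⟩
    have h4a' : m < k * 4 := by
      have : (m : ℚ) < k * 4 := (div_lt_iff₀ (by norm_num)).mp h4a
      exact_mod_cast this
    refine key 8 9 (by decide) 0 (by omega) (by simp [Af, Bf, Cf] <;> omega) ?_
    intro c' hc' t' hge
    fin_cases hc' <;> simp [Af, Bf, Cf] at hge ⊢ <;> omega
  · -- ⌈m/2⌉ ≤ k ≤ 3m/4 − 2
    rintro ⟨h5a, h5b⟩
    have hmQ : (m : ℚ) = 8 * q + 3 := by exact_mod_cast congrArg (Nat.cast : ℕ → ℚ) hq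
    have hc1 : ⌈(m : ℚ) / 2⌉ = (4 * q + 2 : ℤ) := by
      rw [Int.ceil_eq_iff, hmQ]
      push_cast
      constructor <;> linarith
    have h5a' : 4 * q + 2 ≤ k := by
      rw [hc1] at h5a; exact_mod_cast h5a
    have hc2 : ⌈(k : ℚ) - m / 2⌉ = (k : ℤ) - 4 * q - 1 := by
      rw [Int.ceil_eq_iff, hmQ]
      push_cast
      constructor <;> linarith
    have hDval : D (5 * m + 8 * k) = 8 * (k - 4 * q) := by
      refine key (8 * (k - 4 * q)) 9 (by decide) (k - (4 * q + 1)) (by omega)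
        (by simp [Af, Bf, Cf] <;> omega) ?_
      intro c' hc' t' hge
      fin_cases hc' <;> simp [Af, Bf, Cf] at hge ⊢ <;> omega
    rw [hDval, hc2]
    omega
  · -- 3m/4 − 1 ≤ k ≤ m − 2
    rintro ⟨h6a, h6b⟩
    have hmQ : (m : ℚ) = 8 * q + 3 := by exact_mod_cast congrArg (Nat.cast : ℕ → ℚ) hq
    have hc3 : ⌈(m : ℚ) / 4 + k⌉ = (2 * q + 1 + k : ℤ) := by
      rw [Int.ceil_eq_iff, hmQ]
      push_cast
      constructor <;> linarith
    have hDval : D (5 * m + 8 * k) = 2 * (k + 2 * q + 2) + 6 * (k - (6 * q + 1)) := by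
      refine key _ 3 (by decide) (k + 2 * q + 1) (by omega)
        (by simp [Af, Bf, Cf] <;> omega) ?_
      intro c' hc' t' hge
      fin_cases hc' <;> simp [Af, Bf, Cf] at hge ⊢ <;> omega
    rw [hDval, hc3]
    omega
  · -- k = m − 1
    intro hk7
    refine key (4 * m) 5 (by decide) k (by omega) (by simp [Af, Bf, Cf] <;> omega) ?_
    intro c' hc' t' hge
    fin_cases hc' <;> simp [Af, Bf, Cf] at hge ⊢ <;> omega
end

section
/- Let n ≥ 5 be odd, m = (2^n+1)/3, and let k ∈ ℕ with 1 ≤ k < m. Set x = 8k (the element (0,0,k) of H). Then D(x) = min{ ν(y) : y ∈ H, y ≥ x } equals: 2 if k ≤ ⌊3m/8⌋; 3 if ⌈3m/8⌉ ≤ k ≤ ⌊m/2⌋; 4 if ⌈m/2⌉ ≤ k ≤ ⌊5m/8⌋; 5 if ⌈5m/8⌉ ≤ k ≤ ⌊3m/4⌋; 6 if ⌈3m/4⌉ ≤ k ≤ ⌊7m/8⌋; and 8 if ⌈7m/8⌉ ≤ k ≤ m−1. -/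
variable {m : ℕ} {H : Set ℕ} {ν : ℕ → ℕ}

lemma memH' (hH : H = {x | ∃ i ≤ 1, ∃ j ≤ 3, ∃ a : ℕ, x = i * (3*m) + 2*j*m + 8*a})
    (c a x : ℕ)
    (hc : c = 0 ∨ c = 2 ∨ c = 3 ∨ c = 4 ∨ c = 5 ∨ c = 6 ∨ c = 7 ∨ c = 9)
    (hx : x = c * m + 8 * a) : x ∈ H := by
  rw [hH]
  rcases hc with rfl|rfl|rfl|rfl|rfl|rfl|rfl|rfl
  · exact ⟨0, by norm_num, 0, by norm_num, a, by omega⟩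
  · exact ⟨0, by norm_num, 1, by norm_num, a, by omega⟩
  · exact ⟨1, by norm_num, 0, by norm_num, a, by omega⟩
  · exact ⟨0, by norm_num, 2, by norm_num, a, by omega⟩
  · exact ⟨1, by norm_num, 1, by norm_num, a, by omega⟩
  · exact ⟨0, by norm_num, 3, by norm_num, a, by omega⟩
  · exact ⟨1, by norm_num, 2, by norm_num, a, by omega⟩
  · exact ⟨1, by norm_num, 3, by norm_num, a, by omega⟩

lemma nuA (hν : ∀ x, ν x = {p : ℕ × ℕ | p.1 ∈ H ∧ p.2 ∈ H ∧ p.1 + p.2 = x}.ncard)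
    (y : ℕ) : ν y = {a | a ∈ H ∧ a ≤ y ∧ y - a ∈ H}.ncard := by
  rw [hν]
  have himg : {p : ℕ × ℕ | p.1 ∈ H ∧ p.2 ∈ H ∧ p.1 + p.2 = y}
      = (fun a => (a, y - a)) '' {a | a ∈ H ∧ a ≤ y ∧ y - a ∈ H} := by
    ext ⟨p1, p2⟩
    simp only [Set.mem_setOf_eq, Set.mem_image, Prod.mk.injEq]
    constructor
    · rintro ⟨h1, h2, h3⟩
      exact ⟨p1, ⟨h1, by omega, by rw [show y - p1 = p2 by omega]; exact h2⟩, rfl, by omega⟩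
    · rintro ⟨a, ⟨h1, h2, h3⟩, rfl, rfl⟩
      exact ⟨h1, h3, by omega⟩
  rw [himg, Set.ncard_image_of_injective _ (fun a b h => (Prod.mk.injEq _ _ _ _ ▸ h).1)]

lemma Afin (y : ℕ) : ({a | a ∈ H ∧ a ≤ y ∧ y - a ∈ H}).Finite :=
  (Set.finite_Iic y).subset (fun a ha => ha.2.1)

lemma lb_core (hν : ∀ x, ν x = {p : ℕ × ℕ | p.1 ∈ H ∧ p.2 ∈ H ∧ p.1 + p.2 = x}.ncard)
    (y d : ℕ) (F : Finset ℕ)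
    (hF : ∀ a ∈ F, a ∈ H ∧ a ≤ y ∧ y - a ∈ H) (hd : d ≤ F.card) : d ≤ ν y := by
  rw [nuA hν]
  calc d ≤ F.card := hd
    _ = (↑F : Set ℕ).ncard := (Set.ncard_coe_finset F).symm
    _ ≤ _ := Set.ncard_le_ncard (fun a ha => hF a (by exact_mod_cast ha)) (Afin y)

lemma lbGen (hν : ∀ x, ν x = {p : ℕ × ℕ | p.1 ∈ H ∧ p.2 ∈ H ∧ p.1 + p.2 = x}.ncard)
    (hm8 : m % 8 = 3)
    (y t d : ℕ) (us : Finset ℕ)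
    (hus : ∀ u ∈ us, u = 0 ∨ u = 2 ∨ u = 3 ∨ u = 4 ∨ u = 5 ∨ u = 6 ∨ u = 7 ∨ u = 9)
    (hy : ∀ u ∈ us, ∀ a ≤ t, u*m + 8*a ∈ H ∧ u*m + 8*a ≤ y ∧ y - (u*m + 8*a) ∈ H)
    (hd : d ≤ us.card * (t+1)) :
    d ≤ ν y := by
  classical
  set f : ℕ × ℕ → ℕ := fun p => p.1 * m + 8 * p.2 with hf
  have hinj : Set.InjOn f ↑(us ×ˢ Finset.range (t+1)) := by
    rintro ⟨u, a⟩ h ⟨u', a'⟩ h' heq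
    simp only [Finset.coe_product, Set.mem_prod, Finset.mem_coe, Finset.coe_range,
      Set.mem_Iio] at h h'
    have hu := hus _ h.1
    have hu' := hus _ h'.1
    simp only [hf] at heq
    have : u = u' ∧ a = a' := by
      rcases hu with rfl|rfl|rfl|rfl|rfl|rfl|rfl|rfl <;>
        rcases hu' with rfl|rfl|rfl|rfl|rfl|rfl|rfl|rfl <;> omega
    simp [this.1, this.2]
  have hcard : (Finset.image f (us ×ˢ Finset.range (t+1))).card = us.card * (t+1) := by
    rw [Finset.card_image_of_injOn hinj, Finset.card_product, Finset.card_range]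
  refine lb_core hν y d (Finset.image f (us ×ˢ Finset.range (t+1))) ?_ (by omega)
  intro x hx
  simp only [Finset.mem_image, Finset.mem_product, Finset.mem_range] at hx
  obtain ⟨⟨u, a⟩, ⟨h1, h2⟩, rfl⟩ := hx
  exact hy u h1 a (by omega)



lemma lbC0 (hH : H = {x | ∃ i ≤ 1, ∃ j ≤ 3, ∃ a : ℕ, x = i * (3*m) + 2*j*m + 8*a})
    (hν : ∀ x, ν x = {p : ℕ × ℕ | p.1 ∈ H ∧ p.2 ∈ H ∧ p.1 + p.2 = x}.ncard)
    (hm8 : m % 8 = 3)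
    (t d y : ℕ) (hy : y = 0*m + 8*t) (hd : d ≤ 1*(t+1)) : d ≤ ν y := by
  subst hy
  have hc : (({0} : Finset ℕ)).card = 1 := by decide
  refine lbGen hν hm8 _ t d {0} (by decide) ?_ (by rw [hc]; exact hd)
  intro u hu a ha
  fin_cases hu
  · exact ⟨memH' hH 0 a _ (by norm_num) (by omega), by omega,
      memH' hH 0 (t-a) _ (by norm_num) (by omega)⟩

lemma lbC2 (hH : H = {x | ∃ i ≤ 1, ∃ j ≤ 3, ∃ a : ℕ, x = i * (3*m) + 2*j*m + 8*a})
    (hν : ∀ x, ν x = {p : ℕ × ℕ | p.1 ∈ H ∧ p.2 ∈ H ∧ p.1 + p.2 = x}.ncard)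
    (hm8 : m % 8 = 3)
    (t d y : ℕ) (hy : y = 2*m + 8*t) (hd : d ≤ 2*(t+1)) : d ≤ ν y := by
  subst hy
  have hc : (({0,2} : Finset ℕ)).card = 2 := by decide
  refine lbGen hν hm8 _ t d {0,2} (by decide) ?_ (by rw [hc]; exact hd)
  intro u hu a ha
  fin_cases hu
  · exact ⟨memH' hH 0 a _ (by norm_num) (by omega), by omega,
      memH' hH 2 (t-a) _ (by norm_num) (by omega)⟩
  · exact ⟨memH' hH 2 a _ (by norm_num) (by omega), by omega,
      memH' hH 0 (t-a) _ (by norm_num) (by omega)⟩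

lemma lbC3 (hH : H = {x | ∃ i ≤ 1, ∃ j ≤ 3, ∃ a : ℕ, x = i * (3*m) + 2*j*m + 8*a})
    (hν : ∀ x, ν x = {p : ℕ × ℕ | p.1 ∈ H ∧ p.2 ∈ H ∧ p.1 + p.2 = x}.ncard)
    (hm8 : m % 8 = 3)
    (t d y : ℕ) (hy : y = 3*m + 8*t) (hd : d ≤ 2*(t+1)) : d ≤ ν y := by
  subst hy
  have hc : (({0,3} : Finset ℕ)).card = 2 := by decide
  refine lbGen hν hm8 _ t d {0,3} (by decide) ?_ (by rw [hc]; exact hd)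
  intro u hu a ha
  fin_cases hu
  · exact ⟨memH' hH 0 a _ (by norm_num) (by omega), by omega,
      memH' hH 3 (t-a) _ (by norm_num) (by omega)⟩
  · exact ⟨memH' hH 3 a _ (by norm_num) (by omega), by omega,
      memH' hH 0 (t-a) _ (by norm_num) (by omega)⟩

lemma lbC4 (hH : H = {x | ∃ i ≤ 1, ∃ j ≤ 3, ∃ a : ℕ, x = i * (3*m) + 2*j*m + 8*a})
    (hν : ∀ x, ν x = {p : ℕ × ℕ | p.1 ∈ H ∧ p.2 ∈ H ∧ p.1 + p.2 = x}.ncard)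
    (hm8 : m % 8 = 3)
    (t d y : ℕ) (hy : y = 4*m + 8*t) (hd : d ≤ 3*(t+1)) : d ≤ ν y := by
  subst hy
  have hc : (({0,2,4} : Finset ℕ)).card = 3 := by decide
  refine lbGen hν hm8 _ t d {0,2,4} (by decide) ?_ (by rw [hc]; exact hd)
  intro u hu a ha
  fin_cases hu
  · exact ⟨memH' hH 0 a _ (by norm_num) (by omega), by omega,
      memH' hH 4 (t-a) _ (by norm_num) (by omega)⟩
  · exact ⟨memH' hH 2 a _ (by norm_num) (by omega), by omega,
      memH' hH 2 (t-a) _ (by norm_num) (by omega)⟩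
  · exact ⟨memH' hH 4 a _ (by norm_num) (by omega), by omega,
      memH' hH 0 (t-a) _ (by norm_num) (by omega)⟩

lemma lbC5 (hH : H = {x | ∃ i ≤ 1, ∃ j ≤ 3, ∃ a : ℕ, x = i * (3*m) + 2*j*m + 8*a})
    (hν : ∀ x, ν x = {p : ℕ × ℕ | p.1 ∈ H ∧ p.2 ∈ H ∧ p.1 + p.2 = x}.ncard)
    (hm8 : m % 8 = 3)
    (t d y : ℕ) (hy : y = 5*m + 8*t) (hd : d ≤ 4*(t+1)) : d ≤ ν y := by
  subst hy
  have hc : (({0,2,3,5} : Finset ℕ)).card = 4 := by decide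
  refine lbGen hν hm8 _ t d {0,2,3,5} (by decide) ?_ (by rw [hc]; exact hd)
  intro u hu a ha
  fin_cases hu
  · exact ⟨memH' hH 0 a _ (by norm_num) (by omega), by omega,
      memH' hH 5 (t-a) _ (by norm_num) (by omega)⟩
  · exact ⟨memH' hH 2 a _ (by norm_num) (by omega), by omega,
      memH' hH 3 (t-a) _ (by norm_num) (by omega)⟩
  · exact ⟨memH' hH 3 a _ (by norm_num) (by omega), by omega,
      memH' hH 2 (t-a) _ (by norm_num) (by omega)⟩
  · exact ⟨memH' hH 5 a _ (by norm_num) (by omega), by omega,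
      memH' hH 0 (t-a) _ (by norm_num) (by omega)⟩

lemma lbC6 (hH : H = {x | ∃ i ≤ 1, ∃ j ≤ 3, ∃ a : ℕ, x = i * (3*m) + 2*j*m + 8*a})
    (hν : ∀ x, ν x = {p : ℕ × ℕ | p.1 ∈ H ∧ p.2 ∈ H ∧ p.1 + p.2 = x}.ncard)
    (hm8 : m % 8 = 3)
    (t d y : ℕ) (hy : y = 6*m + 8*t) (hd : d ≤ 5*(t+1)) : d ≤ ν y := by
  subst hy
  have hc : (({0,2,3,4,6} : Finset ℕ)).card = 5 := by decide
  refine lbGen hν hm8 _ t d {0,2,3,4,6} (by decide) ?_ (by rw [hc]; exact hd)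
  intro u hu a ha
  fin_cases hu
  · exact ⟨memH' hH 0 a _ (by norm_num) (by omega), by omega,
      memH' hH 6 (t-a) _ (by norm_num) (by omega)⟩
  · exact ⟨memH' hH 2 a _ (by norm_num) (by omega), by omega,
      memH' hH 4 (t-a) _ (by norm_num) (by omega)⟩
  · exact ⟨memH' hH 3 a _ (by norm_num) (by omega), by omega,
      memH' hH 3 (t-a) _ (by norm_num) (by omega)⟩
  · exact ⟨memH' hH 4 a _ (by norm_num) (by omega), by omega,
      memH' hH 2 (t-a) _ (by norm_num) (by omega)⟩
  · exact ⟨memH' hH 6 a _ (by norm_num) (by omega), by omega,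
      memH' hH 0 (t-a) _ (by norm_num) (by omega)⟩

lemma lbC7 (hH : H = {x | ∃ i ≤ 1, ∃ j ≤ 3, ∃ a : ℕ, x = i * (3*m) + 2*j*m + 8*a})
    (hν : ∀ x, ν x = {p : ℕ × ℕ | p.1 ∈ H ∧ p.2 ∈ H ∧ p.1 + p.2 = x}.ncard)
    (hm8 : m % 8 = 3)
    (t d y : ℕ) (hy : y = 7*m + 8*t) (hd : d ≤ 6*(t+1)) : d ≤ ν y := by
  subst hy
  have hc : (({0,2,3,4,5,7} : Finset ℕ)).card = 6 := by decide
  refine lbGen hν hm8 _ t d {0,2,3,4,5,7} (by decide) ?_ (by rw [hc]; exact hd)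
  intro u hu a ha
  fin_cases hu
  · exact ⟨memH' hH 0 a _ (by norm_num) (by omega), by omega,
      memH' hH 7 (t-a) _ (by norm_num) (by omega)⟩
  · exact ⟨memH' hH 2 a _ (by norm_num) (by omega), by omega,
      memH' hH 5 (t-a) _ (by norm_num) (by omega)⟩
  · exact ⟨memH' hH 3 a _ (by norm_num) (by omega), by omega,
      memH' hH 4 (t-a) _ (by norm_num) (by omega)⟩
  · exact ⟨memH' hH 4 a _ (by norm_num) (by omega), by omega,
      memH' hH 3 (t-a) _ (by norm_num) (by omega)⟩
  · exact ⟨memH' hH 5 a _ (by norm_num) (by omega), by omega,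
      memH' hH 2 (t-a) _ (by norm_num) (by omega)⟩
  · exact ⟨memH' hH 7 a _ (by norm_num) (by omega), by omega,
      memH' hH 0 (t-a) _ (by norm_num) (by omega)⟩

lemma lbC9 (hH : H = {x | ∃ i ≤ 1, ∃ j ≤ 3, ∃ a : ℕ, x = i * (3*m) + 2*j*m + 8*a})
    (hν : ∀ x, ν x = {p : ℕ × ℕ | p.1 ∈ H ∧ p.2 ∈ H ∧ p.1 + p.2 = x}.ncard)
    (hm8 : m % 8 = 3)
    (t d y : ℕ) (hy : y = 9*m + 8*t) (hd : d ≤ 8*(t+1)) : d ≤ ν y := by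
  subst hy
  have hc : (({0,2,3,4,5,6,7,9} : Finset ℕ)).card = 8 := by decide
  refine lbGen hν hm8 _ t d {0,2,3,4,5,6,7,9} (by decide) ?_ (by rw [hc]; exact hd)
  intro u hu a ha
  fin_cases hu
  · exact ⟨memH' hH 0 a _ (by norm_num) (by omega), by omega,
      memH' hH 9 (t-a) _ (by norm_num) (by omega)⟩
  · exact ⟨memH' hH 2 a _ (by norm_num) (by omega), by omega,
      memH' hH 7 (t-a) _ (by norm_num) (by omega)⟩
  · exact ⟨memH' hH 3 a _ (by norm_num) (by omega), by omega,
      memH' hH 6 (t-a) _ (by norm_num) (by omega)⟩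
  · exact ⟨memH' hH 4 a _ (by norm_num) (by omega), by omega,
      memH' hH 5 (t-a) _ (by norm_num) (by omega)⟩
  · exact ⟨memH' hH 5 a _ (by norm_num) (by omega), by omega,
      memH' hH 4 (t-a) _ (by norm_num) (by omega)⟩
  · exact ⟨memH' hH 6 a _ (by norm_num) (by omega), by omega,
      memH' hH 3 (t-a) _ (by norm_num) (by omega)⟩
  · exact ⟨memH' hH 7 a _ (by norm_num) (by omega), by omega,
      memH' hH 2 (t-a) _ (by norm_num) (by omega)⟩
  · exact ⟨memH' hH 9 a _ (by norm_num) (by omega), by omega,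
      memH' hH 0 (t-a) _ (by norm_num) (by omega)⟩

set_option maxHeartbeats 1600000 in
lemma W3 (hH : H = {x | ∃ i ≤ 1, ∃ j ≤ 3, ∃ a : ℕ, x = i * (3*m) + 2*j*m + 8*a})
    (hν : ∀ x, ν x = {p : ℕ × ℕ | p.1 ∈ H ∧ p.2 ∈ H ∧ p.1 + p.2 = x}.ncard)
    (hm8 : m % 8 = 3) (hm11 : 11 ≤ m) : ν (3*m) = 2 := by
  rw [nuA hν]
  have hA : {a | a ∈ H ∧ a ≤ 3*m ∧ 3*m - a ∈ H} = ({0, 3*m} : Set ℕ) := by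
    ext a
    simp only [Set.mem_setOf_eq, Set.mem_insert_iff, Set.mem_singleton_iff]
    constructor
    · rintro ⟨ha, hle, hb⟩
      rw [hH] at ha hb
      obtain ⟨i1, hi1, j1, hj1, a1, rfl⟩ := ha
      obtain ⟨i2, hi2, j2, hj2, a2, heq⟩ := hb
      interval_cases i1 <;> interval_cases j1 <;> interval_cases i2 <;> interval_cases j2 <;> omega
    · rintro (rfl|rfl)
      · exact ⟨memH' hH 0 0 _ (by norm_num) (by omega), by omega,
          memH' hH 3 0 _ (by norm_num) (by omega)⟩
      · exact ⟨memH' hH 3 0 _ (by norm_num) (by omega), by omega,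
          memH' hH 0 0 _ (by norm_num) (by omega)⟩
  rw [hA]
  have himg : ({0, 3*m} : Set ℕ) = (fun u => u * m) '' ↑(({0,3} : Finset ℕ)) := by
    simp [Set.image_insert_eq]
  rw [himg, Set.ncard_image_of_injective _
    (fun a b h => Nat.eq_of_mul_eq_mul_right (by omega) h), Set.ncard_coe_finset]
  decide

set_option maxHeartbeats 1600000 in
lemma W4 (hH : H = {x | ∃ i ≤ 1, ∃ j ≤ 3, ∃ a : ℕ, x = i * (3*m) + 2*j*m + 8*a})
    (hν : ∀ x, ν x = {p : ℕ × ℕ | p.1 ∈ H ∧ p.2 ∈ H ∧ p.1 + p.2 = x}.ncard)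
    (hm8 : m % 8 = 3) (hm11 : 11 ≤ m) : ν (4*m) = 3 := by
  rw [nuA hν]
  have hA : {a | a ∈ H ∧ a ≤ 4*m ∧ 4*m - a ∈ H} = ({0, 2*m, 4*m} : Set ℕ) := by
    ext a
    simp only [Set.mem_setOf_eq, Set.mem_insert_iff, Set.mem_singleton_iff]
    constructor
    · rintro ⟨ha, hle, hb⟩
      rw [hH] at ha hb
      obtain ⟨i1, hi1, j1, hj1, a1, rfl⟩ := ha
      obtain ⟨i2, hi2, j2, hj2, a2, heq⟩ := hb
      interval_cases i1 <;> interval_cases j1 <;> interval_cases i2 <;> interval_cases j2 <;> omega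
    · rintro (rfl|rfl|rfl)
      · exact ⟨memH' hH 0 0 _ (by norm_num) (by omega), by omega,
          memH' hH 4 0 _ (by norm_num) (by omega)⟩
      · exact ⟨memH' hH 2 0 _ (by norm_num) (by omega), by omega,
          memH' hH 2 0 _ (by norm_num) (by omega)⟩
      · exact ⟨memH' hH 4 0 _ (by norm_num) (by omega), by omega,
          memH' hH 0 0 _ (by norm_num) (by omega)⟩
  rw [hA]
  have himg : ({0, 2*m, 4*m} : Set ℕ) = (fun u => u * m) '' ↑(({0,2,4} : Finset ℕ)) := by
    simp [Set.image_insert_eq]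
  rw [himg, Set.ncard_image_of_injective _
    (fun a b h => Nat.eq_of_mul_eq_mul_right (by omega) h), Set.ncard_coe_finset]
  decide

set_option maxHeartbeats 1600000 in
lemma W5 (hH : H = {x | ∃ i ≤ 1, ∃ j ≤ 3, ∃ a : ℕ, x = i * (3*m) + 2*j*m + 8*a})
    (hν : ∀ x, ν x = {p : ℕ × ℕ | p.1 ∈ H ∧ p.2 ∈ H ∧ p.1 + p.2 = x}.ncard)
    (hm8 : m % 8 = 3) (hm11 : 11 ≤ m) : ν (5*m) = 4 := by
  rw [nuA hν]
  have hA : {a | a ∈ H ∧ a ≤ 5*m ∧ 5*m - a ∈ H} = ({0, 2*m, 3*m, 5*m} : Set ℕ) := by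
    ext a
    simp only [Set.mem_setOf_eq, Set.mem_insert_iff, Set.mem_singleton_iff]
    constructor
    · rintro ⟨ha, hle, hb⟩
      rw [hH] at ha hb
      obtain ⟨i1, hi1, j1, hj1, a1, rfl⟩ := ha
      obtain ⟨i2, hi2, j2, hj2, a2, heq⟩ := hb
      interval_cases i1 <;> interval_cases j1 <;> interval_cases i2 <;> interval_cases j2 <;> omega
    · rintro (rfl|rfl|rfl|rfl)
      · exact ⟨memH' hH 0 0 _ (by norm_num) (by omega), by omega,
          memH' hH 5 0 _ (by norm_num) (by omega)⟩
      · exact ⟨memH' hH 2 0 _ (by norm_num) (by omega), by omega,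
          memH' hH 3 0 _ (by norm_num) (by omega)⟩
      · exact ⟨memH' hH 3 0 _ (by norm_num) (by omega), by omega,
          memH' hH 2 0 _ (by norm_num) (by omega)⟩
      · exact ⟨memH' hH 5 0 _ (by norm_num) (by omega), by omega,
          memH' hH 0 0 _ (by norm_num) (by omega)⟩
  rw [hA]
  have himg : ({0, 2*m, 3*m, 5*m} : Set ℕ) = (fun u => u * m) '' ↑(({0,2,3,5} : Finset ℕ)) := by
    simp [Set.image_insert_eq]
  rw [himg, Set.ncard_image_of_injective _
    (fun a b h => Nat.eq_of_mul_eq_mul_right (by omega) h), Set.ncard_coe_finset]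
  decide

set_option maxHeartbeats 1600000 in
lemma W6 (hH : H = {x | ∃ i ≤ 1, ∃ j ≤ 3, ∃ a : ℕ, x = i * (3*m) + 2*j*m + 8*a})
    (hν : ∀ x, ν x = {p : ℕ × ℕ | p.1 ∈ H ∧ p.2 ∈ H ∧ p.1 + p.2 = x}.ncard)
    (hm8 : m % 8 = 3) (hm11 : 11 ≤ m) : ν (6*m) = 5 := by
  rw [nuA hν]
  have hA : {a | a ∈ H ∧ a ≤ 6*m ∧ 6*m - a ∈ H} = ({0, 2*m, 3*m, 4*m, 6*m} : Set ℕ) := by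
    ext a
    simp only [Set.mem_setOf_eq, Set.mem_insert_iff, Set.mem_singleton_iff]
    constructor
    · rintro ⟨ha, hle, hb⟩
      rw [hH] at ha hb
      obtain ⟨i1, hi1, j1, hj1, a1, rfl⟩ := ha
      obtain ⟨i2, hi2, j2, hj2, a2, heq⟩ := hb
      interval_cases i1 <;> interval_cases j1 <;> interval_cases i2 <;> interval_cases j2 <;> omega
    · rintro (rfl|rfl|rfl|rfl|rfl)
      · exact ⟨memH' hH 0 0 _ (by norm_num) (by omega), by omega,
          memH' hH 6 0 _ (by norm_num) (by omega)⟩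
      · exact ⟨memH' hH 2 0 _ (by norm_num) (by omega), by omega,
          memH' hH 4 0 _ (by norm_num) (by omega)⟩
      · exact ⟨memH' hH 3 0 _ (by norm_num) (by omega), by omega,
          memH' hH 3 0 _ (by norm_num) (by omega)⟩
      · exact ⟨memH' hH 4 0 _ (by norm_num) (by omega), by omega,
          memH' hH 2 0 _ (by norm_num) (by omega)⟩
      · exact ⟨memH' hH 6 0 _ (by norm_num) (by omega), by omega,
          memH' hH 0 0 _ (by norm_num) (by omega)⟩
  rw [hA]
  have himg : ({0, 2*m, 3*m, 4*m, 6*m} : Set ℕ) = (fun u => u * m) '' ↑(({0,2,3,4,6} : Finset ℕ)) := by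
    simp [Set.image_insert_eq]
  rw [himg, Set.ncard_image_of_injective _
    (fun a b h => Nat.eq_of_mul_eq_mul_right (by omega) h), Set.ncard_coe_finset]
  decide

set_option maxHeartbeats 1600000 in
lemma W7 (hH : H = {x | ∃ i ≤ 1, ∃ j ≤ 3, ∃ a : ℕ, x = i * (3*m) + 2*j*m + 8*a})
    (hν : ∀ x, ν x = {p : ℕ × ℕ | p.1 ∈ H ∧ p.2 ∈ H ∧ p.1 + p.2 = x}.ncard)
    (hm8 : m % 8 = 3) (hm11 : 11 ≤ m) : ν (7*m) = 6 := by
  rw [nuA hν]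
  have hA : {a | a ∈ H ∧ a ≤ 7*m ∧ 7*m - a ∈ H} = ({0, 2*m, 3*m, 4*m, 5*m, 7*m} : Set ℕ) := by
    ext a
    simp only [Set.mem_setOf_eq, Set.mem_insert_iff, Set.mem_singleton_iff]
    constructor
    · rintro ⟨ha, hle, hb⟩
      rw [hH] at ha hb
      obtain ⟨i1, hi1, j1, hj1, a1, rfl⟩ := ha
      obtain ⟨i2, hi2, j2, hj2, a2, heq⟩ := hb
      interval_cases i1 <;> interval_cases j1 <;> interval_cases i2 <;> interval_cases j2 <;> omega
    · rintro (rfl|rfl|rfl|rfl|rfl|rfl)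
      · exact ⟨memH' hH 0 0 _ (by norm_num) (by omega), by omega,
          memH' hH 7 0 _ (by norm_num) (by omega)⟩
      · exact ⟨memH' hH 2 0 _ (by norm_num) (by omega), by omega,
          memH' hH 5 0 _ (by norm_num) (by omega)⟩
      · exact ⟨memH' hH 3 0 _ (by norm_num) (by omega), by omega,
          memH' hH 4 0 _ (by norm_num) (by omega)⟩
      · exact ⟨memH' hH 4 0 _ (by norm_num) (by omega), by omega,
          memH' hH 3 0 _ (by norm_num) (by omega)⟩
      · exact ⟨memH' hH 5 0 _ (by norm_num) (by omega), by omega,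
          memH' hH 2 0 _ (by norm_num) (by omega)⟩
      · exact ⟨memH' hH 7 0 _ (by norm_num) (by omega), by omega,
          memH' hH 0 0 _ (by norm_num) (by omega)⟩
  rw [hA]
  have himg : ({0, 2*m, 3*m, 4*m, 5*m, 7*m} : Set ℕ) = (fun u => u * m) '' ↑(({0,2,3,4,5,7} : Finset ℕ)) := by
    simp [Set.image_insert_eq]
  rw [himg, Set.ncard_image_of_injective _
    (fun a b h => Nat.eq_of_mul_eq_mul_right (by omega) h), Set.ncard_coe_finset]
  decide

set_option maxHeartbeats 1600000 in
lemma W9 (hH : H = {x | ∃ i ≤ 1, ∃ j ≤ 3, ∃ a : ℕ, x = i * (3*m) + 2*j*m + 8*a})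
    (hν : ∀ x, ν x = {p : ℕ × ℕ | p.1 ∈ H ∧ p.2 ∈ H ∧ p.1 + p.2 = x}.ncard)
    (hm8 : m % 8 = 3) (hm11 : 11 ≤ m) : ν (9*m) = 8 := by
  rw [nuA hν]
  have hA : {a | a ∈ H ∧ a ≤ 9*m ∧ 9*m - a ∈ H} = ({0, 2*m, 3*m, 4*m, 5*m, 6*m, 7*m, 9*m} : Set ℕ) := by
    ext a
    simp only [Set.mem_setOf_eq, Set.mem_insert_iff, Set.mem_singleton_iff]
    constructor
    · rintro ⟨ha, hle, hb⟩
      rw [hH] at ha hb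
      obtain ⟨i1, hi1, j1, hj1, a1, rfl⟩ := ha
      obtain ⟨i2, hi2, j2, hj2, a2, heq⟩ := hb
      interval_cases i1 <;> interval_cases j1 <;> interval_cases i2 <;> interval_cases j2 <;> omega
    · rintro (rfl|rfl|rfl|rfl|rfl|rfl|rfl|rfl)
      · exact ⟨memH' hH 0 0 _ (by norm_num) (by omega), by omega,
          memH' hH 9 0 _ (by norm_num) (by omega)⟩
      · exact ⟨memH' hH 2 0 _ (by norm_num) (by omega), by omega,
          memH' hH 7 0 _ (by norm_num) (by omega)⟩
      · exact ⟨memH' hH 3 0 _ (by norm_num) (by omega), by omega,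
          memH' hH 6 0 _ (by norm_num) (by omega)⟩
      · exact ⟨memH' hH 4 0 _ (by norm_num) (by omega), by omega,
          memH' hH 5 0 _ (by norm_num) (by omega)⟩
      · exact ⟨memH' hH 5 0 _ (by norm_num) (by omega), by omega,
          memH' hH 4 0 _ (by norm_num) (by omega)⟩
      · exact ⟨memH' hH 6 0 _ (by norm_num) (by omega), by omega,
          memH' hH 3 0 _ (by norm_num) (by omega)⟩
      · exact ⟨memH' hH 7 0 _ (by norm_num) (by omega), by omega,
          memH' hH 2 0 _ (by norm_num) (by omega)⟩
      · exact ⟨memH' hH 9 0 _ (by norm_num) (by omega), by omega,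
          memH' hH 0 0 _ (by norm_num) (by omega)⟩
  rw [hA]
  have himg : ({0, 2*m, 3*m, 4*m, 5*m, 6*m, 7*m, 9*m} : Set ℕ) = (fun u => u * m) '' ↑(({0,2,3,4,5,6,7,9} : Finset ℕ)) := by
    simp [Set.image_insert_eq]
  rw [himg, Set.ncard_image_of_injective _
    (fun a b h => Nat.eq_of_mul_eq_mul_right (by omega) h), Set.ncard_coe_finset]
  decide

lemma Dval {H : Set ℕ} {ν D : ℕ → ℕ}
    (hD : ∀ x, D x = sInf (ν '' {y : ℕ | y ∈ H ∧ x ≤ y}))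
    (x d yw : ℕ) (hyw : yw ∈ H) (hxy : x ≤ yw) (hw : ν yw = d)
    (hlb : ∀ y, y ∈ H → x ≤ y → d ≤ ν y) : D x = d := by
  rw [hD]
  apply le_antisymm
  · exact Nat.sInf_le ⟨yw, ⟨hyw, hxy⟩, hw⟩
  · refine le_csInf ⟨ν yw, yw, ⟨hyw, hxy⟩, rfl⟩ ?_
    rintro v ⟨y, ⟨h1, h2⟩, rfl⟩
    exact hlb y h1 h2

set_option maxHeartbeats 4000000 in
/-- The Feng–Rao designed minimum distance `d_ORD(C_ℓ(P_∞))` for `ρ_{ℓ+1} = (0,0,k)`,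
`1 ≤ k < m`, on `GGS(2,n)`. -/
theorem stmt_7 (n m : ℕ) (hn : 5 ≤ n) (hodd : Odd n) (hm : 3 * m = 2 ^ n + 1)
    (H : Set ℕ)
    (hH : H = {x | ∃ i ≤ 1, ∃ j ≤ 3, ∃ k : ℕ, x = i * (2 ^ n + 1) + 2 * j * m + 8 * k})
    (ν : ℕ → ℕ)
    (hν : ∀ x, ν x = {p : ℕ × ℕ | p.1 ∈ H ∧ p.2 ∈ H ∧ p.1 + p.2 = x}.ncard)
    (D : ℕ → ℕ)
    (hD : ∀ x, D x = sInf (ν '' {y : ℕ | y ∈ H ∧ x ≤ y}))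
    (k : ℕ) (hk1 : 1 ≤ k) (hk : k < m) :
    (k ≤ 3 * m / 8 → D (8 * k) = 2) ∧
    (⌈3 * (m : ℚ) / 8⌉ ≤ (k : ℤ) ∧ k ≤ m / 2 → D (8 * k) = 3) ∧
    (⌈(m : ℚ) / 2⌉ ≤ (k : ℤ) ∧ k ≤ 5 * m / 8 → D (8 * k) = 4) ∧
    (⌈5 * (m : ℚ) / 8⌉ ≤ (k : ℤ) ∧ k ≤ 3 * m / 4 → D (8 * k) = 5) ∧
    (⌈3 * (m : ℚ) / 4⌉ ≤ (k : ℤ) ∧ k ≤ 7 * m / 8 → D (8 * k) = 6) ∧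
    (⌈7 * (m : ℚ) / 8⌉ ≤ (k : ℤ) ∧ k ≤ m - 1 → D (8 * k) = 8) := by
  have hm11 : 11 ≤ m := by
    have h32 : (32:ℕ) ≤ 2^n := by
      calc (32:ℕ) = 2^5 := by norm_num
        _ ≤ 2^n := Nat.pow_le_pow_right (by norm_num) hn
    omega
  have hm8 : m % 8 = 3 := by
    obtain ⟨a, rfl⟩ := hodd
    have hp : ∀ b, 2 ≤ b → 2^(2*b+1) % 24 = 8 := by
      intro b hb
      induction b, hb using Nat.le_induction with
      | base => norm_num
      | succ c hc ih =>
        have h4 : 2^(2*(c+1)+1) = 2^(2*c+1) * 4 := by ring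
        set x := 2^(2*c+1)
        omega
    have h2 := hp a (by omega)
    generalize hx : 2^(2*a+1) = x at h2 hm
    omega
  rw [show (2:ℕ)^n + 1 = 3*m from hm.symm] at hH
  refine ⟨?_, ?_, ?_, ?_, ?_, ?_⟩
  · -- range 1 : D = 2
    intro hkb
    refine Dval hD (8*k) 2 (3*m) (memH' hH 3 0 _ (by norm_num) (by omega)) (by omega)
      (W3 hH hν hm8 hm11) ?_
    intro y hyH hxy
    rw [hH] at hyH
    obtain ⟨i, hi, j, hj, t, rfl⟩ := hyH
    interval_cases i <;> interval_cases j
    · exact lbC0 hH hν hm8 t 2 _ (by ring) (by omega)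
    · exact lbC2 hH hν hm8 t 2 _ (by ring) (by omega)
    · exact lbC4 hH hν hm8 t 2 _ (by ring) (by omega)
    · exact lbC6 hH hν hm8 t 2 _ (by ring) (by omega)
    · exact lbC3 hH hν hm8 t 2 _ (by ring) (by omega)
    · exact lbC5 hH hν hm8 t 2 _ (by ring) (by omega)
    · exact lbC7 hH hν hm8 t 2 _ (by ring) (by omega)
    · exact lbC9 hH hν hm8 t 2 _ (by ring) (by omega)
  · -- range 2 : D = 3
    rintro ⟨hc, hkb⟩
    have hklo : 3*m ≤ 8*k := by
      have h1 : 3 * (m:ℚ) / 8 ≤ (k:ℚ) := by exact_mod_cast Int.ceil_le.mp hc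
      rw [div_le_iff₀ (by norm_num : (0:ℚ) < 8)] at h1
      have h2 : 3*m ≤ k*8 := by exact_mod_cast h1
      omega
    refine Dval hD (8*k) 3 (4*m) (memH' hH 4 0 _ (by norm_num) (by omega)) (by omega)
      (W4 hH hν hm8 hm11) ?_
    intro y hyH hxy
    rw [hH] at hyH
    obtain ⟨i, hi, j, hj, t, rfl⟩ := hyH
    interval_cases i <;> interval_cases j
    · exact lbC0 hH hν hm8 t 3 _ (by ring) (by omega)
    · exact lbC2 hH hν hm8 t 3 _ (by ring) (by omega)
    · exact lbC4 hH hν hm8 t 3 _ (by ring) (by omega)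
    · exact lbC6 hH hν hm8 t 3 _ (by ring) (by omega)
    · exact lbC3 hH hν hm8 t 3 _ (by ring) (by omega)
    · exact lbC5 hH hν hm8 t 3 _ (by ring) (by omega)
    · exact lbC7 hH hν hm8 t 3 _ (by ring) (by omega)
    · exact lbC9 hH hν hm8 t 3 _ (by ring) (by omega)
  · -- range 3 : D = 4
    rintro ⟨hc, hkb⟩
    have hklo : m ≤ 2*k := by
      have h1 : (m:ℚ) / 2 ≤ (k:ℚ) := by exact_mod_cast Int.ceil_le.mp hc
      rw [div_le_iff₀ (by norm_num : (0:ℚ) < 2)] at h1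
      have h2 : m ≤ k*2 := by exact_mod_cast h1
      omega
    refine Dval hD (8*k) 4 (5*m) (memH' hH 5 0 _ (by norm_num) (by omega)) (by omega)
      (W5 hH hν hm8 hm11) ?_
    intro y hyH hxy
    rw [hH] at hyH
    obtain ⟨i, hi, j, hj, t, rfl⟩ := hyH
    interval_cases i <;> interval_cases j
    · exact lbC0 hH hν hm8 t 4 _ (by ring) (by omega)
    · exact lbC2 hH hν hm8 t 4 _ (by ring) (by omega)
    · exact lbC4 hH hν hm8 t 4 _ (by ring) (by omega)
    · exact lbC6 hH hν hm8 t 4 _ (by ring) (by omega)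
    · exact lbC3 hH hν hm8 t 4 _ (by ring) (by omega)
    · exact lbC5 hH hν hm8 t 4 _ (by ring) (by omega)
    · exact lbC7 hH hν hm8 t 4 _ (by ring) (by omega)
    · exact lbC9 hH hν hm8 t 4 _ (by ring) (by omega)
  · -- range 4 : D = 5
    rintro ⟨hc, hkb⟩
    have hklo : 5*m ≤ 8*k := by
      have h1 : 5 * (m:ℚ) / 8 ≤ (k:ℚ) := by exact_mod_cast Int.ceil_le.mp hc
      rw [div_le_iff₀ (by norm_num : (0:ℚ) < 8)] at h1
      have h2 : 5*m ≤ k*8 := by exact_mod_cast h1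
      omega
    refine Dval hD (8*k) 5 (6*m) (memH' hH 6 0 _ (by norm_num) (by omega)) (by omega)
      (W6 hH hν hm8 hm11) ?_
    intro y hyH hxy
    rw [hH] at hyH
    obtain ⟨i, hi, j, hj, t, rfl⟩ := hyH
    interval_cases i <;> interval_cases j
    · exact lbC0 hH hν hm8 t 5 _ (by ring) (by omega)
    · exact lbC2 hH hν hm8 t 5 _ (by ring) (by omega)
    · exact lbC4 hH hν hm8 t 5 _ (by ring) (by omega)
    · exact lbC6 hH hν hm8 t 5 _ (by ring) (by omega)
    · exact lbC3 hH hν hm8 t 5 _ (by ring) (by omega)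
    · exact lbC5 hH hν hm8 t 5 _ (by ring) (by omega)
    · exact lbC7 hH hν hm8 t 5 _ (by ring) (by omega)
    · exact lbC9 hH hν hm8 t 5 _ (by ring) (by omega)
  · -- range 5 : D = 6
    rintro ⟨hc, hkb⟩
    have hklo : 3*m ≤ 4*k := by
      have h1 : 3 * (m:ℚ) / 4 ≤ (k:ℚ) := by exact_mod_cast Int.ceil_le.mp hc
      rw [div_le_iff₀ (by norm_num : (0:ℚ) < 4)] at h1
      have h2 : 3*m ≤ k*4 := by exact_mod_cast h1
      omega
    refine Dval hD (8*k) 6 (7*m) (memH' hH 7 0 _ (by norm_num) (by omega)) (by omega)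
      (W7 hH hν hm8 hm11) ?_
    intro y hyH hxy
    rw [hH] at hyH
    obtain ⟨i, hi, j, hj, t, rfl⟩ := hyH
    interval_cases i <;> interval_cases j
    · exact lbC0 hH hν hm8 t 6 _ (by ring) (by omega)
    · exact lbC2 hH hν hm8 t 6 _ (by ring) (by omega)
    · exact lbC4 hH hν hm8 t 6 _ (by ring) (by omega)
    · exact lbC6 hH hν hm8 t 6 _ (by ring) (by omega)
    · exact lbC3 hH hν hm8 t 6 _ (by ring) (by omega)
    · exact lbC5 hH hν hm8 t 6 _ (by ring) (by omega)
    · exact lbC7 hH hν hm8 t 6 _ (by ring) (by omega)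
    · exact lbC9 hH hν hm8 t 6 _ (by ring) (by omega)
  · -- range 6 : D = 8
    rintro ⟨hc, hkb⟩
    have hklo : 7*m ≤ 8*k := by
      have h1 : 7 * (m:ℚ) / 8 ≤ (k:ℚ) := by exact_mod_cast Int.ceil_le.mp hc
      rw [div_le_iff₀ (by norm_num : (0:ℚ) < 8)] at h1
      have h2 : 7*m ≤ k*8 := by exact_mod_cast h1
      omega
    refine Dval hD (8*k) 8 (9*m) (memH' hH 9 0 _ (by norm_num) (by omega)) (by omega)
      (W9 hH hν hm8 hm11) ?_
    intro y hyH hxy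
    rw [hH] at hyH
    obtain ⟨i, hi, j, hj, t, rfl⟩ := hyH
    interval_cases i <;> interval_cases j
    · exact lbC0 hH hν hm8 t 8 _ (by ring) (by omega)
    · exact lbC2 hH hν hm8 t 8 _ (by ring) (by omega)
    · exact lbC4 hH hν hm8 t 8 _ (by ring) (by omega)
    · exact lbC6 hH hν hm8 t 8 _ (by ring) (by omega)
    · exact lbC3 hH hν hm8 t 8 _ (by ring) (by omega)
    · exact lbC5 hH hν hm8 t 8 _ (by ring) (by omega)
    · exact lbC7 hH hν hm8 t 8 _ (by ring) (by omega)
    · exact lbC9 hH hν hm8 t 8 _ (by ring) (by omega)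
end

section
/- Let n ≥ 5 be odd, m = (2^n+1)/3, and let k ∈ ℕ with k < m. Set x = 2m + 8k (the element (0,1,k) of H). Then D(x) = min{ ν(y) : y ∈ H, y ≥ x } equals: 2 if k ≤ ⌊m/8⌋; 3 if ⌈m/8⌉ ≤ k ≤ ⌊m/4⌋; 4 if ⌈m/4⌉ ≤ k ≤ ⌊3m/8⌋; 5 if ⌈3m/8⌉ ≤ k ≤ ⌊m/2⌋; 6 if ⌈m/2⌉ ≤ k ≤ ⌊5m/8⌋; and 8(max{0, ⌈k − 7m/8⌉} + 1) if ⌈5m/8⌉ ≤ k ≤ m−1. -/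
def auxF : ℕ → ℕ
  | 1 => 3 | 2 => 6 | 3 => 9 | 4 => 4 | 5 => 7 | 6 => 2 | 7 => 5 | _ => 0

def auxC (c : ℕ) : Prop := c = 0 ∨ c = 2 ∨ c = 3 ∨ c = 4 ∨ c = 5 ∨ c = 6 ∨ c = 7 ∨ c = 9

instance : DecidablePred auxC := fun c => by unfold auxC; infer_instance

def auxS (m y : ℕ) : Finset ℕ :=
  (Finset.range (y+1)).filter fun a => auxF (a % 8) * m ≤ a ∧ auxF ((y - a) % 8) * m ≤ y - a

def auxW (c : ℕ) : ℕ :=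
  if c = 0 then 1 else if c = 2 then 2 else if c = 3 then 2 else if c = 4 then 3
  else if c = 5 then 4 else if c = 6 then 5 else if c = 7 then 6 else 8

def auxPF (c : ℕ) : Finset ℕ := ({0,2,3,4,5,6,7,9} : Finset ℕ).filter fun c1 => c1 ≤ c ∧ auxC (c - c1)

lemma auxF_mem (m : ℕ) (hm8 : m % 8 = 3) (c u : ℕ) (hc : auxC c) :
    auxF ((c * m + 8 * u) % 8) * m ≤ c * m + 8 * u := by
  rcases hc with rfl | rfl | rfl | rfl | rfl | rfl | rfl | rfl
  · rw [show (0 * m + 8 * u) % 8 = 0 by omega, show auxF 0 = 0 from rfl]; omega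
  · rw [show (2 * m + 8 * u) % 8 = 6 by omega, show auxF 6 = 2 from rfl]; omega
  · rw [show (3 * m + 8 * u) % 8 = 1 by omega, show auxF 1 = 3 from rfl]; omega
  · rw [show (4 * m + 8 * u) % 8 = 4 by omega, show auxF 4 = 4 from rfl]; omega
  · rw [show (5 * m + 8 * u) % 8 = 7 by omega, show auxF 7 = 5 from rfl]; omega
  · rw [show (6 * m + 8 * u) % 8 = 2 by omega, show auxF 2 = 6 from rfl]; omega
  · rw [show (7 * m + 8 * u) % 8 = 5 by omega, show auxF 5 = 7 from rfl]; omega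
  · rw [show (9 * m + 8 * u) % 8 = 3 by omega, show auxF 3 = 9 from rfl]; omega

lemma auxH_decomp (m : ℕ) (hm8 : m % 8 = 3) (x : ℕ) (hx : auxF (x % 8) * m ≤ x) :
    ∃ c u, auxC c ∧ x = c * m + 8 * u := by
  have h8 : x % 8 = 0 ∨ x % 8 = 1 ∨ x % 8 = 2 ∨ x % 8 = 3 ∨ x % 8 = 4 ∨ x % 8 = 5 ∨
      x % 8 = 6 ∨ x % 8 = 7 := by omega
  rcases h8 with h | h | h | h | h | h | h | h <;> rw [h] at hx
  · rw [show auxF 0 = 0 from rfl] at hx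
    exact ⟨0, x / 8, Or.inl rfl, by omega⟩
  · rw [show auxF 1 = 3 from rfl] at hx
    exact ⟨3, (x - 3 * m) / 8, by unfold auxC; omega, by omega⟩
  · rw [show auxF 2 = 6 from rfl] at hx
    exact ⟨6, (x - 6 * m) / 8, by unfold auxC; omega, by omega⟩
  · rw [show auxF 3 = 9 from rfl] at hx
    exact ⟨9, (x - 9 * m) / 8, by unfold auxC; omega, by omega⟩
  · rw [show auxF 4 = 4 from rfl] at hx
    exact ⟨4, (x - 4 * m) / 8, by unfold auxC; omega, by omega⟩
  · rw [show auxF 5 = 7 from rfl] at hx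
    exact ⟨7, (x - 7 * m) / 8, by unfold auxC; omega, by omega⟩
  · rw [show auxF 6 = 2 from rfl] at hx
    exact ⟨2, (x - 2 * m) / 8, by unfold auxC; omega, by omega⟩
  · rw [show auxF 7 = 5 from rfl] at hx
    exact ⟨5, (x - 5 * m) / 8, by unfold auxC; omega, by omega⟩

lemma auxS_mem (m : ℕ) (hm8 : m % 8 = 3) (c1 c2 u v y : ℕ) (hc1 : auxC c1) (hc2 : auxC c2)
    (hy : y = c1 * m + c2 * m + 8 * u + 8 * v) : c1 * m + 8 * u ∈ auxS m y := by
  have h1 := auxF_mem m hm8 c1 u hc1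
  have h2 := auxF_mem m hm8 c2 v hc2
  obtain ⟨A, hA⟩ : ∃ A, A = c1 * m := ⟨_, rfl⟩
  obtain ⟨B, hB⟩ : ∃ B, B = c2 * m := ⟨_, rfl⟩
  rw [← hA] at h1 hy ⊢
  rw [← hB] at h2 hy
  simp only [auxS, Finset.mem_filter, Finset.mem_range]
  refine ⟨by omega, h1, ?_⟩
  rw [show y - (A + 8 * u) = B + 8 * v by omega]
  exact h2

lemma auxS_lb (m y : ℕ) (L : Finset ℕ) (T : ℕ → ℕ)
    (hLC : ∀ c ∈ L, auxC c) (hm8 : m % 8 = 3)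
    (hmem : ∀ c ∈ L, ∀ u ≤ T c, c * m + 8 * u ∈ auxS m y) :
    ∑ c ∈ L, (T c + 1) ≤ (auxS m y).card := by
  classical
  have hdisj : ∀ c1 ∈ L, ∀ c2 ∈ L, c1 ≠ c2 →
      Disjoint ((Finset.range (T c1 + 1)).image fun u => c1 * m + 8 * u)
        ((Finset.range (T c2 + 1)).image fun u => c2 * m + 8 * u) := by
    intro c1 hc1 c2 hc2 hne
    rw [Finset.disjoint_left]
    intro a ha1 ha2
    simp only [Finset.mem_image, Finset.mem_range] at ha1 ha2
    obtain ⟨u, -, hu⟩ := ha1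
    obtain ⟨v, -, hv⟩ := ha2
    rcases hLC c1 hc1 with rfl | rfl | rfl | rfl | rfl | rfl | rfl | rfl <;>
      rcases hLC c2 hc2 with rfl | rfl | rfl | rfl | rfl | rfl | rfl | rfl <;> omega
  have hcard : (L.biUnion fun c => (Finset.range (T c + 1)).image fun u => c * m + 8 * u).card
      = ∑ c ∈ L, (T c + 1) := by
    rw [Finset.card_biUnion hdisj]
    refine Finset.sum_congr rfl fun c _ => ?_
    rw [Finset.card_image_of_injective _ (fun a b h => by
      have := Nat.add_left_cancel h; omega), Finset.card_range]
  rw [← hcard]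
  apply Finset.card_le_card
  intro a ha
  simp only [Finset.mem_biUnion, Finset.mem_image, Finset.mem_range] at ha
  obtain ⟨c, hc, u, hu, rfl⟩ := ha
  exact hmem c hc u (by omega)

set_option maxHeartbeats 1000000 in
lemma auxS_decomp (m : ℕ) (hm8 : m % 8 = 3) (c t : ℕ)
    (hc : c = 3 ∨ c = 4 ∨ c = 5 ∨ c = 6 ∨ c = 7 ∨ c = 9) (ht : 8 * t < m)
    (a : ℕ) (ha : a ∈ auxS m (c * m + 8 * t)) :
    ∃ c1 c2 u v, auxC c1 ∧ auxC c2 ∧ c1 + c2 = c ∧ u + v = t ∧ a = c1 * m + 8 * u := by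
  simp only [auxS, Finset.mem_filter, Finset.mem_range] at ha
  obtain ⟨haY, h1, h2⟩ := ha
  obtain ⟨c1, u, hc1, hau⟩ := auxH_decomp m hm8 a h1
  obtain ⟨c2, v, hc2, hbv⟩ := auxH_decomp m hm8 _ h2
  subst hau
  have key : c1 + c2 = c ∧ u + v = t := by
    rcases hc with rfl | rfl | rfl | rfl | rfl | rfl <;>
      rcases hc1 with rfl | rfl | rfl | rfl | rfl | rfl | rfl | rfl <;>
      rcases hc2 with rfl | rfl | rfl | rfl | rfl | rfl | rfl | rfl <;> omega
  exact ⟨c1, c2, u, v, hc1, hc2, key.1, key.2, rfl⟩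

lemma auxS_mem' (m : ℕ) (hm8 : m % 8 = 3) (c c1 u t : ℕ) (hc1 : auxC c1)
    (hc2 : auxC (c - c1)) (hle : c1 ≤ c) (hu : u ≤ t) :
    c1 * m + 8 * u ∈ auxS m (c * m + 8 * t) := by
  refine auxS_mem m hm8 c1 (c - c1) u (t - u) _ hc1 hc2 ?_
  have h1 : c1 * m ≤ c * m := Nat.mul_le_mul_right m hle
  have h2 : (c - c1) * m = c * m - c1 * m := Nat.sub_mul c c1 m
  obtain ⟨A, hA⟩ : ∃ A, A = c * m := ⟨_, rfl⟩
  obtain ⟨B, hB⟩ : ∃ B, B = c1 * m := ⟨_, rfl⟩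
  rw [← hA, ← hB] at h1 ⊢
  rw [← hA, ← hB] at h2
  omega

lemma auxS_class_lb (m : ℕ) (hm8 : m % 8 = 3) (c t : ℕ) (hc : auxC c) :
    auxW c * (t + 1) ≤ (auxS m (c * m + 8 * t)).card := by
  have h := auxS_lb m (c * m + 8 * t) (auxPF c) (fun _ => t)
    (fun c1 h1 => by
      have := (Finset.mem_filter.mp h1).1
      unfold auxC; simp only [Finset.mem_insert, Finset.mem_singleton] at this; tauto)
    hm8
    (fun c1 h1 u hu => by
      obtain ⟨hmem, hle, hc2⟩ := Finset.mem_filter.mp h1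
      refine auxS_mem' m hm8 c c1 u t ?_ hc2 hle hu
      unfold auxC; simp only [Finset.mem_insert, Finset.mem_singleton] at hmem; tauto)
  refine le_trans (le_of_eq ?_) h
  rw [Finset.sum_const, smul_eq_mul]
  congr 1
  rcases hc with rfl | rfl | rfl | rfl | rfl | rfl | rfl | rfl <;> decide

lemma auxS_zero2 (m : ℕ) (hm8 : m % 8 = 3) (t : ℕ) (hmt : m ≤ t) :
    (t + 1) + 5 * ((t - m) + 1) ≤ (auxS m (8 * t)).card := by
  have h := auxS_lb m (8 * t) ({0, 2, 3, 4, 5, 6} : Finset ℕ) (fun c => if c = 0 then t else t - m)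
    (fun c1 h1 => by
      simp only [Finset.mem_insert, Finset.mem_singleton] at h1
      unfold auxC; tauto)
    hm8
    (fun c1 h1 u hu => by
      simp only [Finset.mem_insert, Finset.mem_singleton] at h1
      rcases h1 with rfl | rfl | rfl | rfl | rfl | rfl
      · have hu' : u ≤ t := by simpa using hu
        exact auxS_mem m hm8 0 0 u (t - u) (8 * t) (by unfold auxC; omega)
          (by unfold auxC; omega) (by omega)
      · have hu' : u ≤ t - m := by simpa using hu
        exact auxS_mem m hm8 2 6 u (t - m - u) (8 * t) (by unfold auxC; omega)
          (by unfold auxC; omega) (by omega)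
      · have hu' : u ≤ t - m := by simpa using hu
        exact auxS_mem m hm8 3 5 u (t - m - u) (8 * t) (by unfold auxC; omega)
          (by unfold auxC; omega) (by omega)
      · have hu' : u ≤ t - m := by simpa using hu
        exact auxS_mem m hm8 4 4 u (t - m - u) (8 * t) (by unfold auxC; omega)
          (by unfold auxC; omega) (by omega)
      · have hu' : u ≤ t - m := by simpa using hu
        exact auxS_mem m hm8 5 3 u (t - m - u) (8 * t) (by unfold auxC; omega)
          (by unfold auxC; omega) (by omega)
      · have hu' : u ≤ t - m := by simpa using hu
        exact auxS_mem m hm8 6 2 u (t - m - u) (8 * t) (by unfold auxC; omega)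
          (by unfold auxC; omega) (by omega))
  refine le_trans (le_of_eq ?_) h
  simp [Finset.sum_insert, Finset.mem_insert]
  omega

lemma auxS_upper (m : ℕ) (hm8 : m % 8 = 3) (c t : ℕ)
    (hc : c = 3 ∨ c = 4 ∨ c = 5 ∨ c = 6 ∨ c = 7 ∨ c = 9) (ht : 8 * t < m) :
    (auxS m (c * m + 8 * t)).card ≤ auxW c * (t + 1) := by
  classical
  have hsub : auxS m (c * m + 8 * t) ⊆
      (auxPF c ×ˢ Finset.range (t + 1)).image fun p => p.1 * m + 8 * p.2 := by
    intro a ha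
    obtain ⟨c1, c2, u, v, hc1, hc2, hsum, huv, rfl⟩ := auxS_decomp m hm8 c t hc ht a ha
    simp only [Finset.mem_image, Finset.mem_product, Finset.mem_range]
    refine ⟨(c1, u), ⟨?_, by omega⟩, rfl⟩
    simp only [auxPF, Finset.mem_filter, Finset.mem_insert, Finset.mem_singleton]
    refine ⟨by unfold auxC at hc1; tauto, by omega, ?_⟩
    rw [show c - c1 = c2 by omega]
    exact hc2
  calc (auxS m (c * m + 8 * t)).card
      ≤ ((auxPF c ×ˢ Finset.range (t + 1)).image fun p => p.1 * m + 8 * p.2).card :=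
        Finset.card_le_card hsub
    _ ≤ (auxPF c ×ˢ Finset.range (t + 1)).card := Finset.card_image_le
    _ = (auxPF c).card * (t + 1) := by rw [Finset.card_product, Finset.card_range]
    _ = auxW c * (t + 1) := by
        congr 1
        rcases hc with rfl | rfl | rfl | rfl | rfl | rfl <;> decide

set_option maxHeartbeats 1000000 in
/-- The Feng–Rao designed minimum distance `d_ORD(C_ℓ(P_∞))` for `ρ_{ℓ+1} = (0,1,k)`,
`k < m`, on `GGS(2,n)`. -/
theorem stmt_8 (n m : ℕ) (hn : 5 ≤ n) (hodd : Odd n) (hm : 3 * m = 2 ^ n + 1)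
    (H : Set ℕ)
    (hH : H = {x | ∃ i ≤ 1, ∃ j ≤ 3, ∃ k : ℕ, x = i * (2 ^ n + 1) + 2 * j * m + 8 * k})
    (ν : ℕ → ℕ)
    (hν : ∀ x, ν x = {p : ℕ × ℕ | p.1 ∈ H ∧ p.2 ∈ H ∧ p.1 + p.2 = x}.ncard)
    (D : ℕ → ℕ)
    (hD : ∀ x, D x = sInf (ν '' {y : ℕ | y ∈ H ∧ x ≤ y}))
    (k : ℕ) (hk : k < m) :
    (k ≤ m / 8 → D (2 * m + 8 * k) = 2) ∧
    (⌈(m : ℚ) / 8⌉ ≤ (k : ℤ) ∧ k ≤ m / 4 → D (2 * m + 8 * k) = 3) ∧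
    (⌈(m : ℚ) / 4⌉ ≤ (k : ℤ) ∧ k ≤ 3 * m / 8 → D (2 * m + 8 * k) = 4) ∧
    (⌈3 * (m : ℚ) / 8⌉ ≤ (k : ℤ) ∧ k ≤ m / 2 → D (2 * m + 8 * k) = 5) ∧
    (⌈(m : ℚ) / 2⌉ ≤ (k : ℤ) ∧ k ≤ 5 * m / 8 → D (2 * m + 8 * k) = 6) ∧
    (⌈5 * (m : ℚ) / 8⌉ ≤ (k : ℤ) ∧ k ≤ m - 1 →
      (D (2 * m + 8 * k) : ℤ) = 8 * (max 0 ⌈(k : ℚ) - 7 * m / 8⌉ + 1)) := by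
  obtain ⟨s, hs1, hs⟩ : ∃ s, 1 ≤ s ∧ 2 ^ n = 32 * s := by
    refine ⟨2 ^ (n - 5), Nat.one_le_two_pow, ?_⟩
    rw [show (32 : ℕ) = 2 ^ 5 by norm_num, ← pow_add]
    congr 1
    omega
  obtain ⟨q, hq, hq1⟩ : ∃ q, m = 8 * q + 3 ∧ 1 ≤ q := ⟨m / 8, by omega, by omega⟩
  have hm8 : m % 8 = 3 := by omega
  -- membership characterization
  have hHiff : ∀ z, z ∈ H ↔ auxF (z % 8) * m ≤ z := by
    intro z
    rw [hH]
    simp only [Set.mem_setOf_eq]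
    constructor
    · rintro ⟨i, hi, j, hj, w, rfl⟩
      rw [← hm]
      interval_cases i <;> interval_cases j
      · rw [show 0 * (3 * m) + 2 * 0 * m + 8 * w = 0 * m + 8 * w by ring]
        exact auxF_mem m hm8 0 w (by unfold auxC; omega)
      · rw [show 0 * (3 * m) + 2 * 1 * m + 8 * w = 2 * m + 8 * w by ring]
        exact auxF_mem m hm8 2 w (by unfold auxC; omega)
      · rw [show 0 * (3 * m) + 2 * 2 * m + 8 * w = 4 * m + 8 * w by ring]
        exact auxF_mem m hm8 4 w (by unfold auxC; omega)
      · rw [show 0 * (3 * m) + 2 * 3 * m + 8 * w = 6 * m + 8 * w by ring]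
        exact auxF_mem m hm8 6 w (by unfold auxC; omega)
      · rw [show 1 * (3 * m) + 2 * 0 * m + 8 * w = 3 * m + 8 * w by ring]
        exact auxF_mem m hm8 3 w (by unfold auxC; omega)
      · rw [show 1 * (3 * m) + 2 * 1 * m + 8 * w = 5 * m + 8 * w by ring]
        exact auxF_mem m hm8 5 w (by unfold auxC; omega)
      · rw [show 1 * (3 * m) + 2 * 2 * m + 8 * w = 7 * m + 8 * w by ring]
        exact auxF_mem m hm8 7 w (by unfold auxC; omega)
      · rw [show 1 * (3 * m) + 2 * 3 * m + 8 * w = 9 * m + 8 * w by ring]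
        exact auxF_mem m hm8 9 w (by unfold auxC; omega)
    · intro hz
      obtain ⟨c, u, hc, rfl⟩ := auxH_decomp m hm8 z hz
      simp only [← hm]
      rcases hc with rfl | rfl | rfl | rfl | rfl | rfl | rfl | rfl
      · exact ⟨0, by norm_num, 0, by norm_num, u, by ring⟩
      · exact ⟨0, by norm_num, 1, by norm_num, u, by ring⟩
      · exact ⟨1, by norm_num, 0, by norm_num, u, by ring⟩
      · exact ⟨0, by norm_num, 2, by norm_num, u, by ring⟩
      · exact ⟨1, by norm_num, 1, by norm_num, u, by ring⟩
      · exact ⟨0, by norm_num, 3, by norm_num, u, by ring⟩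
      · exact ⟨1, by norm_num, 2, by norm_num, u, by ring⟩
      · exact ⟨1, by norm_num, 3, by norm_num, u, by ring⟩
  -- ν as a finset card
  have hnu : ∀ y, ν y = (auxS m y).card := by
    intro y
    rw [hν]
    have hset : {p : ℕ × ℕ | p.1 ∈ H ∧ p.2 ∈ H ∧ p.1 + p.2 = y}
        = (fun a => (a, y - a)) '' (auxS m y : Set ℕ) := by
      ext p
      simp only [Set.mem_setOf_eq, Set.mem_image, Finset.mem_coe]
      constructor
      · rintro ⟨h1, h2, h3⟩
        refine ⟨p.1, ?_, ?_⟩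
        · simp only [auxS, Finset.mem_filter, Finset.mem_range]
          refine ⟨by omega, (hHiff p.1).1 h1, ?_⟩
          rw [show y - p.1 = p.2 by omega]
          exact (hHiff p.2).1 h2
        · have hyp : y - p.1 = p.2 := by omega
          rw [hyp]
      · rintro ⟨a, ha, rfl⟩
        simp only [auxS, Finset.mem_filter, Finset.mem_range] at ha
        refine ⟨(hHiff a).2 ha.2.1, (hHiff _).2 ha.2.2, ?_⟩
        simp only
        omega
    rw [hset, Set.ncard_image_of_injective _ (fun a b h => congrArg Prod.fst h),
      Set.ncard_coe_finset]
  -- class-wise lower bounds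
  have hclass : ∀ y ∈ H, ∃ c t, y = c * m + 8 * t ∧
      ((c = 0 ∧ 1 * (t + 1) ≤ ν y) ∨ (c = 2 ∧ 2 * (t + 1) ≤ ν y) ∨
       (c = 3 ∧ 2 * (t + 1) ≤ ν y) ∨ (c = 4 ∧ 3 * (t + 1) ≤ ν y) ∨
       (c = 5 ∧ 4 * (t + 1) ≤ ν y) ∨ (c = 6 ∧ 5 * (t + 1) ≤ ν y) ∨
       (c = 7 ∧ 6 * (t + 1) ≤ ν y) ∨ (c = 9 ∧ 8 * (t + 1) ≤ ν y)) ∧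
      (c = 0 → m ≤ t → (t + 1) + 5 * ((t - m) + 1) ≤ ν y) := by
    intro y hyH
    obtain ⟨c, t, hc, rfl⟩ := auxH_decomp m hm8 y ((hHiff y).1 hyH)
    refine ⟨c, t, rfl, ?_, ?_⟩
    · have h1 := auxS_class_lb m hm8 c t hc
      rw [← hnu] at h1
      rcases hc with rfl | rfl | rfl | rfl | rfl | rfl | rfl | rfl
      · exact Or.inl ⟨rfl, by simpa [auxW] using h1⟩
      · exact Or.inr (Or.inl ⟨rfl, by simpa [auxW] using h1⟩)
      · exact Or.inr (Or.inr (Or.inl ⟨rfl, by simpa [auxW] using h1⟩))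
      · exact Or.inr (Or.inr (Or.inr (Or.inl ⟨rfl, by simpa [auxW] using h1⟩)))
      · exact Or.inr (Or.inr (Or.inr (Or.inr (Or.inl ⟨rfl, by simpa [auxW] using h1⟩))))
      · exact Or.inr (Or.inr (Or.inr (Or.inr (Or.inr (Or.inl ⟨rfl, by simpa [auxW] using h1⟩)))))
      · exact Or.inr (Or.inr (Or.inr (Or.inr (Or.inr (Or.inr (Or.inl
          ⟨rfl, by simpa [auxW] using h1⟩))))))
      · exact Or.inr (Or.inr (Or.inr (Or.inr (Or.inr (Or.inr (Or.inr
          ⟨rfl, by simpa [auxW] using h1⟩))))))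
    · rintro rfl hmt
      have h := auxS_zero2 m hm8 t hmt
      rw [show (0 : ℕ) * m + 8 * t = 8 * t from by omega, hnu]
      exact h
  -- witness values
  have hwval : ∀ c t, (c = 3 ∨ c = 4 ∨ c = 5 ∨ c = 6 ∨ c = 7 ∨ c = 9) → 8 * t < m →
      ν (c * m + 8 * t) = auxW c * (t + 1) := by
    intro c t hc ht
    rw [hnu]
    exact le_antisymm (auxS_upper m hm8 c t hc ht)
      (auxS_class_lb m hm8 c t (by unfold auxC; omega))
  have hwH : ∀ c t : ℕ, auxC c → (c * m + 8 * t) ∈ H := by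
    intro c t hc
    exact (hHiff _).2 (auxF_mem m hm8 c t hc)
  -- evaluation of D
  have hDeq : ∀ w V, w ∈ H → 2 * m + 8 * k ≤ w → ν w = V →
      (∀ y ∈ H, 2 * m + 8 * k ≤ y → V ≤ ν y) → D (2 * m + 8 * k) = V := by
    intro w V hwH' hwx hvw hlow
    rw [hD]
    apply le_antisymm
    · exact Nat.sInf_le ⟨w, ⟨hwH', hwx⟩, hvw⟩
    · obtain ⟨y, ⟨hyH, hyx⟩, hval⟩ :=
        Nat.sInf_mem (⟨V, w, ⟨hwH', hwx⟩, hvw⟩ :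
          (ν '' {y : ℕ | y ∈ H ∧ 2 * m + 8 * k ≤ y}).Nonempty)
      exact hval ▸ hlow y hyH hyx
  refine ⟨?_, ?_, ?_, ?_, ?_, ?_⟩
  -- Case 1
  · intro hk1
    apply hDeq (3 * m + 8 * 0) 2 (hwH 3 0 (by unfold auxC; omega)) (by omega)
      (by rw [hwval 3 0 (by omega) (by omega)]; decide)
    intro y hyH hyx
    obtain ⟨c, t, rfl, hor, h2⟩ := hclass y hyH
    rcases hor with ⟨rfl, h1⟩ | ⟨rfl, h1⟩ | ⟨rfl, h1⟩ | ⟨rfl, h1⟩ | ⟨rfl, h1⟩ | ⟨rfl, h1⟩ |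
      ⟨rfl, h1⟩ | ⟨rfl, h1⟩ <;> omega
  -- Case 2
  · rintro ⟨hc1, hc2⟩
    have hkl : q + 1 ≤ k := by
      have h1 : (m : ℚ) / 8 ≤ ((k : ℤ) : ℚ) := Int.ceil_le.mp hc1
      have h2 : (m : ℚ) ≤ 8 * (k : ℚ) := by push_cast at h1; linarith
      have h3 : m ≤ 8 * k := by exact_mod_cast h2
      omega
    apply hDeq (4 * m + 8 * 0) 3 (hwH 4 0 (by unfold auxC; omega)) (by omega)
      (by rw [hwval 4 0 (by omega) (by omega)]; decide)
    intro y hyH hyx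
    obtain ⟨c, t, rfl, hor, h2⟩ := hclass y hyH
    rcases hor with ⟨rfl, h1⟩ | ⟨rfl, h1⟩ | ⟨rfl, h1⟩ | ⟨rfl, h1⟩ | ⟨rfl, h1⟩ | ⟨rfl, h1⟩ |
      ⟨rfl, h1⟩ | ⟨rfl, h1⟩ <;> omega
  -- Case 3
  · rintro ⟨hc1, hc2⟩
    have hkl : 2 * q + 1 ≤ k := by
      have h1 : (m : ℚ) / 4 ≤ ((k : ℤ) : ℚ) := Int.ceil_le.mp hc1
      have h2 : (m : ℚ) ≤ 4 * (k : ℚ) := by push_cast at h1; linarith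
      have h3 : m ≤ 4 * k := by exact_mod_cast h2
      omega
    apply hDeq (5 * m + 8 * 0) 4 (hwH 5 0 (by unfold auxC; omega)) (by omega)
      (by rw [hwval 5 0 (by omega) (by omega)]; decide)
    intro y hyH hyx
    obtain ⟨c, t, rfl, hor, h2⟩ := hclass y hyH
    rcases hor with ⟨rfl, h1⟩ | ⟨rfl, h1⟩ | ⟨rfl, h1⟩ | ⟨rfl, h1⟩ | ⟨rfl, h1⟩ | ⟨rfl, h1⟩ |
      ⟨rfl, h1⟩ | ⟨rfl, h1⟩ <;> omega
  -- Case 4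
  · rintro ⟨hc1, hc2⟩
    have hkl : 3 * q + 2 ≤ k := by
      have h1 : 3 * (m : ℚ) / 8 ≤ ((k : ℤ) : ℚ) := Int.ceil_le.mp hc1
      have h2 : 3 * (m : ℚ) ≤ 8 * (k : ℚ) := by push_cast at h1; linarith
      have h3 : 3 * m ≤ 8 * k := by exact_mod_cast h2
      omega
    apply hDeq (6 * m + 8 * 0) 5 (hwH 6 0 (by unfold auxC; omega)) (by omega)
      (by rw [hwval 6 0 (by omega) (by omega)]; decide)
    intro y hyH hyx
    obtain ⟨c, t, rfl, hor, h2⟩ := hclass y hyH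
    rcases hor with ⟨rfl, h1⟩ | ⟨rfl, h1⟩ | ⟨rfl, h1⟩ | ⟨rfl, h1⟩ | ⟨rfl, h1⟩ | ⟨rfl, h1⟩ |
      ⟨rfl, h1⟩ | ⟨rfl, h1⟩ <;> omega
  -- Case 5
  · rintro ⟨hc1, hc2⟩
    have hkl : 4 * q + 2 ≤ k := by
      have h1 : (m : ℚ) / 2 ≤ ((k : ℤ) : ℚ) := Int.ceil_le.mp hc1
      have h2 : (m : ℚ) ≤ 2 * (k : ℚ) := by push_cast at h1; linarith
      have h3 : m ≤ 2 * k := by exact_mod_cast h2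
      omega
    apply hDeq (7 * m + 8 * 0) 6 (hwH 7 0 (by unfold auxC; omega)) (by omega)
      (by rw [hwval 7 0 (by omega) (by omega)]; decide)
    intro y hyH hyx
    obtain ⟨c, t, rfl, hor, h2⟩ := hclass y hyH
    rcases hor with ⟨rfl, h1⟩ | ⟨rfl, h1⟩ | ⟨rfl, h1⟩ | ⟨rfl, h1⟩ | ⟨rfl, h1⟩ | ⟨rfl, h1⟩ |
      ⟨rfl, h1⟩ | ⟨rfl, h1⟩ <;> omega
  -- Case 6
  · rintro ⟨hc1, hc2⟩
    have hkl : 5 * q + 2 ≤ k := by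
      have h1 : 5 * (m : ℚ) / 8 ≤ ((k : ℤ) : ℚ) := Int.ceil_le.mp hc1
      have h2 : 5 * (m : ℚ) ≤ 8 * (k : ℚ) := by push_cast at h1; linarith
      have h3 : 5 * m ≤ 8 * k := by exact_mod_cast h2
      omega
    have hmq : (m : ℚ) = 8 * (q : ℚ) + 3 := by exact_mod_cast congrArg (Nat.cast : ℕ → ℚ) hq
    have hceil : ⌈(k : ℚ) - 7 * (m : ℚ) / 8⌉ = (k : ℤ) - 7 * (q : ℤ) - 2 := by
      rw [Int.ceil_eq_iff]
      constructor
      · push_cast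
        rw [hmq]
        linarith
      · push_cast
        rw [hmq]
        linarith
    rw [hceil]
    by_cases hk7 : k ≤ 7 * q + 2
    · rw [max_eq_left (by omega : (k : ℤ) - 7 * (q : ℤ) - 2 ≤ 0)]
      have hD8 : D (2 * m + 8 * k) = 8 := by
        apply hDeq (9 * m + 8 * 0) 8 (hwH 9 0 (by unfold auxC; omega)) (by omega)
          (by rw [hwval 9 0 (by omega) (by omega)]; decide)
        intro y hyH hyx
        obtain ⟨c, t, rfl, hor, h2⟩ := hclass y hyH
        rcases hor with ⟨rfl, h1⟩ | ⟨rfl, h1⟩ | ⟨rfl, h1⟩ | ⟨rfl, h1⟩ | ⟨rfl, h1⟩ | ⟨rfl, h1⟩ |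
          ⟨rfl, h1⟩ | ⟨rfl, h1⟩ <;> omega
      rw [hD8]
      norm_num
    · rw [max_eq_right (by omega : (0 : ℤ) ≤ (k : ℤ) - 7 * (q : ℤ) - 2)]
      have hDv : D (2 * m + 8 * k) = 8 * (k - (7 * q + 2) + 1) := by
        apply hDeq (9 * m + 8 * (k - (7 * q + 2))) (8 * (k - (7 * q + 2) + 1))
          (hwH 9 (k - (7 * q + 2)) (by unfold auxC; omega)) (by omega)
        · rw [hwval 9 (k - (7 * q + 2)) (by omega) (by omega)]
          norm_num [auxW]
        · intro y hyH hyx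
          obtain ⟨c, t, rfl, hor, h2⟩ := hclass y hyH
          rcases hor with ⟨rfl, h1⟩ | ⟨rfl, h1⟩ | ⟨rfl, h1⟩ | ⟨rfl, h1⟩ | ⟨rfl, h1⟩ |
            ⟨rfl, h1⟩ | ⟨rfl, h1⟩ | ⟨rfl, h1⟩
          · have h3 := h2 rfl (by omega)
            omega
          all_goals omega
      rw [hDv]
      omega
end

section
/- Let q ≥ 2 be a prime power, n ≥ 3 an odd integer, and m = (q^n+1)/(q+1). Then the sequence (a₁, a₂, a₃) = (q³, m·q, q^n+1) generates a telescopic numerical semigroup; concretely: gcd(q³, m·q) = q, gcd(q³, m·q, q^n+1) = 1, a₂/q = m lies in the additive submonoid of ℕ generated by a₁/q³ = 1, and a₃ = q^n+1 lies in the additive submonoid of ℕ generated by a₁/q = q² and a₂/q = m. -/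
/-- The Weierstrass semigroup `H(P_∞) = ⟨q³, mq, qⁿ+1⟩` of the GGS curve is
telescopic with respect to the generating sequence `(q³, mq, qⁿ+1)`. -/
theorem stmt_12 (q n m : ℕ) (hq : IsPrimePow q) (hq2 : 2 ≤ q) (hn : 3 ≤ n)
    (hodd : Odd n) (hm : m * (q + 1) = q ^ n + 1) :
    Nat.gcd (q ^ 3) (m * q) = q ∧
    Nat.gcd (Nat.gcd (q ^ 3) (m * q)) (q ^ n + 1) = 1 ∧
    m ∈ AddSubmonoid.closure ({q ^ 3 / q ^ 3} : Set ℕ) ∧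
    q ^ n + 1 ∈ AddSubmonoid.closure ({q ^ 3 / q, m * q / q} : Set ℕ) := by
  have hq0 : 0 < q := by omega
  have hdvd : q ∣ q ^ n := dvd_pow_self q (by omega)
  have hqn1 : (q ^ n + 1) % q = 1 := by
    obtain ⟨k, hk⟩ := hdvd
    rw [hk, Nat.add_comm, Nat.add_mul_mod_self_left]
    exact Nat.mod_eq_of_lt (by omega)
  have hmq : m % q = 1 := by
    have h1 : (q ^ n + 1) % q = m % q := by
      rw [← hm]
      have h2 : m * (q + 1) = m + q * m := by ring
      rw [h2, Nat.add_mul_mod_self_left]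
    rw [hqn1] at h1
    exact h1.symm
  have hcop : Nat.gcd q m = 1 := by
    rw [Nat.gcd_rec q m, hmq, Nat.gcd_one_left]
  have hgcd1 : Nat.gcd (q ^ 3) (m * q) = q := by
    have h3 : q ^ 3 = q ^ 2 * q := by ring
    rw [h3, Nat.gcd_mul_right]
    have hcop2 : Nat.gcd (q ^ 2) m = 1 :=
      Nat.Coprime.pow_left 2 hcop
    rw [hcop2, one_mul]
  refine ⟨hgcd1, ?_, ?_, ?_⟩
  · rw [hgcd1, Nat.gcd_rec q (q ^ n + 1), hqn1, Nat.gcd_one_left]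
  · have h1 : q ^ 3 / q ^ 3 = 1 := Nat.div_self (by positivity)
    rw [h1]
    have hone : (1 : ℕ) ∈ AddSubmonoid.closure ({1} : Set ℕ) :=
      AddSubmonoid.subset_closure rfl
    have := nsmul_mem hone m
    simpa using this
  · have h2 : m * q / q = m := Nat.mul_div_cancel m hq0
    rw [h2]
    have hmem : m ∈ AddSubmonoid.closure ({q ^ 3 / q, m} : Set ℕ) :=
      AddSubmonoid.subset_closure (by simp)
    have hsm := nsmul_mem hmem (q + 1)
    have heq : (q + 1) • m = q ^ n + 1 := by
      rw [smul_eq_mul, mul_comm, hm]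
    rwa [heq] at hsm
end

section
/- Let q ≥ 2 be a prime power, n ≥ 3 an odd integer, m = (q^n+1)/(q+1), and let S ⊆ ℕ be the additive submonoid generated by q³, m·q, and q^n+1. Set g = (q−1)(q^{n+1} + q^n − q²)/2. Then S is a symmetric numerical semigroup with exactly g gaps and largest gap 2g−1; that is: the complement ℕ ∖ S has exactly g elements, every natural number ≥ 2g belongs to S, and for every natural number x ≤ 2g−1 one has x ∈ S if and only if 2g−1−x ∉ S (in particular 2g−1 ∉ S). -/
/-!
`S` is telescopic: `q (qⁿ + 1) = (q + 1) · mq` and `q² · mq = m · q³`, and every integer has a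
unique representation `α q³ + β mq + γ (qⁿ + 1)` with `0 ≤ β < q²` and `0 ≤ γ < q`. A natural
number lies in `S` exactly when its `α` is nonnegative, and `x ↦ F - x` with
`F = (q² - 1) mq + (q - 1)(qⁿ + 1) - q³ = 2g - 1` sends `(α, β, γ)` to
`(-1 - α, q² - 1 - β, q - 1 - γ)`. So exactly one of `x`, `F - x` lies in `S`; pairing `x` with
`F - x` on `[0, F]` then shows that there are `(F + 1) / 2 = g` gaps.
-/

def IsSymmetricWithFrobenius (S : AddSubmonoid ℕ) (F : ℕ) : Prop :=
  (∀ x, F < x → x ∈ S) ∧ ∀ x ≤ F, (x ∈ S ↔ F - x ∉ S)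

namespace IsSymmetricWithFrobenius

open Finset

variable {S : AddSubmonoid ℕ} {F : ℕ}

theorem frobenius_notMem (h : IsSymmetricWithFrobenius S F) : F ∉ S := by
  have := h.2 F le_rfl
  rw [Nat.sub_self] at this
  exact fun hF => this.1 hF S.zero_mem

theorem two_mul_ncard_compl (h : IsSymmetricWithFrobenius S F) :
    2 * ((S : Set ℕ)ᶜ).ncard = F + 1 := by
  classical
  have hgaps : ((S : Set ℕ)ᶜ) = ↑({x ∈ range (F + 1) | x ∉ S}) := by
    ext x
    simp only [Set.mem_compl_iff, SetLike.mem_coe, coe_filter, mem_range]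
    exact ⟨fun hx => ⟨by_contra fun hlt => hx (h.1 x (by omega)), hx⟩, And.right⟩
  have hreflect : #{x ∈ range (F + 1) | x ∉ S} = #{x ∈ range (F + 1) | x ∈ S} := by
    refine card_nbij' (F - ·) (F - ·) ?_ ?_ ?_ ?_ <;>
      simp only [coe_filter, mem_range] <;> rintro x ⟨hxF, hxS⟩ <;> dsimp only
    · exact ⟨by omega, not_not.1 fun hn => hxS ((h.2 x (by omega)).2 hn)⟩
    · exact ⟨by omega, (h.2 x (by omega)).1 hxS⟩
    all_goals omega
  rw [hgaps, Set.ncard_coe_finset, two_mul]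
  nth_rw 1 [hreflect]
  rw [card_filter_add_card_filter_not, card_range]

end IsSymmetricWithFrobenius

theorem AddSubmonoid.mem_closure_triple {a b c x : ℕ} :
    x ∈ closure ({a, b, c} : Set ℕ) ↔ ∃ i j r : ℕ, i * a + j * b + r * c = x := by
  rw [← Set.singleton_union, closure_union, mem_sup]
  simp only [mem_closure_singleton, mem_closure_pair, smul_eq_mul]
  constructor
  · rintro ⟨_, ⟨i, rfl⟩, _, ⟨j, r, rfl⟩, rfl⟩
    exact ⟨i, j, r, by ring⟩
  · rintro ⟨i, j, r, rfl⟩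
    exact ⟨_, ⟨i, rfl⟩, _, ⟨j, r, rfl⟩, by ring⟩

def IsNormalForm (a b c k l : ℕ) (x α β γ : ℤ) : Prop :=
  0 ≤ β ∧ β < l ∧ 0 ≤ γ ∧ γ < k ∧ x = α * a + β * b + γ * c

namespace IsNormalForm

variable {a b c k l : ℕ}

theorem exists_of_relations {u v w : ℕ} (hk : 0 < k) (hl : 0 < l)
    (hc : k * c = u * a + v * b) (hb : l * b = w * a) (α β γ : ℤ) :
    ∃ α' β' γ', IsNormalForm a b c k l (α * a + β * b + γ * c) α' β' γ' ∧
      (0 ≤ α → 0 ≤ β → 0 ≤ γ → 0 ≤ α') := by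
  have hc' : (k : ℤ) * c = u * a + v * b := by exact_mod_cast hc
  have hb' : (l : ℤ) * b = w * a := by exact_mod_cast hb
  have hk' : (0 : ℤ) < k := by exact_mod_cast hk
  have hl' : (0 : ℤ) < l := by exact_mod_cast hl
  set t := γ / k
  set s := (β + t * v) / l
  have hγk := Int.mul_ediv_add_emod γ k
  have hβl := Int.mul_ediv_add_emod (β + t * v) l
  refine ⟨α + t * u + s * w, (β + t * v) % l, γ % k,
    ⟨Int.emod_nonneg _ hl'.ne', Int.emod_lt_of_pos _ hl', Int.emod_nonneg _ hk'.ne',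
      Int.emod_lt_of_pos _ hk', ?_⟩, fun hα hβ hγ => ?_⟩
  · linear_combination (-c : ℤ) * hγk + t * hc' - (b : ℤ) * hβl + s * hb'
  · have ht : 0 ≤ t := Int.ediv_nonneg hγ hk'.le
    have hs : 0 ≤ s := Int.ediv_nonneg (by positivity) hl'.le
    positivity

theorem exists_of_int {u v w : ℕ} (hk : 0 < k) (hl : 0 < l)
    (hc : k * c = u * a + v * b) (hb : l * b = w * a)
    (hgen : ∃ α β γ : ℤ, α * a + β * b + γ * c = 1) (x : ℤ) :
    ∃ α β γ, IsNormalForm a b c k l x α β γ := by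
  obtain ⟨α, β, γ, h⟩ := hgen
  obtain ⟨α', β', γ', hx, -⟩ := exists_of_relations hk hl hc hb (x * α) (x * β) (x * γ)
  refine ⟨α', β', γ', ?_⟩
  convert hx using 1
  linear_combination -x * h

theorem fst_eq
    (hinj : ∀ α β γ : ℤ, |β| < l → |γ| < k → α * a + β * b + γ * c = 0 → α = 0)
    {x α β γ α' β' γ' : ℤ} (h : IsNormalForm a b c k l x α β γ)
    (h' : IsNormalForm a b c k l x α' β' γ') : α = α' := by
  obtain ⟨hβ0, hβl, hγ0, hγk, hx⟩ := h
  obtain ⟨hβ0', hβl', hγ0', hγk', hx'⟩ := h'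
  have := hinj (α - α') (β - β') (γ - γ') (abs_sub_lt_iff.2 ⟨by linarith, by linarith⟩)
    (abs_sub_lt_iff.2 ⟨by linarith, by linarith⟩) (by linear_combination hx' - hx)
  linarith

theorem dual {x α β γ : ℤ} (h : IsNormalForm a b c k l x α β γ) :
    IsNormalForm a b c k l ((l - 1) * b + (k - 1) * c - a - x)
      (-1 - α) (l - 1 - β) (k - 1 - γ) := by
  obtain ⟨hβ0, hβl, hγ0, hγk, rfl⟩ := h
  exact ⟨by linarith, by linarith, by linarith, by linarith, by ring⟩

end IsNormalForm

theorem mem_closure_iff_of_isNormalForm {a b c k l u v w : ℕ} (hk : 0 < k) (hl : 0 < l)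
    (hc : k * c = u * a + v * b) (hb : l * b = w * a)
    (hinj : ∀ α β γ : ℤ, |β| < l → |γ| < k → α * a + β * b + γ * c = 0 → α = 0)
    {x : ℕ} {α β γ : ℤ} (h : IsNormalForm a b c k l x α β γ) :
    x ∈ AddSubmonoid.closure {a, b, c} ↔ 0 ≤ α := by
  rw [AddSubmonoid.mem_closure_triple]
  constructor
  · rintro ⟨i, j, r, rfl⟩
    obtain ⟨α', β', γ', h', hα'⟩ := IsNormalForm.exists_of_relations hk hl hc hb i j r
    push_cast at h
    rw [IsNormalForm.fst_eq hinj h h']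
    exact hα' (by positivity) (by positivity) (by positivity)
  · intro hα
    obtain ⟨hβ0, -, hγ0, -, hx⟩ := h
    refine ⟨α.toNat, β.toNat, γ.toNat, ?_⟩
    zify
    rw [Int.toNat_of_nonneg hα, Int.toNat_of_nonneg hβ0, Int.toNat_of_nonneg hγ0, hx]

theorem isSymmetricWithFrobenius_closure {a b c k l u v w : ℕ} (hk : 0 < k) (hl : 0 < l)
    (hc : k * c = u * a + v * b) (hb : l * b = w * a)
    (hgen : ∃ α β γ : ℤ, α * a + β * b + γ * c = 1)
    (hinj : ∀ α β γ : ℤ, |β| < l → |γ| < k → α * a + β * b + γ * c = 0 → α = 0)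
    {F : ℕ} (hF : (F : ℤ) = (l - 1) * b + (k - 1) * c - a) :
    IsSymmetricWithFrobenius (AddSubmonoid.closure {a, b, c}) F := by
  refine ⟨fun x hx => ?_, fun x hx => ?_⟩ <;>
    obtain ⟨α, β, γ, h⟩ := IsNormalForm.exists_of_int hk hl hc hb hgen x <;>
    rw [mem_closure_iff_of_isNormalForm hk hl hc hb hinj h]
  · by_contra! hα
    obtain ⟨-, hβl, -, hγk, hx'⟩ := h
    have : α * a ≤ -a := by nlinarith
    have : β * b ≤ (l - 1) * b := by nlinarith
    have : γ * c ≤ (k - 1) * c := by nlinarith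
    omega
  · have hdual := h.dual
    rw [← hF, ← Nat.cast_sub hx] at hdual
    rw [mem_closure_iff_of_isNormalForm hk hl hc hb hinj hdual]
    omega

theorem ggs_coeff_eq_zero_of_relation {q n m : ℕ} (hq : 0 < q) (hn : 2 ≤ n)
    (hm : m * (q + 1) = q ^ n + 1) {α β γ : ℤ} (hβ : |β| < q ^ 2) (hγ : |γ| < q)
    (h : α * q ^ 3 + β * (m * q) + γ * (q ^ n + 1) = 0) : α = 0 := by
  obtain ⟨j, rfl⟩ := Nat.exists_eq_add_of_le' hn
  have hm' : (m : ℤ) * (q + 1) = q ^ (j + 2) + 1 := by exact_mod_cast hm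
  have hq' : (q : ℤ) ≠ 0 := by exact_mod_cast hq.ne'
  obtain rfl : γ = 0 := Int.eq_zero_of_abs_lt_dvd
    ⟨-(α * q ^ 2 + β * m + γ * q ^ (j + 1)), by linear_combination h⟩ hγ
  have h' : α * q ^ 2 + β * m = 0 := mul_right_cancel₀ hq' (by linear_combination h)
  obtain rfl : β = 0 := Int.eq_zero_of_abs_lt_dvd
    ⟨-(α * (q + 1) + β * q ^ j), by linear_combination (q + 1 : ℤ) * h' - β * hm'⟩ hβ
  simpa [hq.ne'] using h'

theorem isSymmetricWithFrobenius_ggs {q n m F : ℕ} (hq : 0 < q) (hn : 3 ≤ n)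
    (hm : m * (q + 1) = q ^ n + 1)
    (hF : (F : ℤ) = (q ^ 2 - 1) * (m * q) + (q - 1) * (q ^ n + 1) - q ^ 3) :
    IsSymmetricWithFrobenius (AddSubmonoid.closure {q ^ 3, m * q, q ^ n + 1}) F := by
  refine isSymmetricWithFrobenius_closure (k := q) (l := q ^ 2) (u := 0) (v := q + 1) (w := m)
    hq (by positivity) (by rw [← hm]; ring) (by ring) ⟨-(q : ℤ) ^ (n - 3), 0, 1, ?_⟩
    (fun α β γ hβ hγ h => ggs_coeff_eq_zero_of_relation hq (by omega) hm
      (by exact_mod_cast hβ) hγ (by exact_mod_cast h)) (by push_cast; exact hF)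
  push_cast
  rw [neg_mul, ← pow_add, Nat.sub_add_cancel hn]
  ring

theorem stmt_13_general (q n m g : ℕ) (hq2 : 2 ≤ q) (hn : 3 ≤ n)
    (hm : m * (q + 1) = q ^ n + 1)
    (hg : 2 * g = (q - 1) * (q ^ (n + 1) + q ^ n - q ^ 2))
    (S : AddSubmonoid ℕ)
    (hS : S = AddSubmonoid.closure {q ^ 3, m * q, q ^ n + 1}) :
    ((↑S : Set ℕ)ᶜ).ncard = g ∧
    (∀ x : ℕ, 2 * g ≤ x → x ∈ S) ∧
    (∀ x : ℕ, x ≤ 2 * g - 1 → (x ∈ S ↔ (2 * g - 1 - x) ∉ S)) ∧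
    (2 * g - 1) ∉ S := by
  have hq2n : q ^ 2 ≤ q ^ (n + 1) := Nat.pow_le_pow_right (by omega) (by omega)
  have hg1 : 1 ≤ g := by
    have : 1 ≤ q ^ n := Nat.one_le_pow _ _ (by omega)
    have := Nat.mul_le_mul (by omega : 1 ≤ q - 1) (by omega : 1 ≤ q ^ (n + 1) + q ^ n - q ^ 2)
    omega
  have hF : ((2 * g - 1 : ℕ) : ℤ) = (q ^ 2 - 1) * (m * q) + (q - 1) * (q ^ n + 1) - q ^ 3 := by
    have hm' : (m : ℤ) * (q + 1) = q ^ n + 1 := by exact_mod_cast hm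
    have hg' : 2 * (g : ℤ) = (q - 1) * (q ^ (n + 1) + q ^ n - q ^ 2) := by
      zify [(by omega : 1 ≤ q), (by omega : q ^ 2 ≤ q ^ (n + 1) + q ^ n)] at hg
      exact hg
    push_cast [(by omega : 1 ≤ 2 * g)]
    linear_combination hg' - (q - 1 : ℤ) * q * hm'
  have hsymm : IsSymmetricWithFrobenius S (2 * g - 1) :=
    hS ▸ isSymmetricWithFrobenius_ggs (by omega) hn hm hF
  refine ⟨?_, fun x hx => hsymm.1 x (by omega), hsymm.2, hsymm.frobenius_notMem⟩
  have := hsymm.two_mul_ncard_compl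
  omega

/-- The Weierstrass semigroup `S = ⟨q³, mq, qⁿ+1⟩` of the GGS curve is a symmetric
numerical semigroup with exactly `g` gaps and largest gap `2g-1`, where `g` is the
genus of `GGS(q,n)`. -/
theorem stmt_13 (q n m g : ℕ) (hq : IsPrimePow q) (hq2 : 2 ≤ q) (hn : 3 ≤ n)
    (hodd : Odd n) (hm : m * (q + 1) = q ^ n + 1)
    (hg : 2 * g = (q - 1) * (q ^ (n + 1) + q ^ n - q ^ 2))
    (S : AddSubmonoid ℕ)
    (hS : S = AddSubmonoid.closure {q ^ 3, m * q, q ^ n + 1}) :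
    ((↑S : Set ℕ)ᶜ).ncard = g ∧
    (∀ x : ℕ, 2 * g ≤ x → x ∈ S) ∧
    (∀ x : ℕ, x ≤ 2 * g - 1 → (x ∈ S ↔ (2 * g - 1 - x) ∉ S)) ∧
    (2 * g - 1) ∉ S :=
  stmt_13_general q n m g hq2 hn hm hg S hS
end

section
/- Let n ≥ 5 be odd, m = (2^n+1)/3, and let k ∈ ℕ with m ≤ k < 2m. Set x = 2m + 8k (the element (0,1,k) of H) and assume x < 18m − 14 (i.e., x < 4g where g = (3·2^n−4)/2). Then D(x) = min{ ν(y) : y ∈ H, y ≥ x } equals: 8k − 7m + 13 if k < (9m−11)/8; 8k − 7m + 11 if (9m−11)/8 ≤ k < (11m−9)/8; and 8k − 7m + 9 if k ≥ (11m−9)/8. -/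
def ggsT : ℕ → ℕ
  | 0 => 0 | 1 => 3 | 2 => 6 | 3 => 9 | 4 => 4 | 5 => 7 | 6 => 2 | 7 => 5
  | _ => 0

lemma memH_iff (m : ℕ) (hm3 : m % 8 = 3) (H : Set ℕ)
    (hH : H = {x | ∃ i ≤ 1, ∃ j ≤ 3, ∃ k : ℕ, x = i * (3 * m) + 2 * j * m + 8 * k}) (x : ℕ) :
    x ∈ H ↔ m * ggsT (x % 8) ≤ x := by
  obtain ⟨u, hu⟩ : ∃ u, m = 8 * u + 3 := ⟨m / 8, by omega⟩
  subst hH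
  constructor
  · rintro ⟨i, hi, j, hj, k, rfl⟩
    interval_cases i <;> interval_cases j <;>
      (first
        | (rw [show (0 * (3*m) + 2*0*m + 8*k) % 8 = 0 by omega]; simp [ggsT] <;> omega)
        | (rw [show (0 * (3*m) + 2*1*m + 8*k) % 8 = 6 by omega]; simp [ggsT] <;> omega)
        | (rw [show (0 * (3*m) + 2*2*m + 8*k) % 8 = 4 by omega]; simp [ggsT] <;> omega)
        | (rw [show (0 * (3*m) + 2*3*m + 8*k) % 8 = 2 by omega]; simp [ggsT] <;> omega)
        | (rw [show (1 * (3*m) + 2*0*m + 8*k) % 8 = 1 by omega]; simp [ggsT] <;> omega)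
        | (rw [show (1 * (3*m) + 2*1*m + 8*k) % 8 = 7 by omega]; simp [ggsT] <;> omega)
        | (rw [show (1 * (3*m) + 2*2*m + 8*k) % 8 = 5 by omega]; simp [ggsT] <;> omega)
        | (rw [show (1 * (3*m) + 2*3*m + 8*k) % 8 = 3 by omega]; simp [ggsT] <;> omega))
  · intro hx
    have h8 : x % 8 = 0 ∨ x % 8 = 1 ∨ x % 8 = 2 ∨ x % 8 = 3 ∨ x % 8 = 4 ∨ x % 8 = 5 ∨
        x % 8 = 6 ∨ x % 8 = 7 := by omega
    rcases h8 with h | h | h | h | h | h | h | h <;> rw [h] at hx <;> simp [ggsT] at hx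
    · exact ⟨0, by norm_num, 0, by norm_num, x / 8, by omega⟩
    · exact ⟨1, le_refl 1, 0, by norm_num, (x - 3*m) / 8, by omega⟩
    · exact ⟨0, by norm_num, 3, le_refl 3, (x - 6*m) / 8, by omega⟩
    · exact ⟨1, le_refl 1, 3, le_refl 3, (x - 9*m) / 8, by omega⟩
    · exact ⟨0, by norm_num, 2, by norm_num, (x - 4*m) / 8, by omega⟩
    · exact ⟨1, le_refl 1, 2, by norm_num, (x - 7*m) / 8, by omega⟩
    · exact ⟨0, by norm_num, 1, by norm_num, (x - 2*m) / 8, by omega⟩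
    · exact ⟨1, le_refl 1, 1, by norm_num, (x - 5*m) / 8, by omega⟩

lemma nu_finset (m : ℕ) (H : Set ℕ)
    (hmem : ∀ x, x ∈ H ↔ m * ggsT (x % 8) ≤ x)
    (ν : ℕ → ℕ)
    (hν : ∀ x, ν x = {p : ℕ × ℕ | p.1 ∈ H ∧ p.2 ∈ H ∧ p.1 + p.2 = x}.ncard) (y : ℕ) :
    ν y = ((Finset.range (y+1)).filter
      (fun a => m * ggsT (a % 8) ≤ a ∧ m * ggsT ((y - a) % 8) ≤ y - a)).card := by
  rw [hν]
  have hs : {p : ℕ × ℕ | p.1 ∈ H ∧ p.2 ∈ H ∧ p.1 + p.2 = y} =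
      (fun a => (a, y - a)) '' (((Finset.range (y+1)).filter
      (fun a => m * ggsT (a % 8) ≤ a ∧ m * ggsT ((y - a) % 8) ≤ y - a) : Finset ℕ) : Set ℕ) := by
    ext ⟨a, b⟩
    simp only [Set.mem_setOf_eq, Set.mem_image, Finset.coe_filter, Finset.mem_range,
      Set.mem_setOf_eq, hmem, Prod.mk.injEq]
    constructor
    · rintro ⟨h1, h2, h3⟩
      exact ⟨a, ⟨by omega, h1, by rw [show y - a = b by omega]; exact h2⟩, rfl, by omega⟩
    · rintro ⟨c, ⟨hc1, hc2, hc3⟩, rfl, rfl⟩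
      exact ⟨hc2, hc3, by omega⟩
  rw [hs, Set.ncard_image_of_injOn (fun a _ b _ h => by simpa using congrArg Prod.fst h),
    Set.ncard_coe_finset]

lemma count_ap (y c B r : ℕ) (hr : r < 8) (hc : c % 8 = r) :
    ((Finset.range (y+1)).filter (fun a => a % 8 = r ∧ c ≤ a ∧ B ≤ y - a)).card
      = if c + B ≤ y then (y - c - B)/8 + 1 else 0 := by
  split_ifs with h
  · have he : (Finset.range (y+1)).filter (fun a => a % 8 = r ∧ c ≤ a ∧ B ≤ y - a)
        = (Finset.range ((y - c - B)/8 + 1)).image (fun j => c + 8*j) := by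
      ext a
      simp only [Finset.mem_filter, Finset.mem_range, Finset.mem_image]
      constructor
      · rintro ⟨h1, h2, h3, h4⟩
        exact ⟨(a - c)/8, by omega, by omega⟩
      · rintro ⟨j, hj, rfl⟩
        omega
    rw [he, Finset.card_image_of_injective _ (fun a b hab => by omega), Finset.card_range]
  · rw [Finset.filter_eq_empty_iff.2, Finset.card_empty]
    intro a ha
    simp only [Finset.mem_range] at ha
    push_neg
    intro h1 h2
    omega

lemma ggsT_mod (m : ℕ) (hm3 : m % 8 = 3) (r : ℕ) (hr : r < 8) : (m * ggsT r) % 8 = r := by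
  interval_cases r <;> simp [ggsT] <;> omega

lemma nu_eval (m : ℕ) (hm3 : m % 8 = 3) (H : Set ℕ)
    (hmem : ∀ x, x ∈ H ↔ m * ggsT (x % 8) ≤ x)
    (ν : ℕ → ℕ)
    (hν : ∀ x, ν x = {p : ℕ × ℕ | p.1 ∈ H ∧ p.2 ∈ H ∧ p.1 + p.2 = x}.ncard)
    (y : ℕ) (g : ℕ → ℕ)
    (hg : ∀ r, r < 8 → g r = ggsT r + ggsT ((y + 8 - r) % 8)) :
    ν y = ∑ r ∈ Finset.range 8, (if m * g r ≤ y then (y - m * g r)/8 + 1 else 0) := by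
  rw [nu_finset m H hmem ν hν y]
  have hpart : (Finset.range (y+1)).filter
      (fun a => m * ggsT (a % 8) ≤ a ∧ m * ggsT ((y - a) % 8) ≤ y - a)
      = (Finset.range 8).biUnion (fun r => (Finset.range (y+1)).filter
          (fun a => a % 8 = r ∧ m * ggsT r ≤ a ∧ m * ggsT ((y + 8 - r) % 8) ≤ y - a)) := by
    ext a
    simp only [Finset.mem_filter, Finset.mem_range, Finset.mem_biUnion]
    constructor
    · rintro ⟨ha, h1, h2⟩
      refine ⟨a % 8, by omega, by omega, rfl, h1, ?_⟩
      rwa [show (y + 8 - a % 8) % 8 = (y - a) % 8 by omega]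
    · rintro ⟨r, hr8, ha, rfl, h1, h2⟩
      refine ⟨ha, h1, ?_⟩
      rwa [show (y - a) % 8 = (y + 8 - a % 8) % 8 by omega]
  rw [hpart, Finset.card_biUnion]
  · refine Finset.sum_congr rfl (fun r hr => ?_)
    simp only [Finset.mem_range] at hr
    rw [count_ap y (m * ggsT r) (m * ggsT ((y + 8 - r) % 8)) r hr (ggsT_mod m hm3 r hr),
      hg r hr, mul_add]
    congr 1 <;> omega
  · intro r₁ h₁ r₂ h₂ hne
    simp only [Finset.disjoint_left, Finset.mem_filter]
    rintro a ⟨-, h1, -⟩ ⟨-, h2, -⟩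
    exact hne (h1 ▸ h2 ▸ rfl)

lemma nu_mono (m : ℕ) (hm3 : m % 8 = 3) (H : Set ℕ)
    (hmem : ∀ x, x ∈ H ↔ m * ggsT (x % 8) ≤ x)
    (ν : ℕ → ℕ)
    (hν : ∀ x, ν x = {p : ℕ × ℕ | p.1 ∈ H ∧ p.2 ∈ H ∧ p.1 + p.2 = x}.ncard)
    (y q : ℕ) : ν y ≤ ν (y + 8 * q) := by
  induction q with
  | zero => simp
  | succ q ih =>
    refine le_trans ih ?_
    set z := y + 8 * q with hz
    have hgoal : ν z ≤ ν (z + 8) := by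
      have e1 := nu_eval m hm3 H hmem ν hν z (fun r => ggsT r + ggsT ((z + 8 - r) % 8))
        (fun r hr => rfl)
      have e2 := nu_eval m hm3 H hmem ν hν (z + 8) (fun r => ggsT r + ggsT ((z + 8 - r) % 8))
        (fun r hr => by rw [show (z + 8 + 8 - r) % 8 = (z + 8 - r) % 8 by omega])
      rw [e1, e2]
      refine Finset.sum_le_sum (fun r hr => ?_)
      have hB : ∀ B : ℕ, (if B ≤ z then (z - B)/8 + 1 else 0)
          ≤ (if B ≤ z + 8 then (z + 8 - B)/8 + 1 else 0) := by
        intro B; split_ifs <;> omega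
      exact hB _
    calc ν z ≤ ν (z + 8) := hgoal
      _ = ν (y + 8 * (q + 1)) := by rw [hz]; ring_nf

lemma hg_gen (y d : ℕ) (hy : y % 8 = d) (r : ℕ) (hr : r < 8) :
    ggsT ((y + 8 - r) % 8) = ggsT ((d + 8 - r) % 8) := by
  rw [show (y + 8 - r) % 8 = (d + 8 - r) % 8 by omega]

lemma nu_eval_list (m : ℕ) (hm3 : m % 8 = 3) (H : Set ℕ)
    (hmem : ∀ x, x ∈ H ↔ m * ggsT (x % 8) ≤ x)
    (ν : ℕ → ℕ)
    (hν : ∀ x, ν x = {p : ℕ × ℕ | p.1 ∈ H ∧ p.2 ∈ H ∧ p.1 + p.2 = x}.ncard)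
    (y ρ : ℕ) (hy : y % 8 = ρ) (L : List ℕ)
    (hL : ∀ r, r < 8 → L.getD r 0 = ggsT r + ggsT ((ρ + 8 - r) % 8)) :
    ν y = ∑ r ∈ Finset.range 8, (if m * L.getD r 0 ≤ y then (y - m * L.getD r 0)/8 + 1 else 0) :=
  nu_eval m hm3 H hmem ν hν y (fun r => L.getD r 0)
    (fun r hr => by rw [hg_gen y ρ hy r hr]; exact hL r hr)

lemma master (m : ℕ) (hm3 : m % 8 = 3) (hm11 : 11 ≤ m) (H : Set ℕ)
    (hmem : ∀ x, x ∈ H ↔ m * ggsT (x % 8) ≤ x)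
    (ν : ℕ → ℕ)
    (hν : ∀ x, ν x = {p : ℕ × ℕ | p.1 ∈ H ∧ p.2 ∈ H ∧ p.1 + p.2 = x}.ncard)
    (D : ℕ → ℕ)
    (hD : ∀ x, D x = sInf (ν '' {y : ℕ | y ∈ H ∧ x ≤ y}))
    (k : ℕ) (hk1 : m ≤ k) (hk2 : 8 * k ≤ 16 * m - 16) :
    (8*k + 11 < 9*m → D (2*m+8*k) = 8*k - 7*m + 13) ∧
    (9*m ≤ 8*k + 11 → 8*k + 9 < 11*m → D (2*m+8*k) = 8*k - 7*m + 11) ∧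
    (11*m ≤ 8*k + 9 → D (2*m+8*k) = 8*k - 7*m + 9) := by
  have mem5 : (2*m+8*k+5) ∈ H := (hmem _).2
    (by rw [show (2*m+8*k+5) % 8 = 3 by omega]; simp only [ggsT]; omega)
  have mem3 : (2*m+8*k+3) ∈ H := (hmem _).2
    (by rw [show (2*m+8*k+3) % 8 = 1 by omega]; simp only [ggsT]; omega)
  have mem1 : (2*m+8*k+1) ∈ H := (hmem _).2
    (by rw [show (2*m+8*k+1) % 8 = 7 by omega]; simp only [ggsT]; omega)
  have hub : ∀ v w : ℕ, w ∈ H → 2*m+8*k ≤ w → ν w = v → D (2*m+8*k) ≤ v := by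
    intro v w hw1 hw2 hw3
    rw [hD]
    exact hw3 ▸ Nat.sInf_le ⟨w, ⟨hw1, hw2⟩, rfl⟩
  have hlb : ∀ v : ℕ, (∀ d, d < 8 → v ≤ ν (2*m+8*k+d)) → v ≤ D (2*m+8*k) := by
    intro v hv
    rw [hD]
    refine le_csInf ⟨ν (2*m+8*k+5), ⟨2*m+8*k+5, ⟨mem5, by omega⟩, rfl⟩⟩ ?_
    rintro z ⟨y, ⟨-, hxy⟩, rfl⟩
    have hy : y = (2*m+8*k + (y - (2*m+8*k)) % 8) + 8 * ((y - (2*m+8*k))/8) := by omega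
    rw [hy]
    exact le_trans (hv _ (by omega)) (nu_mono m hm3 H hmem ν hν _ _)
  refine ⟨?_, ?_, ?_⟩
  · intro hA
    refine le_antisymm (hub _ (2*m+8*k+5) mem5 (by omega) ?_) (hlb _ ?_)
    · rw [nu_eval_list m hm3 H hmem ν hν (2*m+8*k+5) 3 (by omega) [9,9,9,9,9,9,9,9]
          (by intro r hr; interval_cases r <;> decide)]
      simp only [Finset.sum_range_succ, Finset.sum_range_zero, List.getD_cons_zero,
        List.getD_cons_succ]
      split_ifs <;> omega
    · intro d hd
      interval_cases d
      · rw [nu_eval_list m hm3 H hmem ν hν (2*m+8*k+0) 6 (by omega) [2,10,10,18,10,10,2,10]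
            (by intro r hr; interval_cases r <;> decide)]
        simp only [Finset.sum_range_succ, Finset.sum_range_zero, List.getD_cons_zero,
          List.getD_cons_succ]
        split_ifs <;> omega
      · rw [nu_eval_list m hm3 H hmem ν hν (2*m+8*k+1) 7 (by omega) [5,5,13,13,13,13,5,5]
            (by intro r hr; interval_cases r <;> decide)]
        simp only [Finset.sum_range_succ, Finset.sum_range_zero, List.getD_cons_zero,
          List.getD_cons_succ]
        split_ifs <;> omega
      · rw [nu_eval_list m hm3 H hmem ν hν (2*m+8*k+2) 0 (by omega) [0,8,8,16,8,16,8,8]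
            (by intro r hr; interval_cases r <;> decide)]
        simp only [Finset.sum_range_succ, Finset.sum_range_zero, List.getD_cons_zero,
          List.getD_cons_succ]
        split_ifs <;> omega
      · rw [nu_eval_list m hm3 H hmem ν hν (2*m+8*k+3) 1 (by omega) [3,3,11,11,11,11,11,11]
            (by intro r hr; interval_cases r <;> decide)]
        simp only [Finset.sum_range_succ, Finset.sum_range_zero, List.getD_cons_zero,
          List.getD_cons_succ]
        split_ifs <;> omega
      · rw [nu_eval_list m hm3 H hmem ν hν (2*m+8*k+4) 2 (by omega) [6,6,6,14,6,14,6,14]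
            (by intro r hr; interval_cases r <;> decide)]
        simp only [Finset.sum_range_succ, Finset.sum_range_zero, List.getD_cons_zero,
          List.getD_cons_succ]
        split_ifs <;> omega
      · rw [nu_eval_list m hm3 H hmem ν hν (2*m+8*k+5) 3 (by omega) [9,9,9,9,9,9,9,9]
            (by intro r hr; interval_cases r <;> decide)]
        simp only [Finset.sum_range_succ, Finset.sum_range_zero, List.getD_cons_zero,
          List.getD_cons_succ]
        split_ifs <;> omega
      · rw [nu_eval_list m hm3 H hmem ν hν (2*m+8*k+6) 4 (by omega) [4,12,12,12,4,12,4,12]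
            (by intro r hr; interval_cases r <;> decide)]
        simp only [Finset.sum_range_succ, Finset.sum_range_zero, List.getD_cons_zero,
          List.getD_cons_succ]
        split_ifs <;> omega
      · rw [nu_eval_list m hm3 H hmem ν hν (2*m+8*k+7) 5 (by omega) [7,7,15,15,7,7,7,7]
            (by intro r hr; interval_cases r <;> decide)]
        simp only [Finset.sum_range_succ, Finset.sum_range_zero, List.getD_cons_zero,
          List.getD_cons_succ]
        split_ifs <;> omega
  · intro hB1 hB2
    refine le_antisymm (hub _ (2*m+8*k+3) mem3 (by omega) ?_) (hlb _ ?_)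
    · rw [nu_eval_list m hm3 H hmem ν hν (2*m+8*k+3) 1 (by omega) [3,3,11,11,11,11,11,11]
          (by intro r hr; interval_cases r <;> decide)]
      simp only [Finset.sum_range_succ, Finset.sum_range_zero, List.getD_cons_zero,
        List.getD_cons_succ]
      split_ifs <;> omega
    · intro d hd
      interval_cases d
      · rw [nu_eval_list m hm3 H hmem ν hν (2*m+8*k+0) 6 (by omega) [2,10,10,18,10,10,2,10]
            (by intro r hr; interval_cases r <;> decide)]
        simp only [Finset.sum_range_succ, Finset.sum_range_zero, List.getD_cons_zero,
          List.getD_cons_succ]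
        split_ifs <;> omega
      · rw [nu_eval_list m hm3 H hmem ν hν (2*m+8*k+1) 7 (by omega) [5,5,13,13,13,13,5,5]
            (by intro r hr; interval_cases r <;> decide)]
        simp only [Finset.sum_range_succ, Finset.sum_range_zero, List.getD_cons_zero,
          List.getD_cons_succ]
        split_ifs <;> omega
      · rw [nu_eval_list m hm3 H hmem ν hν (2*m+8*k+2) 0 (by omega) [0,8,8,16,8,16,8,8]
            (by intro r hr; interval_cases r <;> decide)]
        simp only [Finset.sum_range_succ, Finset.sum_range_zero, List.getD_cons_zero,
          List.getD_cons_succ]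
        split_ifs <;> omega
      · rw [nu_eval_list m hm3 H hmem ν hν (2*m+8*k+3) 1 (by omega) [3,3,11,11,11,11,11,11]
            (by intro r hr; interval_cases r <;> decide)]
        simp only [Finset.sum_range_succ, Finset.sum_range_zero, List.getD_cons_zero,
          List.getD_cons_succ]
        split_ifs <;> omega
      · rw [nu_eval_list m hm3 H hmem ν hν (2*m+8*k+4) 2 (by omega) [6,6,6,14,6,14,6,14]
            (by intro r hr; interval_cases r <;> decide)]
        simp only [Finset.sum_range_succ, Finset.sum_range_zero, List.getD_cons_zero,
          List.getD_cons_succ]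
        split_ifs <;> omega
      · rw [nu_eval_list m hm3 H hmem ν hν (2*m+8*k+5) 3 (by omega) [9,9,9,9,9,9,9,9]
            (by intro r hr; interval_cases r <;> decide)]
        simp only [Finset.sum_range_succ, Finset.sum_range_zero, List.getD_cons_zero,
          List.getD_cons_succ]
        split_ifs <;> omega
      · rw [nu_eval_list m hm3 H hmem ν hν (2*m+8*k+6) 4 (by omega) [4,12,12,12,4,12,4,12]
            (by intro r hr; interval_cases r <;> decide)]
        simp only [Finset.sum_range_succ, Finset.sum_range_zero, List.getD_cons_zero,
          List.getD_cons_succ]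
        split_ifs <;> omega
      · rw [nu_eval_list m hm3 H hmem ν hν (2*m+8*k+7) 5 (by omega) [7,7,15,15,7,7,7,7]
            (by intro r hr; interval_cases r <;> decide)]
        simp only [Finset.sum_range_succ, Finset.sum_range_zero, List.getD_cons_zero,
          List.getD_cons_succ]
        split_ifs <;> omega
  · intro hC
    refine le_antisymm (hub _ (2*m+8*k+1) mem1 (by omega) ?_) (hlb _ ?_)
    · rw [nu_eval_list m hm3 H hmem ν hν (2*m+8*k+1) 7 (by omega) [5,5,13,13,13,13,5,5]
          (by intro r hr; interval_cases r <;> decide)]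
      simp only [Finset.sum_range_succ, Finset.sum_range_zero, List.getD_cons_zero,
        List.getD_cons_succ]
      split_ifs <;> omega
    · intro d hd
      interval_cases d
      · rw [nu_eval_list m hm3 H hmem ν hν (2*m+8*k+0) 6 (by omega) [2,10,10,18,10,10,2,10]
            (by intro r hr; interval_cases r <;> decide)]
        simp only [Finset.sum_range_succ, Finset.sum_range_zero, List.getD_cons_zero,
          List.getD_cons_succ]
        split_ifs <;> omega
      · rw [nu_eval_list m hm3 H hmem ν hν (2*m+8*k+1) 7 (by omega) [5,5,13,13,13,13,5,5]
            (by intro r hr; interval_cases r <;> decide)]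
        simp only [Finset.sum_range_succ, Finset.sum_range_zero, List.getD_cons_zero,
          List.getD_cons_succ]
        split_ifs <;> omega
      · rw [nu_eval_list m hm3 H hmem ν hν (2*m+8*k+2) 0 (by omega) [0,8,8,16,8,16,8,8]
            (by intro r hr; interval_cases r <;> decide)]
        simp only [Finset.sum_range_succ, Finset.sum_range_zero, List.getD_cons_zero,
          List.getD_cons_succ]
        split_ifs <;> omega
      · rw [nu_eval_list m hm3 H hmem ν hν (2*m+8*k+3) 1 (by omega) [3,3,11,11,11,11,11,11]
            (by intro r hr; interval_cases r <;> decide)]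
        simp only [Finset.sum_range_succ, Finset.sum_range_zero, List.getD_cons_zero,
          List.getD_cons_succ]
        split_ifs <;> omega
      · rw [nu_eval_list m hm3 H hmem ν hν (2*m+8*k+4) 2 (by omega) [6,6,6,14,6,14,6,14]
            (by intro r hr; interval_cases r <;> decide)]
        simp only [Finset.sum_range_succ, Finset.sum_range_zero, List.getD_cons_zero,
          List.getD_cons_succ]
        split_ifs <;> omega
      · rw [nu_eval_list m hm3 H hmem ν hν (2*m+8*k+5) 3 (by omega) [9,9,9,9,9,9,9,9]
            (by intro r hr; interval_cases r <;> decide)]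
        simp only [Finset.sum_range_succ, Finset.sum_range_zero, List.getD_cons_zero,
          List.getD_cons_succ]
        split_ifs <;> omega
      · rw [nu_eval_list m hm3 H hmem ν hν (2*m+8*k+6) 4 (by omega) [4,12,12,12,4,12,4,12]
            (by intro r hr; interval_cases r <;> decide)]
        simp only [Finset.sum_range_succ, Finset.sum_range_zero, List.getD_cons_zero,
          List.getD_cons_succ]
        split_ifs <;> omega
      · rw [nu_eval_list m hm3 H hmem ν hν (2*m+8*k+7) 5 (by omega) [7,7,15,15,7,7,7,7]
            (by intro r hr; interval_cases r <;> decide)]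
        simp only [Finset.sum_range_succ, Finset.sum_range_zero, List.getD_cons_zero,
          List.getD_cons_succ]
        split_ifs <;> omega
lemma pow4_mod24 (p : ℕ) (hp : 2 ≤ p) : 4 ^ p % 24 = 16 := by
  induction p with
  | zero => omega
  | succ p ih =>
    rcases Nat.lt_or_ge p 2 with h | h
    · interval_cases p <;> simp_all
    · have := ih h
      rw [pow_succ]
      omega

/-- The Feng–Rao designed minimum distance `d_ORD(C_ℓ(P_∞))` for `ρ_{ℓ+1} = (0,1,k)`,
`m ≤ k < 2m`, `ρ_{ℓ+1} < 4g`, on `GGS(2,n)`. -/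
theorem stmt_15 (n m : ℕ) (hn : 5 ≤ n) (hodd : Odd n) (hm : 3 * m = 2 ^ n + 1)
    (H : Set ℕ)
    (hH : H = {x | ∃ i ≤ 1, ∃ j ≤ 3, ∃ k : ℕ, x = i * (2 ^ n + 1) + 2 * j * m + 8 * k})
    (ν : ℕ → ℕ)
    (hν : ∀ x, ν x = {p : ℕ × ℕ | p.1 ∈ H ∧ p.2 ∈ H ∧ p.1 + p.2 = x}.ncard)
    (D : ℕ → ℕ)
    (hD : ∀ x, D x = sInf (ν '' {y : ℕ | y ∈ H ∧ x ≤ y}))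
    (k : ℕ) (hk1 : m ≤ k) (hk2 : k < 2 * m) (hx : 2 * m + 8 * k < 18 * m - 14) :
    ((k : ℚ) < (9 * (m : ℚ) - 11) / 8 → D (2 * m + 8 * k) = 8 * k - 7 * m + 13) ∧
    ((9 * (m : ℚ) - 11) / 8 ≤ (k : ℚ) ∧ (k : ℚ) < (11 * (m : ℚ) - 9) / 8 →
      D (2 * m + 8 * k) = 8 * k - 7 * m + 11) ∧
    ((11 * (m : ℚ) - 9) / 8 ≤ (k : ℚ) → D (2 * m + 8 * k) = 8 * k - 7 * m + 9) := by
  -- arithmetic facts about m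
  obtain ⟨p, hp⟩ := hodd
  have hp2 : 2 ≤ p := by omega
  have h4p : 4 ^ p % 24 = 16 := pow4_mod24 p hp2
  have h2n : 2 ^ n = 2 * 4 ^ p := by
    rw [hp, pow_succ, show (4:ℕ) = 2^2 by norm_num, ← pow_mul]
    ring
  have hm3 : m % 8 = 3 := by omega
  have hm11 : 11 ≤ m := by
    have h32 : 2 ^ 5 ≤ 2 ^ n := Nat.pow_le_pow_right (by norm_num) hn
    norm_num at h32
    omega
  -- rewrite H
  rw [show (2:ℕ) ^ n + 1 = 3 * m by omega] at hH
  have hmem := memH_iff m hm3 H hH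
  have hk2' : 8 * k ≤ 16 * m - 16 := by omega
  obtain ⟨M1, M2, M3⟩ := master m hm3 hm11 H hmem ν hν D hD k hk1 hk2'
  have e1 : ((k : ℚ) < (9 * (m : ℚ) - 11) / 8) ↔ (8 * k + 11 < 9 * m) := by
    rw [lt_div_iff₀ (by norm_num : (0:ℚ) < 8)]
    constructor
    · intro h
      have h' : (8 * k + 11 : ℚ) < 9 * m := by linarith
      exact_mod_cast h'
    · intro h
      have h' : (8 * k + 11 : ℚ) < 9 * m := by exact_mod_cast h
      linarith
  have e2 : ((9 * (m : ℚ) - 11) / 8 ≤ (k : ℚ)) ↔ (9 * m ≤ 8 * k + 11) := by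
    rw [div_le_iff₀ (by norm_num : (0:ℚ) < 8)]
    constructor
    · intro h
      have h' : (9 * m : ℚ) ≤ 8 * k + 11 := by linarith
      exact_mod_cast h'
    · intro h
      have h' : (9 * m : ℚ) ≤ 8 * k + 11 := by exact_mod_cast h
      linarith
  have e3 : ((k : ℚ) < (11 * (m : ℚ) - 9) / 8) ↔ (8 * k + 9 < 11 * m) := by
    rw [lt_div_iff₀ (by norm_num : (0:ℚ) < 8)]
    constructor
    · intro h
      have h' : (8 * k + 9 : ℚ) < 11 * m := by linarith
      exact_mod_cast h'
    · intro h
      have h' : (8 * k + 9 : ℚ) < 11 * m := by exact_mod_cast h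
      linarith
  have e4 : ((11 * (m : ℚ) - 9) / 8 ≤ (k : ℚ)) ↔ (11 * m ≤ 8 * k + 9) := by
    rw [div_le_iff₀ (by norm_num : (0:ℚ) < 8)]
    constructor
    · intro h
      have h' : (11 * m : ℚ) ≤ 8 * k + 9 := by linarith
      exact_mod_cast h'
    · intro h
      have h' : (11 * m : ℚ) ≤ 8 * k + 9 := by exact_mod_cast h
      linarith
  exact ⟨fun h => M1 (e1.1 h), fun ⟨ha, hb⟩ => M2 (e2.1 ha) (e3.1 hb), fun h => M3 (e4.1 h)⟩
end
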